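/- arXiv:1012.3727 — 10 statements merged into one kernel-verified Lean document; each statement's English description precedes it below -/
import Mathlib

section
/- Let N be a Hausdorff topological space, E a finite-dimensional real inner product space, and Φ, v : N → E continuous maps. Suppose v is bounded, i.e. there exists C ≥ 0 with ‖v(x)‖ ≤ C for all x ∈ N. If Φ is v-polarized, then Φ : N → E is a proper map. -/
open scoped RealInnerProductSpace

/-- **Lemma 2.6(3).** Let `N` be a Hausdorff topological space, `E` a finite-dimensional
real inner product space, and `Φ, v : N → E` continuous maps.  Suppose `v` is bounded,
i.e. there is `C ≥ 0` with `‖v x‖ ≤ C` for all `x`.  If `Φ` is `v`-polarized (the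
function `x ↦ ⟪Φ x, v x⟫` is proper and bounded from below), then `Φ` is a proper map. -/
theorem polarized_implies_proper
    {N E : Type*} [TopologicalSpace N] [T2Space N]
    [NormedAddCommGroup E] [InnerProductSpace ℝ E] [FiniteDimensional ℝ E]
    (Φ v : N → E) (hΦ : Continuous Φ) (hv : Continuous v)
    (hvbdd : ∃ C : ℝ, 0 ≤ C ∧ ∀ x, ‖v x‖ ≤ C)
    (hproper : ∀ K : Set ℝ, IsCompact K →
      IsCompact ((fun x => ⟪Φ x, v x⟫) ⁻¹' K))
    (hbdd : BddBelow (Set.range fun x => ⟪Φ x, v x⟫)) :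
    ∀ K : Set E, IsCompact K → IsCompact (Φ ⁻¹' K) := by
  intro K hK
  obtain ⟨C, hC0, hC⟩ := hvbdd
  obtain ⟨m, hm⟩ := hbdd
  -- bound on K
  obtain ⟨R, hR⟩ := hK.isBounded.subset_ball 0
  have hsub : Φ ⁻¹' K ⊆ (fun x => ⟪Φ x, v x⟫) ⁻¹' Set.Icc m (R * C) := by
    intro x hx
    constructor
    · exact hm ⟨x, rfl⟩
    · have h1 : ⟪Φ x, v x⟫ ≤ ‖Φ x‖ * ‖v x‖ := real_inner_le_norm _ _
      have h2 : ‖Φ x‖ ≤ R := by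
        have := hR hx
        exact le_of_lt (by simpa using this)
      have h3 : ‖Φ x‖ * ‖v x‖ ≤ R * C :=
        mul_le_mul h2 (hC x) (norm_nonneg _) (le_trans (norm_nonneg _) h2)
      linarith
  have hclosed : IsClosed (Φ ⁻¹' K) := hK.isClosed.preimage hΦ
  exact (hproper _ isCompact_Icc).of_isClosed_subset hclosed hsub
end

section
/- Let N be a topological space and let f, g : N → ℝ be continuous functions that are proper and bounded from below. Let ρ₁, ρ₂ : N → ℝ be continuous functions with ρ₁(x) ≥ 0, ρ₂(x) ≥ 0, and ρ₁(x) + ρ₂(x) = 1 for all x ∈ N. Then the function ρ₁·f + ρ₂·g : N → ℝ is proper and bounded from below. -/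
/-- **Lemma 3.4.** Let `N` be a topological space and `f, g : N → ℝ` continuous
functions that are proper and bounded from below.  Let `ρ₁, ρ₂ : N → ℝ` be continuous
with `ρ₁ ≥ 0`, `ρ₂ ≥ 0` and `ρ₁ + ρ₂ ≡ 1`.  Then `ρ₁·f + ρ₂·g` is proper and bounded
from below. -/
theorem convex_combination_proper_bddBelow
    {N : Type*} [TopologicalSpace N]
    (f g ρ₁ ρ₂ : N → ℝ)
    (hf : Continuous f) (hg : Continuous g)
    (hfproper : ∀ K : Set ℝ, IsCompact K → IsCompact (f ⁻¹' K))
    (hfbdd : BddBelow (Set.range f))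
    (hgproper : ∀ K : Set ℝ, IsCompact K → IsCompact (g ⁻¹' K))
    (hgbdd : BddBelow (Set.range g))
    (hρ₁ : Continuous ρ₁) (hρ₂ : Continuous ρ₂)
    (hρ₁0 : ∀ x, 0 ≤ ρ₁ x) (hρ₂0 : ∀ x, 0 ≤ ρ₂ x)
    (hsum : ∀ x, ρ₁ x + ρ₂ x = 1) :
    (∀ K : Set ℝ, IsCompact K →
      IsCompact ((fun x => ρ₁ x * f x + ρ₂ x * g x) ⁻¹' K)) ∧
    BddBelow (Set.range fun x => ρ₁ x * f x + ρ₂ x * g x) := by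
  obtain ⟨m₁, hm₁⟩ := hfbdd
  obtain ⟨m₂, hm₂⟩ := hgbdd
  set m := min m₁ m₂ with hm
  have hfm : ∀ x, m ≤ f x := fun x =>
    le_trans (min_le_left _ _) (hm₁ ⟨x, rfl⟩)
  have hgm : ∀ x, m ≤ g x := fun x =>
    le_trans (min_le_right _ _) (hm₂ ⟨x, rfl⟩)
  have key : ∀ x, min (f x) (g x) ≤ ρ₁ x * f x + ρ₂ x * g x := by
    intro x
    have h1 : ρ₁ x * min (f x) (g x) ≤ ρ₁ x * f x :=
      mul_le_mul_of_nonneg_left (min_le_left _ _) (hρ₁0 x)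
    have h2 : ρ₂ x * min (f x) (g x) ≤ ρ₂ x * g x :=
      mul_le_mul_of_nonneg_left (min_le_right _ _) (hρ₂0 x)
    calc min (f x) (g x) = (ρ₁ x + ρ₂ x) * min (f x) (g x) := by
          rw [hsum x, one_mul]
      _ = ρ₁ x * min (f x) (g x) + ρ₂ x * min (f x) (g x) := by ring
      _ ≤ ρ₁ x * f x + ρ₂ x * g x := add_le_add h1 h2
  have hcont : Continuous fun x => ρ₁ x * f x + ρ₂ x * g x :=
    (hρ₁.mul hf).add (hρ₂.mul hg)
  constructor
  · intro K hK
    obtain ⟨b, hb⟩ := hK.bddAbove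
    apply IsCompact.of_isClosed_subset
      (((hfproper _ isCompact_Icc).union (hgproper _ isCompact_Icc)) :
        IsCompact (f ⁻¹' Set.Icc m b ∪ g ⁻¹' Set.Icc m b))
    · exact hK.isClosed.preimage hcont
    · intro x hx
      have hxb : ρ₁ x * f x + ρ₂ x * g x ≤ b := hb hx
      have hmin : min (f x) (g x) ≤ b := le_trans (key x) hxb
      rcases min_le_iff.mp (le_refl (min (f x) (g x))) with h | h
      · rcases le_total (f x) (g x) with hfg | hfg
        · left
          exact ⟨hfm x, le_trans (by simp [min_eq_left hfg]) hmin⟩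
        · right
          exact ⟨hgm x, le_trans (by simp [min_eq_right hfg]) hmin⟩
      · rcases le_total (f x) (g x) with hfg | hfg
        · left
          exact ⟨hfm x, le_trans (by simp [min_eq_left hfg]) hmin⟩
        · right
          exact ⟨hgm x, le_trans (by simp [min_eq_right hfg]) hmin⟩
  · refine ⟨m, ?_⟩
    rintro y ⟨x, rfl⟩
    exact le_trans (le_min (hfm x) (hgm x)) (key x)
end

section
/- Let G be a compact topological group equipped with its Haar probability measure dg, acting continuously on a Hausdorff topological space N (that is, the map G × N → N, (g,x) ↦ g·x, is continuous). Let f : N → ℝ be a continuous function that is proper and bounded from below. Then its G-average f̄ : N → ℝ, defined by f̄(x) = ∫_G f(g·x) dg, is bounded from below, and the preimage under f̄ of every compact subset of ℝ is compact. -/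
/-!
By the first moment method, for each `x` some `g` satisfies `f (g • x) ≤ f̄ x`. Hence `f̄` has
the lower bounds of `f`, and the sublevel set `{f̄ ≤ M}` lies in `G • {f ≤ M}`, which is compact
as the image of `G × {f ≤ M}` under the action. The average is continuous since
`x ↦ (g ↦ f (g • x))` is continuous into `C(G, ℝ)` with the sup norm, on which integration is
continuous; so preimages of compact sets are closed subsets of such compact sets.
-/

open MeasureTheory Set
open scoped Pointwise

theorem ContinuousMap.continuous_integral {X E : Type*} [TopologicalSpace X] [CompactSpace X]
    [MeasurableSpace X] [BorelSpace X] [NormedAddCommGroup E] [NormedSpace ℝ E]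
    [SecondCountableTopologyEither X E] (μ : Measure X) [IsFiniteMeasure μ] :
    Continuous fun φ : C(X, E) => ∫ x, φ x ∂μ := by
  have h : (fun φ : C(X, E) => ∫ x, φ x ∂μ) = fun φ => ∫ x, toLp 1 μ ℝ φ x ∂μ :=
    funext fun φ => integral_congr_ae (coeFn_toLp μ φ).symm
  rw [h]
  exact MeasureTheory.continuous_integral.comp (toLp 1 μ ℝ).continuous

theorem continuous_parametric_integral_of_compactSpace {X Y E : Type*} [TopologicalSpace X]
    [TopologicalSpace Y] [CompactSpace Y] [MeasurableSpace Y] [BorelSpace Y]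
    [NormedAddCommGroup E] [NormedSpace ℝ E] [SecondCountableTopologyEither Y E]
    (μ : Measure Y) [IsFiniteMeasure μ] {F : X → Y → E} (hF : Continuous (Function.uncurry F)) :
    Continuous fun x => ∫ y, F x y ∂μ :=
  (ContinuousMap.continuous_integral μ).comp (ContinuousMap.curry ⟨_, hF⟩).continuous

theorem isCompact_preimage_Iic_of_bddBelow {X : Type*} [TopologicalSpace X] {f : X → ℝ}
    (hproper : ∀ K : Set ℝ, IsCompact K → IsCompact (f ⁻¹' K)) (hbdd : BddBelow (range f))
    (M : ℝ) : IsCompact (f ⁻¹' Iic M) := by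
  obtain ⟨c, hc⟩ := hbdd
  convert hproper (Icc c M) isCompact_Icc using 1
  ext x
  simp [hc (mem_range_self x)]

theorem preimage_integral_smul_Iic_subset {G N : Type*} [Group G] [MulAction G N]
    [MeasurableSpace G] (μ : Measure G) [IsProbabilityMeasure μ] {f : N → ℝ}
    (hint : ∀ x, Integrable (fun g => f (g • x)) μ) (M : ℝ) :
    (fun x => ∫ g, f (g • x) ∂μ) ⁻¹' Iic M ⊆ (univ : Set G) • f ⁻¹' Iic M := by
  intro x hx
  obtain ⟨g, hg⟩ := exists_le_integral (hint x)
  exact ⟨g⁻¹, trivial, g • x, hg.trans hx, inv_smul_smul g x⟩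

theorem average_proper_bddBelow_general
    {G N : Type*} [Group G] [TopologicalSpace G]
    [CompactSpace G] [MeasurableSpace G] [BorelSpace G]
    (μ : Measure G) [IsProbabilityMeasure μ]
    [TopologicalSpace N] [MulAction G N] [ContinuousSMul G N]
    (f : N → ℝ) (hf : Continuous f)
    (hproper : ∀ K : Set ℝ, IsCompact K → IsCompact (f ⁻¹' K))
    (hbdd : BddBelow (Set.range f)) :
    BddBelow (Set.range fun x => ∫ g, f (g • x) ∂μ) ∧
      ∀ K : Set ℝ, IsCompact K →
        IsCompact ((fun x => ∫ g, f (g • x) ∂μ) ⁻¹' K) := by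
  have hint (x : N) : Integrable (fun g : G => f (g • x)) μ :=
    (by fun_prop : Continuous fun g : G => f (g • x)).integrable_of_hasCompactSupport
      (.of_compactSpace _)
  refine ⟨?_, fun K hK => ?_⟩
  · obtain ⟨c, hc⟩ := hbdd
    refine ⟨c, forall_mem_range.2 fun x => ?_⟩
    obtain ⟨g, hg⟩ := exists_le_integral (hint x)
    exact (hc (mem_range_self _)).trans hg
  · obtain ⟨M, hM⟩ := hK.bddAbove
    have hcont : Continuous fun x => ∫ g, f (g • x) ∂μ :=
      continuous_parametric_integral_of_compactSpace μ (F := fun x g => f (g • x)) (by fun_prop)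
    have hsublevel := isCompact_preimage_Iic_of_bddBelow hproper hbdd M
    exact ((isCompact_univ (X := G)).smul_set hsublevel).of_isClosed_subset
      (hK.isClosed.preimage hcont) fun x hx => preimage_integral_smul_Iic_subset μ hint M (hM hx)

/-- **Lemma 3.5.** Let `G` be a compact topological group with its Haar probability
measure `μ`, acting continuously on a Hausdorff topological space `N`.  Let `f : N → ℝ`
be a continuous function that is proper and bounded from below.  Then its `G`-average
`x ↦ ∫ g, f (g • x) ∂μ` is bounded from below, and the preimage under it of every
compact subset of `ℝ` is compact. -/
theorem average_proper_bddBelow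
    {G N : Type*} [Group G] [TopologicalSpace G] [IsTopologicalGroup G]
    [CompactSpace G] [MeasurableSpace G] [BorelSpace G]
    (μ : Measure G) [IsProbabilityMeasure μ] [μ.IsHaarMeasure]
    [TopologicalSpace N] [T2Space N] [MulAction G N] [ContinuousSMul G N]
    (f : N → ℝ) (hf : Continuous f)
    (hproper : ∀ K : Set ℝ, IsCompact K → IsCompact (f ⁻¹' K))
    (hbdd : BddBelow (Set.range f)) :
    BddBelow (Set.range fun x => ∫ g, f (g • x) ∂μ) ∧
      ∀ K : Set ℝ, IsCompact K →
        IsCompact ((fun x => ∫ g, f (g • x) ∂μ) ⁻¹' K) :=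
  average_proper_bddBelow_general μ f hf hproper hbdd
end

section
/- Let N be a locally compact Hausdorff topological space and f : N → ℝ a continuous function. Let Y ⊆ N be a closed subset, and suppose the restriction of f to Y is proper and bounded from below. Then there exists an open set U ⊆ N containing Y such that the restriction of f to the closure of U in N is proper and bounded from below. -/
/-- **Lemma 3.6.** Let `N` be a locally compact Hausdorff topological space and
`f : N → ℝ` continuous.  Let `Y ⊆ N` be closed and suppose the restriction of `f` to
`Y` is proper and bounded from below.  Then there is an open set `U ⊇ Y` such that the
restriction of `f` to the closure of `U` is proper and bounded from below. -/
theorem proper_on_closure_of_neighbourhood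
    {N : Type*} [TopologicalSpace N] [T2Space N] [LocallyCompactSpace N]
    (f : N → ℝ) (hf : Continuous f)
    (Y : Set N) (hY : IsClosed Y)
    (hproper : ∀ K : Set ℝ, IsCompact K → IsCompact ((fun y : Y => f y.1) ⁻¹' K))
    (hbdd : BddBelow (f '' Y)) :
    ∃ U : Set N, IsOpen U ∧ Y ⊆ U ∧
      (∀ K : Set ℝ, IsCompact K →
        IsCompact ((fun y : (closure U : Set N) => f y.1) ⁻¹' K)) ∧
      BddBelow (f '' closure U) := by
  obtain ⟨b, hb⟩ := hbdd
  -- the compact "annuli" in Y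
  have hKn : ∀ n : ℕ, IsCompact (Y ∩ f ⁻¹' Set.Icc (b + n - 1) (b + n + 1)) := by
    intro n
    have h1 := (hproper _ (isCompact_Icc (a := b + n - 1) (b := b + n + 1)))
    have h2 := h1.image continuous_subtype_val
    have : (Subtype.val '' ((fun y : Y => f y.1) ⁻¹' Set.Icc (b + n - 1) (b + n + 1)))
        = Y ∩ f ⁻¹' Set.Icc (b + n - 1) (b + n + 1) := by
      ext x
      simp only [Set.mem_image, Set.mem_inter_iff, Set.mem_preimage]
      constructor
      · rintro ⟨⟨y, hy⟩, hmem, rfl⟩; exact ⟨hy, hmem⟩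
      · rintro ⟨hy, hmem⟩; exact ⟨⟨x, hy⟩, hmem, rfl⟩
    rwa [this] at h2
  -- choose compact neighbourhoods
  have hO : ∀ n : ℕ, IsOpen (f ⁻¹' Set.Ioo (b + n - 2) (b + n + 2)) :=
    fun n => (isOpen_Ioo).preimage hf
  have hsub : ∀ n : ℕ, (Y ∩ f ⁻¹' Set.Icc (b + n - 1) (b + n + 1)) ⊆
      f ⁻¹' Set.Ioo (b + n - 2) (b + n + 2) := by
    intro n x hx
    obtain ⟨-, h1, h2⟩ := hx
    exact ⟨by linarith, by linarith⟩
  choose L hLcomp hLint hLsub using fun n : ℕ =>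
    exists_compact_between (hKn n) (hO n) (hsub n)
  set U : Set N := ⋃ n : ℕ, interior (L n) with hUdef
  have hUopen : IsOpen U := isOpen_iUnion fun n => isOpen_interior
  have hYU : Y ⊆ U := by
    intro y hy
    have hby : b ≤ f y := hb ⟨y, hy, rfl⟩
    set n : ℕ := ⌊f y - b⌋₊ with hn
    have h1 : (n : ℝ) ≤ f y - b := Nat.floor_le (by linarith)
    have h2 : f y - b < n + 1 := Nat.lt_floor_add_one _
    have : y ∈ Y ∩ f ⁻¹' Set.Icc (b + n - 1) (b + n + 1) :=
      ⟨hy, ⟨by linarith, by linarith⟩⟩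
    exact Set.mem_iUnion.2 ⟨n, hLint n this⟩
  -- lower bound on U, hence on closure U
  have hlow : ∀ x ∈ closure U, b - 2 ≤ f x := by
    have hUlow : U ⊆ f ⁻¹' Set.Ici (b - 2) := by
      intro x hx
      obtain ⟨n, hn⟩ := Set.mem_iUnion.1 hx
      have := hLsub n (interior_subset hn)
      have h1 : b + n - 2 < f x := this.1
      have : (0:ℝ) ≤ n := Nat.cast_nonneg n
      simp only [Set.mem_preimage, Set.mem_Ici]
      linarith
    intro x hx
    have : x ∈ f ⁻¹' Set.Ici (b - 2) :=
      (IsClosed.closure_subset_iff ((isClosed_Ici).preimage hf)).2 hUlow hx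
    exact this
  refine ⟨U, hUopen, hYU, ?_, ⟨b - 2, ?_⟩⟩
  · -- properness on closure U
    intro K hK
    rw [Subtype.isCompact_iff]
    have himg : (Subtype.val '' ((fun y : (closure U : Set N) => f y.1) ⁻¹' K))
        = closure U ∩ f ⁻¹' K := by
      ext x
      simp only [Set.mem_image, Set.mem_inter_iff, Set.mem_preimage]
      constructor
      · rintro ⟨⟨y, hy⟩, hmem, rfl⟩; exact ⟨hy, hmem⟩
      · rintro ⟨hy, hmem⟩; exact ⟨⟨x, hy⟩, hmem, rfl⟩
    rw [himg]
    -- K is bounded above: pick m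
    obtain ⟨r, hr⟩ := hK.bddAbove
    set m : ℕ := ⌈r - b⌉₊ with hm
    have hrm : r ≤ b + m := by
      rcases le_or_gt r b with h | h
      · have : (0:ℝ) ≤ m := Nat.cast_nonneg m
        linarith
      · have := Nat.le_ceil (r - b)
        linarith
    -- the open window
    set V : Set N := f ⁻¹' Set.Ioo (b - 3) (b + m + 1) with hV
    have hVopen : IsOpen V := (isOpen_Ioo).preimage hf
    have hsubV : closure U ∩ f ⁻¹' K ⊆ closure (U ∩ V) := by
      intro x ⟨hx1, hx2⟩
      have hxV : x ∈ V := by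
        have h1 := hlow x hx1
        have h2 : f x ≤ r := hr hx2
        exact ⟨by linarith, by linarith⟩
      have h3 : x ∈ closure (V ∩ U) := hVopen.inter_closure ⟨hxV, hx1⟩
      rwa [Set.inter_comm V U] at h3
    have hUV : U ∩ V ⊆ ⋃ n ∈ Finset.range (m + 3), L n := by
      intro x ⟨hx1, hx2⟩
      obtain ⟨n, hn⟩ := Set.mem_iUnion.1 hx1
      have hxLn := interior_subset hn
      have h1 : b + n - 2 < f x := (hLsub n hxLn).1
      have h2 : f x < b + m + 1 := hx2.2
      have : (n : ℝ) < m + 3 := by linarith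
      have hnm : n < m + 3 := by exact_mod_cast this
      exact Set.mem_biUnion (Finset.mem_range.2 hnm) hxLn
    have hCcomp : IsCompact (⋃ n ∈ Finset.range (m + 3), L n) :=
      (Finset.range (m + 3)).isCompact_biUnion (fun n _ => hLcomp n)
    have hCclosed : IsClosed (⋃ n ∈ Finset.range (m + 3), L n) :=
      isClosed_biUnion_finset (fun n _ => (hLcomp n).isClosed)
    have hfinal : closure U ∩ f ⁻¹' K ⊆ ⋃ n ∈ Finset.range (m + 3), L n :=
      hsubV.trans ((closure_minimal hUV hCclosed))
    exact hCcomp.of_isClosed_subset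
      ((isClosed_closure).inter (hK.isClosed.preimage hf)) hfinal
  · -- bounded below on closure U
    rintro z ⟨x, hx, rfl⟩
    exact hlow x hx
end

section
/- Assume the presentation of the compact polytope Δ ⊆ ℝ^n is simple and exact. Then there exists a smooth function f : ℝ^n → ℝ such that for every subset I ⊆ {1,…,N} with F_I nonempty: (i) there is a point x_I ∈ relint F_I with f(x_I) ≤ f(y) for all y ∈ F_I, and f(y) = f(x_I) for y ∈ F_I implies y = x_I (the minimum of f over F_I is attained at exactly one point, which lies in the relative interior of F_I); and (ii) for every x ∈ relint F_I, the derivative Df_x vanishes identically on the direction space ⋂_{i ∈ I} ker φ_i of F_I if and only if x = x_I (the restriction of f to relint F_I has no critical points other than the minimizer). -/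
noncomputable section
open Filter Finset

lemma polyAux_contDiff {n N : ℕ} (φ : Fin N → ((Fin n → ℝ) →ₗ[ℝ] ℝ)) (lam : Fin N → ℝ) (c : ℝ) :
    ContDiff ℝ (⊤ : ℕ∞) (fun x => ∑ j, Real.exp (c * (φ j x - lam j))) := by
  apply ContDiff.sum
  intro j _
  apply Real.contDiff_exp.comp
  apply ContDiff.mul contDiff_const
  apply ContDiff.sub _ contDiff_const
  exact (φ j).toContinuousLinearMap.contDiff

lemma polyAux_hasFDerivAt {n N : ℕ} (φ : Fin N → ((Fin n → ℝ) →ₗ[ℝ] ℝ)) (lam : Fin N → ℝ)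
    (c : ℝ) (x : Fin n → ℝ) :
    HasFDerivAt (fun x => ∑ j, Real.exp (c * (φ j x - lam j)))
      (∑ j, (c * Real.exp (c * (φ j x - lam j))) • ((φ j).toContinuousLinearMap)) x := by
  apply HasFDerivAt.fun_sum
  intro j _
  have h0 : HasFDerivAt (fun x => φ j x) ((φ j).toContinuousLinearMap) x :=
    ((φ j).toContinuousLinearMap).hasFDerivAt
  have h1 : HasFDerivAt (fun x => c * (φ j x - lam j)) (c • (φ j).toContinuousLinearMap) x :=
    (h0.sub_const (lam j)).const_mul c
  have h2 := (Real.hasDerivAt_exp (c * (φ j x - lam j))).comp_hasFDerivAt x h1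
  refine h2.congr_fderiv ?_
  rw [smul_smul]
  congr 1
  ring

lemma polyAux_curve_hasDerivAt {n : ℕ} {f : (Fin n → ℝ) → ℝ} {D : (Fin n → ℝ) →L[ℝ] ℝ}
    {x v : Fin n → ℝ} (hf : HasFDerivAt f D x) :
    HasDerivAt (fun t : ℝ => f (x + t • v)) (D v) 0 := by
  have hc : HasDerivAt (fun t : ℝ => x + t • v) v 0 := by
    simpa using ((hasDerivAt_id (0:ℝ)).smul_const v).const_add x
  have hf' : HasFDerivAt f D (x + (0:ℝ) • v) := by simpa using hf
  have := hf'.comp_hasDerivAt (x := (0:ℝ)) hc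
  exact this

lemma polyAux_deriv_nonneg {n : ℕ} {f : (Fin n → ℝ) → ℝ} {D : (Fin n → ℝ) →L[ℝ] ℝ}
    {x v : Fin n → ℝ} (hf : HasFDerivAt f D x)
    (h : ∀ t ∈ Set.Icc (0:ℝ) 1, f x ≤ f (x + t • v)) : 0 ≤ D v := by
  have hg := polyAux_curve_hasDerivAt (v := v) hf
  have hslope := hasDerivAt_iff_tendsto_slope.1 hg
  have hmono : Tendsto (slope (fun t : ℝ => f (x + t • v)) 0) (nhdsWithin 0 (Set.Ioi 0)) (nhds (D v)) :=
    hslope.mono_left (nhdsWithin_mono 0 (fun t ht => ne_of_gt ht))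
  refine ge_of_tendsto hmono ?_
  filter_upwards [Ioc_mem_nhdsGT_of_mem (Set.mem_Ico.2 ⟨le_refl (0:ℝ), zero_lt_one⟩)] with t ht
  have h1 := h t ⟨le_of_lt ht.1, ht.2⟩
  have heq : slope (fun t : ℝ => f (x + t • v)) 0 t = (f (x + t • v) - f (x + (0:ℝ) • v)) / (t - 0) := by
    simp [slope_def_field]
  rw [heq]
  apply div_nonneg _ (by linarith [ht.1])
  simp only [zero_smul, add_zero]
  linarith

lemma polyAux_deriv_zero {n : ℕ} {f : (Fin n → ℝ) → ℝ} {D : (Fin n → ℝ) →L[ℝ] ℝ}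
    {x v : Fin n → ℝ} (hf : HasFDerivAt f D x)
    (h : ∀ᶠ t in nhds (0:ℝ), f x ≤ f (x + t • v)) : D v = 0 := by
  have hg := polyAux_curve_hasDerivAt (v := v) hf
  have hloc : IsLocalMin (fun t : ℝ => f (x + t • v)) 0 := by
    unfold IsLocalMin IsMinFilter
    simpa using h
  exact hloc.hasDerivAt_eq_zero hg


/-- The polytope `Δ = {x ∈ ℝⁿ : φ i x ≤ λ i for all i}` cut out by the linear
functionals `φ i` and bounds `lam i`. -/
def polyDelta {n N : ℕ} (φ : Fin N → ((Fin n → ℝ) →ₗ[ℝ] ℝ)) (lam : Fin N → ℝ) :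
    Set (Fin n → ℝ) :=
  {x | ∀ i, φ i x ≤ lam i}

/-- The face `F_I = {x ∈ Δ : φ i x = λ i for all i ∈ I}`. -/
def polyFace {n N : ℕ} (φ : Fin N → ((Fin n → ℝ) →ₗ[ℝ] ℝ)) (lam : Fin N → ℝ)
    (I : Finset (Fin N)) : Set (Fin n → ℝ) :=
  {x ∈ polyDelta φ lam | ∀ i ∈ I, φ i x = lam i}

/-- The relative interior of the face `F_I`:
`{x ∈ Δ : φ i x = λ i for i ∈ I and φ j x < λ j for j ∉ I}`. -/
def polyRelint {n N : ℕ} (φ : Fin N → ((Fin n → ℝ) →ₗ[ℝ] ℝ)) (lam : Fin N → ℝ)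
    (I : Finset (Fin N)) : Set (Fin n → ℝ) :=
  {x ∈ polyDelta φ lam | (∀ i ∈ I, φ i x = lam i) ∧ ∀ j ∉ I, φ j x < lam j}

/-- The presentation is *simple* if at every point of `Δ` the active functionals are
linearly independent. -/
def SimplePresentation {n N : ℕ} (φ : Fin N → ((Fin n → ℝ) →ₗ[ℝ] ℝ)) (lam : Fin N → ℝ) :
    Prop :=
  ∀ x ∈ polyDelta φ lam,
    LinearIndependent ℝ (fun i : {i : Fin N // φ i x = lam i} => φ i.1)

/-- The presentation is *exact* if `relint F_I` is nonempty whenever `F_I` is nonempty. -/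
def ExactPresentation {n N : ℕ} (φ : Fin N → ((Fin n → ℝ) →ₗ[ℝ] ℝ)) (lam : Fin N → ℝ) :
    Prop :=
  ∀ I : Finset (Fin N), (polyFace φ lam I).Nonempty → (polyRelint φ lam I).Nonempty

/-- **Proposition A.1(A) / Lemma 6.2(1).** Let `Δ ⊆ ℝⁿ` be a compact polytope with
nonempty interior whose presentation is simple and exact.  Then there is a smooth
function `f : ℝⁿ → ℝ` such that for every `I` with `F_I` nonempty: the minimum of `f`
over `F_I` is attained at exactly one point, which lies in the relative interior of
`F_I`, and the restriction of `f` to `relint F_I` has no critical points other than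
this minimizer. -/
theorem exists_smooth_function_unique_critical_points_on_faces
    {n N : ℕ} (hn : 0 < n) (hN : 0 < N)
    (φ : Fin N → ((Fin n → ℝ) →ₗ[ℝ] ℝ)) (lam : Fin N → ℝ)
    (hcpt : IsCompact (polyDelta φ lam))
    (hint : (interior (polyDelta φ lam)).Nonempty)
    (hsimple : SimplePresentation φ lam)
    (hexact : ExactPresentation φ lam) :
    ∃ f : (Fin n → ℝ) → ℝ, ContDiff ℝ (⊤ : ℕ∞) f ∧
      ∀ I : Finset (Fin N), (polyFace φ lam I).Nonempty →
        ∃ xI ∈ polyRelint φ lam I,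
          (∀ y ∈ polyFace φ lam I, f xI ≤ f y) ∧
          (∀ y ∈ polyFace φ lam I, f y = f xI → y = xI) ∧
          ∀ x ∈ polyRelint φ lam I,
            ((∀ u : Fin n → ℝ, (∀ i ∈ I, φ i u = 0) → fderiv ℝ f x u = 0) ↔ x = xI) := by
  classical
  -- kernel of all functionals is trivial
  have hker : ∀ v : Fin n → ℝ, (∀ j, φ j v = 0) → v = 0 := by
    intro v hv
    by_contra hv0
    obtain ⟨x0, hx0⟩ := hint
    have hx0Δ : x0 ∈ polyDelta φ lam := interior_subset hx0
    obtain ⟨C, hC⟩ := Metric.isBounded_iff.1 hcpt.isBounded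
    have hnorm : 0 < ‖v‖ := norm_pos_iff.2 hv0
    have hC0 : 0 ≤ C := le_trans dist_nonneg (hC hx0Δ hx0Δ)
    set t : ℝ := (C + 1) / ‖v‖ with ht_def
    have htpos : 0 ≤ t := by positivity
    have hmem : x0 + t • v ∈ polyDelta φ lam := by
      intro i
      have := hx0Δ i
      simp [map_add, map_smul, hv i, smul_eq_mul]
      simpa using this
    have hd := hC hx0Δ hmem
    have hdist : dist x0 (x0 + t • v) = t * ‖v‖ := by
      rw [dist_eq_norm]
      simp [norm_smul, abs_of_nonneg htpos]
    rw [hdist, ht_def, div_mul_cancel₀ _ (ne_of_gt hnorm)] at hd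
    linarith
  -- pick relint points
  have hzex : ∀ I : Finset (Fin N), ∃ zz : Fin n → ℝ,
      (polyFace φ lam I).Nonempty → zz ∈ polyRelint φ lam I := by
    intro I
    by_cases h : (polyFace φ lam I).Nonempty
    · exact (hexact I h).imp (fun z hz _ => hz)
    · exact ⟨0, fun h' => absurd h' h⟩
  choose z hz using hzex
  -- the gap constant
  have hβ : ∃ β : ℝ, 0 < β ∧ ∀ I : Finset (Fin N), (polyFace φ lam I).Nonempty →
      ∀ j ∉ I, β ≤ lam j - φ j (z I) := by
    haveI : Nonempty (Fin N) := ⟨⟨0, hN⟩⟩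
    set gap : Finset (Fin N) × Fin N → ℝ := fun p =>
      if (polyFace φ lam p.1).Nonempty ∧ p.2 ∉ p.1 then lam p.2 - φ p.2 (z p.1) else 1 with hgap
    have hne : (Finset.univ : Finset (Finset (Fin N) × Fin N)).Nonempty := Finset.univ_nonempty
    refine ⟨Finset.univ.inf' hne gap, ?_, ?_⟩
    · rw [Finset.lt_inf'_iff]
      intro p _
      by_cases h : (polyFace φ lam p.1).Nonempty ∧ p.2 ∉ p.1
      · have := (hz p.1 h.1).2.2 p.2 h.2
        simp only [gap, if_pos h]
        linarith
      · simp only [gap, if_neg h]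
        norm_num
    · intro I hI j hj
      have hle := Finset.inf'_le gap (Finset.mem_univ (I, j))
      have heq : gap (I, j) = lam j - φ j (z I) := if_pos ⟨hI, hj⟩
      rw [heq] at hle
      exact hle
  obtain ⟨β, hβpos, hβle⟩ := hβ
  set c : ℝ := (N + 1) / β with hc_def
  have hc : 0 < c := by positivity
  set f : (Fin n → ℝ) → ℝ := fun x => ∑ j, Real.exp (c * (φ j x - lam j)) with hf_def
  set D : (Fin n → ℝ) → ((Fin n → ℝ) →L[ℝ] ℝ) :=
    fun x => ∑ j, (c * Real.exp (c * (φ j x - lam j))) • ((φ j).toContinuousLinearMap) with hD_def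
  have hfD : ∀ x, HasFDerivAt f (D x) x := fun x => polyAux_hasFDerivAt φ lam c x
  have hDapp : ∀ x u, D x u = ∑ j, (c * Real.exp (c * (φ j x - lam j))) * φ j u := by
    intro x u
    simp [hD_def, ContinuousLinearMap.sum_apply]
  have hfderiv : ∀ x, fderiv ℝ f x = D x := fun x => (hfD x).fderiv
  refine ⟨f, polyAux_contDiff φ lam c, ?_⟩
  intro I hI
  -- the face is compact
  have hclosed : IsClosed (polyFace φ lam I) := by
    have heq : polyFace φ lam I =
        (⋂ i, {x : Fin n → ℝ | φ i x ≤ lam i}) ∩ ⋂ i ∈ I, {x : Fin n → ℝ | φ i x = lam i} := by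
      ext x
      simp [polyFace, polyDelta, Set.mem_iInter]
    rw [heq]
    exact IsClosed.inter
      (isClosed_iInter fun i => isClosed_le (φ i).continuous_of_finiteDimensional continuous_const)
      (isClosed_biInter fun i _ => isClosed_eq (φ i).continuous_of_finiteDimensional continuous_const)
  have hfc : IsCompact (polyFace φ lam I) :=
    hcpt.of_isClosed_subset hclosed (fun x hx => hx.1)
  obtain ⟨xI, hxIF, hmin⟩ := hfc.exists_isMinOn hI ((polyAux_contDiff φ lam c).continuous.continuousOn)
  have hmin' : ∀ y ∈ polyFace φ lam I, f xI ≤ f y := fun y hy => hmin hy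
  -- the minimizer is in the relative interior
  have hxIR : xI ∈ polyRelint φ lam I := by
    by_contra hcon
    obtain ⟨hΔ, hEq⟩ := hxIF
    have : ¬ ∀ j ∉ I, φ j xI < lam j := fun h => hcon ⟨hΔ, hEq, h⟩
    push_neg at this
    obtain ⟨k, hkI, hk⟩ := this
    have hkeq : φ k xI = lam k := le_antisymm (hΔ k) hk
    obtain ⟨hzΔ, hzEq, hzLt⟩ := hz I hI
    set v : Fin n → ℝ := z I - xI with hv_def
    have hseg : ∀ t ∈ Set.Icc (0:ℝ) 1, f xI ≤ f (xI + t • v) := by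
      intro t ht
      apply hmin
      constructor
      · intro j
        have h1 : φ j xI ≤ lam j := hΔ j
        have h2 : φ j (z I) ≤ lam j := hzΔ j
        have : φ j (xI + t • v) = φ j xI + t * (φ j (z I) - φ j xI) := by
          simp [hv_def, map_add, map_smul, map_sub, smul_eq_mul]
          try ring
        rw [this]
        nlinarith [ht.1, ht.2]
      · intro i hi
        have h1 : φ i xI = lam i := hEq i hi
        have h2 : φ i (z I) = lam i := hzEq i hi
        have : φ i (xI + t • v) = φ i xI + t * (φ i (z I) - φ i xI) := by
          simp [hv_def, map_add, map_smul, map_sub, smul_eq_mul]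
          try ring
        rw [this, h1, h2]
        ring
    have h0 : 0 ≤ D xI v := polyAux_deriv_nonneg (hfD xI) hseg
    have hub : D xI v ≤ ∑ j, (if j = k then -(c*β) else (1:ℝ)) := by
      rw [hDapp]
      apply Finset.sum_le_sum
      intro j _
      by_cases hjk : j = k
      · subst hjk
        rw [if_pos rfl]
        have hφv : φ j v = φ j (z I) - lam j := by
          simp [hv_def, map_sub, hkeq]
        have hb : φ j (z I) - lam j ≤ -β := by
          have := hβle I hI j hkI
          linarith
        rw [hφv, hkeq]
        simp only [sub_self, mul_zero, Real.exp_zero, mul_one]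
        calc c * (φ j (z I) - lam j) ≤ c * (-β) := by
              exact mul_le_mul_of_nonneg_left hb (le_of_lt hc)
          _ = -(c * β) := by ring
      · rw [if_neg hjk]
        set a : ℝ := φ j xI - lam j with ha_def
        set b : ℝ := φ j (z I) - lam j with hb_def
        have ha : a ≤ 0 := by simp [ha_def]; linarith [hΔ j]
        have hb : b ≤ 0 := by simp [hb_def]; linarith [hzΔ j]
        have hφv : φ j v = b - a := by simp [hv_def, map_sub, ha_def, hb_def]; try ring
        rw [hφv]
        rcases le_or_gt (b - a) 0 with hba | hba
        · have : c * Real.exp (c * a) * (b - a) ≤ 0 :=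
            mul_nonpos_of_nonneg_of_nonpos (by positivity) hba
          linarith
        · have step1 : c * Real.exp (c * a) * (b - a) ≤ c * Real.exp (c * a) * (-a) := by
            apply mul_le_mul_of_nonneg_left _ (by positivity)
            linarith
          set s : ℝ := c * (-a) with hs_def
          have hs : 0 ≤ s := by
            exact mul_nonneg hc.le (by linarith)
          have hexp : c * Real.exp (c * a) * (-a) = s * Real.exp (-s) := by
            rw [hs_def]
            have : c * a = -(c * -a) := by ring
            rw [this]
            ring
          have hse : s * Real.exp (-s) ≤ 1 := by
            rw [Real.exp_neg, ← div_eq_mul_inv, div_le_one (Real.exp_pos s)]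
            linarith [Real.add_one_le_exp s]
          rw [hexp] at step1
          linarith
    have hsum : ∑ j, (if j = k then -(c*β) else (1:ℝ)) = (N:ℝ) + (-(c*β) - 1) := by
      have hrw : ∀ j : Fin N, (if j = k then -(c*β) else (1:ℝ)) =
          (if j = k then -(c*β) - 1 else 0) + 1 := by
        intro j; split_ifs <;> ring
      rw [Finset.sum_congr rfl (fun j _ => hrw j), Finset.sum_add_distrib]
      simp [Finset.sum_ite_eq', Finset.card_univ]
      ring
    have hcβ : c * β = (N:ℝ) + 1 := div_mul_cancel₀ _ (ne_of_gt hβpos)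
    rw [hsum, hcβ] at hub
    linarith
  -- criticality at xI
  have hcritI : ∀ u : Fin n → ℝ, (∀ i ∈ I, φ i u = 0) → D xI u = 0 := by
    intro u hu
    obtain ⟨hΔ, hEq, hLt⟩ := hxIR
    have hopen : IsOpen {y : Fin n → ℝ | ∀ j, j ∉ I → φ j y < lam j} := by
      have hset : {y : Fin n → ℝ | ∀ j, j ∉ I → φ j y < lam j} =
          ⋂ j, {y : Fin n → ℝ | j ∉ I → φ j y < lam j} := by
        ext y; simp [Set.mem_iInter]
      rw [hset]
      apply isOpen_iInter_of_finite
      intro j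
      by_cases hj : j ∈ I
      · have : {y : Fin n → ℝ | j ∉ I → φ j y < lam j} = Set.univ := by
          ext y; simp [hj]
        rw [this]; exact isOpen_univ
      · have : {y : Fin n → ℝ | j ∉ I → φ j y < lam j} = {y | φ j y < lam j} := by
          ext y; simp [hj]
        rw [this]
        exact isOpen_lt (φ j).continuous_of_finiteDimensional continuous_const
    have hcurve : Continuous (fun t : ℝ => xI + t • u) := by
      exact continuous_const.add (continuous_id.smul continuous_const)
    have hmem0 : (fun t : ℝ => xI + t • u) 0 ∈ {y : Fin n → ℝ | ∀ j, j ∉ I → φ j y < lam j} := by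
      simp only [zero_smul, add_zero]
      exact fun j hj => hLt j hj
    have hev : ∀ᶠ t in nhds (0:ℝ), f xI ≤ f (xI + t • u) := by
      have hpre : ∀ᶠ t in nhds (0:ℝ),
          (xI + t • u) ∈ {y : Fin n → ℝ | ∀ j, j ∉ I → φ j y < lam j} :=
        hcurve.continuousAt.eventually_mem (hopen.mem_nhds hmem0)
      filter_upwards [hpre] with t ht
      apply hmin
      constructor
      · intro j
        by_cases hj : j ∈ I
        · have : φ j (xI + t • u) = lam j := by
            simp [map_add, map_smul, smul_eq_mul, hEq j hj, hu j hj]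
          exact le_of_eq this
        · exact (ht j hj).le
      · intro i hi
        simp [map_add, map_smul, smul_eq_mul, hEq i hi, hu i hi]
    exact polyAux_deriv_zero (hfD xI) hev
  -- uniqueness of the minimizer
  have huniq : ∀ y ∈ polyFace φ lam I, f y = f xI → y = xI := by
    intro y hy hfy
    by_contra hne
    have hvne : ∃ j0, φ j0 y ≠ φ j0 xI := by
      by_contra hall
      push_neg at hall
      apply hne
      have hv0 : y - xI = 0 := hker _ (fun j => by simp [map_sub, hall j])
      exact sub_eq_zero.1 hv0
    obtain ⟨j0, hj0⟩ := hvne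
    set m : Fin n → ℝ := (1/2 : ℝ) • xI + (1/2 : ℝ) • y with hm_def
    have hargm : ∀ j : Fin N, c * (φ j m - lam j) =
        (1/2 : ℝ) * (c * (φ j xI - lam j)) + (1/2 : ℝ) * (c * (φ j y - lam j)) := by
      intro j
      simp only [hm_def, map_add, map_smul, smul_eq_mul]
      ring
    have hmF : m ∈ polyFace φ lam I := by
      constructor
      · intro j
        have h1 := hy.1 j
        have h2 := hxIF.1 j
        have : φ j m = (1/2 : ℝ) * φ j xI + (1/2 : ℝ) * φ j y := by
          simp only [hm_def, map_add, map_smul, smul_eq_mul]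
        rw [this]; linarith
      · intro i hi
        have h1 := hy.2 i hi
        have h2 := hxIF.2 i hi
        have : φ i m = (1/2 : ℝ) * φ i xI + (1/2 : ℝ) * φ i y := by
          simp only [hm_def, map_add, map_smul, smul_eq_mul]
        rw [this, h1, h2]; ring
    have hlt : f m < (1/2 : ℝ) * f xI + (1/2 : ℝ) * f y := by
      have hrhs : (1/2 : ℝ) * f xI + (1/2 : ℝ) * f y =
          ∑ j, ((1/2 : ℝ) * Real.exp (c * (φ j xI - lam j)) +
            (1/2 : ℝ) * Real.exp (c * (φ j y - lam j))) := by
        simp only [hf_def, Finset.mul_sum, Finset.sum_add_distrib]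
      rw [hrhs]
      apply Finset.sum_lt_sum
      · intro j _
        rw [hargm j]
        have := convexOn_exp.2 (Set.mem_univ (c * (φ j xI - lam j)))
          (Set.mem_univ (c * (φ j y - lam j))) (by norm_num : (0:ℝ) ≤ 1/2)
          (by norm_num : (0:ℝ) ≤ 1/2) (by norm_num : (1/2 : ℝ) + 1/2 = 1)
        simpa [smul_eq_mul] using this
      · refine ⟨j0, Finset.mem_univ _, ?_⟩
        rw [hargm j0]
        have hne' : c * (φ j0 xI - lam j0) ≠ c * (φ j0 y - lam j0) := by
          intro hh
          apply hj0
          have := mul_left_cancel₀ (ne_of_gt hc) hh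
          linarith
        have := strictConvexOn_exp.2 (Set.mem_univ (c * (φ j0 xI - lam j0)))
          (Set.mem_univ (c * (φ j0 y - lam j0))) hne' (by norm_num : (0:ℝ) < 1/2)
          (by norm_num : (0:ℝ) < 1/2) (by norm_num : (1/2 : ℝ) + 1/2 = 1)
        simpa [smul_eq_mul] using this
    have hmge : f xI ≤ f m := hmin hmF
    rw [hfy] at hlt
    linarith
  refine ⟨xI, hxIR, hmin', huniq, ?_⟩
  intro x hx
  constructor
  · intro hcrit
    obtain ⟨hxΔ, hxEq, hxLt⟩ := hx
    have hIEq : ∀ i ∈ I, φ i xI = lam i := hxIR.2.1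
    set v : Fin n → ℝ := x - xI with hv_def
    have hvI : ∀ i ∈ I, φ i v = 0 := by
      intro i hi
      simp [hv_def, map_sub, hxEq i hi, hIEq i hi]
    have h1 : D x v = 0 := by
      rw [← hfderiv x]
      exact hcrit v hvI
    have h2 : D xI v = 0 := hcritI v hvI
    have hsum0 : ∑ j, (c * (Real.exp (c * (φ j x - lam j)) -
        Real.exp (c * (φ j xI - lam j))) * (φ j v)) = 0 := by
      have hcalc : ∑ j, (c * (Real.exp (c * (φ j x - lam j)) -
          Real.exp (c * (φ j xI - lam j))) * (φ j v)) =
          (∑ j, c * Real.exp (c * (φ j x - lam j)) * φ j v) -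
          (∑ j, c * Real.exp (c * (φ j xI - lam j)) * φ j v) := by
        rw [← Finset.sum_sub_distrib]
        apply Finset.sum_congr rfl
        intro j _
        ring
      rw [hcalc, ← hDapp, ← hDapp, h1, h2, sub_zero]
    have hnonneg : ∀ j ∈ Finset.univ, (0:ℝ) ≤ c * (Real.exp (c * (φ j x - lam j)) -
        Real.exp (c * (φ j xI - lam j))) * (φ j v) := by
      intro j _
      have hφ : φ j v = φ j x - φ j xI := by simp [hv_def, map_sub]
      rcases le_total (φ j x) (φ j xI) with h | h
      · have he : Real.exp (c * (φ j x - lam j)) ≤ Real.exp (c * (φ j xI - lam j)) :=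
          Real.exp_le_exp.2 (mul_le_mul_of_nonneg_left (by linarith) hc.le)
        have hfac : c * (Real.exp (c * (φ j x - lam j)) -
            Real.exp (c * (φ j xI - lam j))) ≤ 0 :=
          mul_nonpos_of_nonneg_of_nonpos hc.le (by linarith)
        have hvle : φ j v ≤ 0 := by rw [hφ]; linarith
        have := mul_nonneg (neg_nonneg.2 hfac) (neg_nonneg.2 hvle)
        linarith [this, neg_mul_neg (c * (Real.exp (c * (φ j x - lam j)) -
            Real.exp (c * (φ j xI - lam j)))) (φ j v)]
      · have he : Real.exp (c * (φ j xI - lam j)) ≤ Real.exp (c * (φ j x - lam j)) :=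
          Real.exp_le_exp.2 (mul_le_mul_of_nonneg_left (by linarith) hc.le)
        apply mul_nonneg (mul_nonneg hc.le (by linarith))
        rw [hφ]; linarith
    have hzero := (Finset.sum_eq_zero_iff_of_nonneg hnonneg).1 hsum0
    have hvall : ∀ j, φ j v = 0 := by
      intro j
      by_contra hne0
      have hterm := hzero j (Finset.mem_univ j)
      have hφ : φ j v = φ j x - φ j xI := by simp [hv_def, map_sub]
      have hxx : φ j x ≠ φ j xI := by
        intro hh
        apply hne0
        rw [hφ, hh, sub_self]
      have hexpne : Real.exp (c * (φ j x - lam j)) - Real.exp (c * (φ j xI - lam j)) ≠ 0 := by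
        rw [sub_ne_zero]
        intro hh
        apply hxx
        have := mul_left_cancel₀ (ne_of_gt hc) (Real.exp_injective hh)
        linarith
      exact (mul_ne_zero (mul_ne_zero (ne_of_gt hc) hexpne) hne0) hterm
    have hv0 : v = 0 := hker v hvall
    have : x - xI = 0 := hv0
    exact sub_eq_zero.1 this
  · rintro rfl
    intro u hu
    rw [hfderiv]
    exact hcritI u hu
end
end

section
/- Fix an integer ℓ ≥ 1, a finite index set K, and linear functionals L_k (k ∈ K) on ℝ^ℓ; let F = {x ∈ ℝ^ℓ : L_k(x) ≤ 1 for all k ∈ K} be compact with 0 in its interior. Let δ ∈ (0,1), fix k ∈ K, and let η : ℝ^ℓ → ℝ^ℓ be any map such that L_k(η(y)) < −δ for every y ∈ F with L_k(y) ≥ 1 − δ. Let T > 0 and let X : [0,T] → ℝ^ℓ be differentiable with X'(t) = −η(X(t)) for all t ∈ [0,T], with X(t) ∈ F for all t ∈ [0,T], and with L_k(X(0)) = 1 − δ. Then L_k(X(t)) > 1 − δ + δ·t for every t ∈ (0,T]; in particular T < 1. -/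
/-!
Along the trajectory, `t ↦ L k (X t) - δ t` has derivative `L k (-η (X t)) - δ`, which is positive
as soon as the trajectory lies in the slab `L k ≥ 1 - δ`. Starting on the boundary of that slab,
the function therefore can never fall below its initial value `1 - δ`: the trajectory stays in the
slab, the derivative stays positive, and the function increases strictly. Since `L k ≤ 1` on `F`,
this forces `1 - δ + δ T < 1`, that is `T < 1`.
-/

noncomputable section

open Set Topology

/-- The compact polytope `F = {x ∈ ℝ^ℓ : L k x ≤ 1 for all k}`. -/
def polyF {ℓ : ℕ} {K : Type*} (L : K → (EuclideanSpace ℝ (Fin ℓ) →ₗ[ℝ] ℝ)) :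
    Set (EuclideanSpace ℝ (Fin ℓ)) :=
  {x | ∀ k, L k x ≤ 1}

section Barrier

variable {f f' : ℝ → ℝ} {a b : ℝ}

theorem nonneg_of_hasDerivWithinAt_pos_of_nonneg
    (hf : ∀ x ∈ Icc a b, HasDerivWithinAt f (f' x) (Icc a b) x) (ha : 0 ≤ f a)
    (hpos : ∀ x ∈ Icc a b, 0 ≤ f x → 0 < f' x) : ∀ x ∈ Icc a b, 0 ≤ f x := by
  have hf_Ici : ∀ x ∈ Ico a b, HasDerivWithinAt f (f' x) (Ici x) x := fun x hx =>
    (hf x (Ico_subset_Icc_self hx)).mono_of_mem_nhdsWithin (Icc_mem_nhdsGE_of_mem hx)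
  exact fun x hx => image_le_of_deriv_right_lt_deriv_boundary' continuousOn_const
    (fun x _ => hasDerivWithinAt_const x _ 0) ha
    (fun x hx => (hf x hx).continuousWithinAt) hf_Ici
    (fun x hx hfx => hpos x (Ico_subset_Icc_self hx) hfx.le) hx

theorem pos_of_hasDerivWithinAt_pos_of_nonneg
    (hf : ∀ x ∈ Icc a b, HasDerivWithinAt f (f' x) (Icc a b) x) (ha : 0 ≤ f a)
    (hpos : ∀ x ∈ Icc a b, 0 ≤ f x → 0 < f' x) : ∀ x ∈ Ioc a b, 0 < f x := by
  have hnonneg := nonneg_of_hasDerivWithinAt_pos_of_nonneg hf ha hpos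
  have hmono : StrictMonoOn f (Icc a b) := by
    refine strictMonoOn_of_hasDerivWithinAt_pos (f' := f') (convex_Icc a b)
      (fun x hx => (hf x hx).continuousWithinAt) (fun x hx => ?_) (fun x hx => ?_)
    · exact (hf x (interior_subset hx)).mono interior_subset
    · exact hpos x (interior_subset hx) (hnonneg x (interior_subset hx))
  intro x hx
  exact ha.trans_lt (hmono (left_mem_Icc.2 (hx.1.le.trans hx.2)) (Ioc_subset_Icc_self hx) hx.1)

end Barrier

theorem trajectory_exits_estimate_general
    {ℓ : ℕ} {K : Type*}
    (L : K → (EuclideanSpace ℝ (Fin ℓ) →ₗ[ℝ] ℝ))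
    (δ : ℝ) (hδ0 : 0 < δ) (k : K)
    (η : EuclideanSpace ℝ (Fin ℓ) → EuclideanSpace ℝ (Fin ℓ))
    (hη : ∀ y ∈ polyF L, 1 - δ ≤ L k y → L k (η y) < -δ)
    (T : ℝ) (hT : 0 < T)
    (X : ℝ → EuclideanSpace ℝ (Fin ℓ))
    (hX : ∀ t ∈ Set.Icc (0 : ℝ) T, HasDerivWithinAt X (-η (X t)) (Set.Icc 0 T) t)
    (hXF : ∀ t ∈ Set.Icc (0 : ℝ) T, X t ∈ polyF L)
    (hX0 : L k (X 0) = 1 - δ) :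
    (∀ t ∈ Set.Ioc (0 : ℝ) T, 1 - δ + δ * t < L k (X t)) ∧ T < 1 := by
  set h : ℝ → ℝ := fun t => L k (X t) - δ * t - (1 - δ)
  have hderiv : ∀ t ∈ Icc 0 T, HasDerivWithinAt h (L k (-η (X t)) - δ) (Icc 0 T) t := by
    intro t ht
    have hLX : HasDerivWithinAt (fun t => L k (X t)) (L k (-η (X t))) (Icc 0 T) t :=
      (L k).toContinuousLinearMap.hasFDerivAt.comp_hasDerivWithinAt t (hX t ht)
    have hh := (hLX.sub ((hasDerivWithinAt_id t _).const_mul δ)).sub_const (1 - δ)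
    rwa [mul_one] at hh
  have hpos : ∀ t ∈ Icc 0 T, 0 ≤ h t → 0 < L k (-η (X t)) - δ := by
    intro t ht hht
    have hslab : 1 - δ ≤ L k (X t) := by linarith [mul_nonneg hδ0.le ht.1]
    linarith [map_neg (L k) (η (X t)), hη (X t) (hXF t ht) hslab]
  have hgrowth := pos_of_hasDerivWithinAt_pos_of_nonneg hderiv (by simp [h, hX0]) hpos
  refine ⟨fun t ht => by linarith [hgrowth t ht], ?_⟩
  have hT_growth := hgrowth T ⟨hT, le_rfl⟩
  have hT_F := hXF T ⟨hT.le, le_rfl⟩ k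
  nlinarith

/-- **Lemma A.4 (key estimate).**  Let `F = {x : L k x ≤ 1}` be compact with `0` in its
interior, `δ ∈ (0,1)`, and let `η` satisfy `L k (η y) < -δ` for every `y ∈ F` with
`L k y ≥ 1 - δ`.  If `X : [0,T] → ℝ^ℓ` is differentiable with `X' = -η ∘ X`, stays in
`F`, and starts with `L k (X 0) = 1 - δ`, then `L k (X t) > 1 - δ + δ·t` for all
`t ∈ (0,T]`; in particular `T < 1`. -/
theorem trajectory_exits_estimate
    {ℓ : ℕ} (hℓ : 1 ≤ ℓ) {K : Type*} [Fintype K]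
    (L : K → (EuclideanSpace ℝ (Fin ℓ) →ₗ[ℝ] ℝ))
    (hFcpt : IsCompact (polyF L))
    (h0 : (0 : EuclideanSpace ℝ (Fin ℓ)) ∈ interior (polyF L))
    (δ : ℝ) (hδ0 : 0 < δ) (hδ1 : δ < 1) (k : K)
    (η : EuclideanSpace ℝ (Fin ℓ) → EuclideanSpace ℝ (Fin ℓ))
    (hη : ∀ y ∈ polyF L, 1 - δ ≤ L k y → L k (η y) < -δ)
    (T : ℝ) (hT : 0 < T)
    (X : ℝ → EuclideanSpace ℝ (Fin ℓ))
    (hX : ∀ t ∈ Set.Icc (0 : ℝ) T, HasDerivWithinAt X (-η (X t)) (Set.Icc 0 T) t)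
    (hXF : ∀ t ∈ Set.Icc (0 : ℝ) T, X t ∈ polyF L)
    (hX0 : L k (X 0) = 1 - δ) :
    (∀ t ∈ Set.Ioc (0 : ℝ) T, 1 - δ + δ * t < L k (X t)) ∧ T < 1 :=
  trajectory_exits_estimate_general L δ hδ0 k η hη T hT X hX hXF hX0
end
end

section
/- Fix an integer ℓ ≥ 1, a finite index set K, and linear functionals L_k (k ∈ K) on ℝ^ℓ; let F = {x ∈ ℝ^ℓ : L_k(x) ≤ 1 for all k ∈ K} be compact with 0 in its interior, and write ∂F = {x ∈ F : L_k(x) = 1 for some k}. Let U ⊆ ℝ^ℓ be an open set containing ∂F and let η : U → ℝ^ℓ be a smooth map such that for every x ∈ ∂F and every k ∈ K with L_k(x) = 1 one has L_k(η(x)) < 0. Then there exist an open set W with ∂F ⊆ W ⊆ U and a smooth function h : W → ℝ such that h(x) = 1 for all x ∈ ∂F, and Dh_x(η(x)) < 0 for every x ∈ W with L_k(x) < 1 for all k ∈ K (i.e., for every x ∈ W in the interior of F). -/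
noncomputable section

/-- The boundary `∂F = {x ∈ F : L k x = 1 for some k}`. -/
def polyBdry {ℓ : ℕ} {K : Type*} (L : K → (EuclideanSpace ℝ (Fin ℓ) →ₗ[ℝ] ℝ)) :
    Set (EuclideanSpace ℝ (Fin ℓ)) :=
  {x ∈ polyF L | ∃ k, L k x = 1}

/-- **Lemma A.5.**  Let `F = {x : L k x ≤ 1}` be compact with `0` in its interior, `U`
an open set containing `∂F`, and `η` a smooth vector field on `U` with
`L k (η x) < 0` at every `x ∈ ∂F` for every active `k`.  Then there exist an open set
`W` with `∂F ⊆ W ⊆ U` and a smooth function `h : W → ℝ` with `h ≡ 1` on `∂F` and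
`Dh_x(η x) < 0` at every point of `W` in the interior of `F`. -/
theorem exists_boundary_defining_function
    {ℓ : ℕ} (hℓ : 1 ≤ ℓ) {K : Type*} [Fintype K]
    (L : K → (EuclideanSpace ℝ (Fin ℓ) →ₗ[ℝ] ℝ))
    (hFcpt : IsCompact (polyF L))
    (h0 : (0 : EuclideanSpace ℝ (Fin ℓ)) ∈ interior (polyF L))
    (U : Set (EuclideanSpace ℝ (Fin ℓ))) (hU : IsOpen U) (hbdU : polyBdry L ⊆ U)
    (η : EuclideanSpace ℝ (Fin ℓ) → EuclideanSpace ℝ (Fin ℓ))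
    (hη : ContDiffOn ℝ (⊤ : ℕ∞) η U)
    (hin : ∀ x ∈ polyBdry L, ∀ k, L k x = 1 → L k (η x) < 0) :
    ∃ W : Set (EuclideanSpace ℝ (Fin ℓ)), IsOpen W ∧ polyBdry L ⊆ W ∧ W ⊆ U ∧
      ∃ h : EuclideanSpace ℝ (Fin ℓ) → ℝ, ContDiffOn ℝ (⊤ : ℕ∞) h W ∧
        (∀ x ∈ polyBdry L, h x = 1) ∧
        ∀ x ∈ W, (∀ k, L k x < 1) → fderiv ℝ h x (η x) < 0 := by
  classical
  set h : EuclideanSpace ℝ (Fin ℓ) → ℝ := fun x => 1 - ∏ k : K, (1 - L k x) with hh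
  -- the candidate derivative
  set D : EuclideanSpace ℝ (Fin ℓ) → (EuclideanSpace ℝ (Fin ℓ) →L[ℝ] ℝ) := fun x =>
    ∑ k : K, (∏ j ∈ Finset.univ.erase k, (1 - L j x)) •
      (LinearMap.toContinuousLinearMap (L k)) with hD
  have hder : ∀ x : EuclideanSpace ℝ (Fin ℓ), HasFDerivAt h (D x) x := by
    intro x
    have hp : HasFDerivAt (fun y : EuclideanSpace ℝ (Fin ℓ) => ∏ k : K, (1 - L k y))
        (∑ k ∈ Finset.univ, (∏ j ∈ Finset.univ.erase k, (1 - L j x)) •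
          ((0 : EuclideanSpace ℝ (Fin ℓ) →L[ℝ] ℝ) - LinearMap.toContinuousLinearMap (L k))) x := by
      apply HasFDerivAt.finset_prod
      intro k _
      exact (hasFDerivAt_const (1:ℝ) x).sub (LinearMap.toContinuousLinearMap (L k)).hasFDerivAt
    have := (hasFDerivAt_const (1:ℝ) x).sub hp
    refine this.congr_fderiv ?_
    ext v
    simp [hD, ContinuousLinearMap.sum_apply]
  -- the value of the derivative in direction η x
  have hDval : ∀ x : EuclideanSpace ℝ (Fin ℓ), D x (η x) =
      ∑ k : K, (∏ j ∈ Finset.univ.erase k, (1 - L j x)) * L k (η x) := by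
    intro x
    simp [hD, ContinuousLinearMap.sum_apply]
  have hηc : ContinuousOn η U := hη.continuousOn
  -- key local estimate
  have key : ∀ x₀ ∈ polyBdry L, ∃ V : Set (EuclideanSpace ℝ (Fin ℓ)), IsOpen V ∧ x₀ ∈ V ∧ V ⊆ U ∧
      ∀ x ∈ V, (∀ k, L k x < 1) →
        (∑ k : K, (∏ j ∈ Finset.univ.erase k, (1 - L j x)) * L k (η x)) < 0 := by
    rintro x₀ hx₀
    obtain ⟨hxF, k₀, hk₀⟩ := hx₀
    have hx₀U : x₀ ∈ U := hbdU ⟨hxF, k₀, hk₀⟩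
    set A : Finset K := Finset.univ.filter (fun k => L k x₀ = 1) with hA
    have hk₀A : k₀ ∈ A := by simp [hA, hk₀]
    have hAne : A.Nonempty := ⟨k₀, hk₀A⟩
    have hAneg : ∀ k ∈ A, L k (η x₀) < 0 := by
      intro k hk
      exact hin x₀ ⟨hxF, k₀, hk₀⟩ k (by simpa [hA] using hk)
    -- constant c
    set c : ℝ := (A.inf' hAne (fun k => -(L k (η x₀)))) / 2 with hc
    have hcpos : 0 < c := by
      have : 0 < A.inf' hAne (fun k => -(L k (η x₀))) := by
        rw [Finset.lt_inf'_iff]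
        intro k hk
        linarith [hAneg k hk]
      positivity
    have hcA : ∀ k ∈ A, L k (η x₀) < -c := by
      intro k hk
      have h1 : A.inf' hAne (fun k => -(L k (η x₀))) ≤ -(L k (η x₀)) :=
        Finset.inf'_le _ hk
      simp only [hc]
      linarith
    -- constant M
    haveI hKne : Nonempty K := ⟨k₀⟩
    set M : ℝ := 1 + (Finset.univ.sup' (Finset.univ_nonempty) (fun k => |L k (η x₀)|)) with hM
    have hMpos : 0 < M := by
      have : 0 ≤ Finset.univ.sup' (Finset.univ_nonempty) (fun k : K => |L k (η x₀)|) := by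
        exact le_trans (abs_nonneg (L k₀ (η x₀)))
          (Finset.le_sup' (fun k => |L k (η x₀)|) (Finset.mem_univ k₀))
      simp only [hM]; linarith
    have hMbound : ∀ k, |L k (η x₀)| < M := by
      intro k
      have : |L k (η x₀)| ≤ Finset.univ.sup' (Finset.univ_nonempty) (fun k => |L k (η x₀)|) :=
        Finset.le_sup' (fun k => |L k (η x₀)|) (Finset.mem_univ k)
      simp only [hM]; linarith
    -- constant r
    set B : Finset K := Finset.univ \ A with hB
    set r : ℝ := if hB' : B.Nonempty then (B.inf' hB' (fun k => 1 - L k x₀)) / 2 else 1 with hr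
    have hBlt : ∀ k ∈ B, L k x₀ < 1 := by
      intro k hk
      have hk' : ¬ (L k x₀ = 1) := by
        simp only [hB, Finset.mem_sdiff, hA, Finset.mem_filter, Finset.mem_univ,
          true_and] at hk
        exact hk
      exact lt_of_le_of_ne (hxF k) hk'
    have hrpos : 0 < r := by
      rw [hr]
      split_ifs with hB'
      · have : 0 < B.inf' hB' (fun k => 1 - L k x₀) := by
          rw [Finset.lt_inf'_iff]
          intro k hk; linarith [hBlt k hk]
        positivity
      · norm_num
    have hrB : ∀ k ∈ B, r < 1 - L k x₀ := by
      intro k hk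
      have hB' : B.Nonempty := ⟨k, hk⟩
      have h1 : B.inf' hB' (fun k => 1 - L k x₀) ≤ 1 - L k x₀ := Finset.inf'_le _ hk
      have h2 : 0 < B.inf' hB' (fun k => 1 - L k x₀) := by
        rw [Finset.lt_inf'_iff]; intro j hj; linarith [hBlt j hj]
      rw [hr]; rw [dif_pos hB']
      linarith
    -- constant δ
    set n : ℝ := (Fintype.card K : ℝ) with hn
    have hnpos : 0 < n := by
      simp only [hn]
      exact_mod_cast Fintype.card_pos_iff.mpr hKne
    set δ : ℝ := c * r / (2 * n * M) with hδ
    have hδpos : 0 < δ := by positivity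
    clear_value c M r n δ
    -- the neighborhood
    set V : Set (EuclideanSpace ℝ (Fin ℓ)) :=
      ((⋂ k ∈ A, (U ∩ (fun x => L k (η x)) ⁻¹' Set.Iio (-c)))
        ∩ (⋂ k : K, U ∩ (fun x => L k (η x)) ⁻¹' Set.Ioo (-M) M))
      ∩ ((⋂ k ∈ B, (LinearMap.toContinuousLinearMap (L k)) ⁻¹' Set.Iio (1 - r))
         ∩ (LinearMap.toContinuousLinearMap (L k₀)) ⁻¹' Set.Ioi (1 - δ)) with hV
    have hcont : ∀ k : K, ContinuousOn (fun x => L k (η x)) U := by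
      intro k
      exact (LinearMap.toContinuousLinearMap (L k)).continuous.comp_continuousOn hηc
    have hVopen : IsOpen V := by
      refine IsOpen.inter (IsOpen.inter ?_ ?_) (IsOpen.inter ?_ ?_)
      · exact isOpen_biInter_finset fun k _ =>
          (hcont k).isOpen_inter_preimage hU isOpen_Iio
      · exact isOpen_iInter_of_finite fun k =>
          (hcont k).isOpen_inter_preimage hU isOpen_Ioo
      · exact isOpen_biInter_finset fun k _ =>
          isOpen_Iio.preimage (LinearMap.toContinuousLinearMap (L k)).continuous
      · exact (isOpen_Ioi).preimage (LinearMap.toContinuousLinearMap (L k₀)).continuous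
    have hx₀V : x₀ ∈ V := by
      refine ⟨⟨?_, ?_⟩, ?_, ?_⟩
      · simp only [Set.mem_iInter, Set.mem_inter_iff, Set.mem_preimage, Set.mem_Iio]
        intro k hk
        exact ⟨hx₀U, hcA k hk⟩
      · simp only [Set.mem_iInter, Set.mem_inter_iff, Set.mem_preimage, Set.mem_Ioo]
        intro k
        exact ⟨hx₀U, abs_lt.mp (hMbound k)⟩
      · simp only [Set.mem_iInter, Set.mem_preimage, Set.mem_Iio,
          LinearMap.coe_toContinuousLinearMap']
        intro k hk
        linarith [hrB k hk]
      · simp only [Set.mem_preimage, Set.mem_Ioi, LinearMap.coe_toContinuousLinearMap', hk₀]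
        linarith
    have hVU : V ⊆ U := by
      intro x hx
      have := hx.1.2
      simp only [Set.mem_iInter, Set.mem_inter_iff] at this
      exact (this k₀).1
    refine ⟨V, hVopen, hx₀V, hVU, ?_⟩
    -- the estimate
    rintro x ⟨⟨hx1, hx2⟩, hx3, hx4⟩ hint
    simp only [Set.mem_iInter, Set.mem_inter_iff, Set.mem_preimage, Set.mem_Iio, Set.mem_Ioo,
      Set.mem_Ioi, LinearMap.coe_toContinuousLinearMap'] at hx1 hx2 hx3 hx4
    have hx1 : ∀ k ∈ A, L k (η x) < -c := fun k hk => (hx1 k hk).2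
    have hx2 : ∀ k : K, -M < L k (η x) ∧ L k (η x) < M := fun k => (hx2 k).2
    have hεpos : ∀ k, 0 < 1 - L k x := fun k => by linarith [hint k]
    have hPpos0 : 0 < ∏ j ∈ Finset.univ.erase k₀, (1 - L j x) :=
      Finset.prod_pos fun j _ => hεpos j
    obtain ⟨P, hP⟩ : ∃ P : ℝ, P = ∏ j ∈ Finset.univ.erase k₀, (1 - L j x) := ⟨_, rfl⟩
    have hPpos : 0 < P := hP ▸ hPpos0
    -- term k₀
    have ht0 : (∏ j ∈ Finset.univ.erase k₀, (1 - L j x)) * L k₀ (η x) ≤ -(c * P) := by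
      have h1 : L k₀ (η x) < -c := hx1 k₀ hk₀A
      rw [← hP]
      have := mul_lt_mul_of_pos_left h1 hPpos
      linarith [this]
    -- bound on other terms
    have htk : ∀ k ∈ Finset.univ.erase k₀,
        (∏ j ∈ Finset.univ.erase k, (1 - L j x)) * L k (η x) ≤ P * δ * M / r := by
      intro k hk
      obtain ⟨Ck, hCk⟩ : ∃ Ck : ℝ, Ck = ∏ j ∈ Finset.univ.erase k, (1 - L j x) := ⟨_, rfl⟩
      have hCkpos : 0 < Ck := hCk ▸ Finset.prod_pos (fun j _ => hεpos j)
      rw [← hCk]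
      by_cases hkA : k ∈ A
      · have h1 : L k (η x) < -c := hx1 k hkA
        have h2 : (0:ℝ) ≤ P * δ * M / r := by positivity
        have h3 : Ck * L k (η x) < 0 := mul_neg_of_pos_of_neg hCkpos (by linarith)
        linarith
      · have hkB : k ∈ B := by simp [hB, hkA]
        have hεk : r < 1 - L k x := by linarith [hx3 k hkB]
        have hεk₀ : 1 - L k₀ x < δ := by linarith [hx4]
        have hprod : Ck * (1 - L k x) = P * (1 - L k₀ x) := by
          rw [hCk, hP,
            mul_comm (∏ j ∈ Finset.univ.erase k, (1 - L j x)) (1 - L k x),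
            mul_comm (∏ j ∈ Finset.univ.erase k₀, (1 - L j x)) (1 - L k₀ x),
            Finset.mul_prod_erase Finset.univ (fun j => 1 - L j x) (Finset.mem_univ k),
            Finset.mul_prod_erase Finset.univ (fun j => 1 - L j x) (Finset.mem_univ k₀)]
        have hCkle : Ck ≤ P * δ / r := by
          rw [le_div_iff₀ hrpos]
          have h1 : Ck * r ≤ Ck * (1 - L k x) :=
            mul_le_mul_of_nonneg_left (le_of_lt hεk) (le_of_lt hCkpos)
          have h2 : P * (1 - L k₀ x) ≤ P * δ :=
            mul_le_mul_of_nonneg_left (le_of_lt hεk₀) (le_of_lt hPpos)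
          linarith [hprod]
        have hLb : L k (η x) ≤ M := le_of_lt (hx2 k).2
        calc Ck * L k (η x)
            ≤ Ck * M := mul_le_mul_of_nonneg_left hLb (le_of_lt hCkpos)
          _ ≤ (P * δ / r) * M := mul_le_mul_of_nonneg_right hCkle (le_of_lt hMpos)
          _ = P * δ * M / r := by ring
    -- sum it up
    have hsplit : (∑ k : K, (∏ j ∈ Finset.univ.erase k, (1 - L j x)) * L k (η x))
        = (∏ j ∈ Finset.univ.erase k₀, (1 - L j x)) * L k₀ (η x)
          + ∑ k ∈ Finset.univ.erase k₀,
              (∏ j ∈ Finset.univ.erase k, (1 - L j x)) * L k (η x) := by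
      rw [← Finset.add_sum_erase _ _ (Finset.mem_univ k₀)]
    have hsum2 : (∑ k ∈ Finset.univ.erase k₀,
        (∏ j ∈ Finset.univ.erase k, (1 - L j x)) * L k (η x))
        ≤ n * (P * δ * M / r) := by
      calc (∑ k ∈ Finset.univ.erase k₀,
          (∏ j ∈ Finset.univ.erase k, (1 - L j x)) * L k (η x))
          ≤ ∑ k ∈ Finset.univ.erase k₀, (P * δ * M / r) := Finset.sum_le_sum htk
        _ = ((Finset.univ.erase k₀).card : ℝ) * (P * δ * M / r) := by
            rw [Finset.sum_const, nsmul_eq_mul]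
        _ ≤ n * (P * δ * M / r) := by
            have h1 : ((Finset.univ.erase k₀).card : ℝ) ≤ n := by
              simp only [hn]
              exact_mod_cast Finset.card_le_card (Finset.subset_univ _)
            have h2 : (0:ℝ) ≤ P * δ * M / r := by positivity
            exact mul_le_mul_of_nonneg_right h1 h2
    have hr0 : r ≠ 0 := ne_of_gt hrpos
    have hn0 : n ≠ 0 := ne_of_gt hnpos
    have hM0 : M ≠ 0 := ne_of_gt hMpos
    have hδeq : n * (P * δ * M / r) = c * P / 2 := by
      rw [hδ]
      field_simp
    rw [hδeq] at hsum2
    have hcP : 0 < c * P := mul_pos hcpos hPpos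
    rw [hsplit]
    linarith [ht0, hsum2]
  -- assemble W
  choose V hVopen hVmem hVU hVest using key
  set W : Set (EuclideanSpace ℝ (Fin ℓ)) := ⋃ x₀, ⋃ (hx₀ : x₀ ∈ polyBdry L), V x₀ hx₀ with hW
  refine ⟨W, ?_, ?_, ?_, h, ?_, ?_, ?_⟩
  · exact isOpen_iUnion fun x₀ => isOpen_iUnion fun hx₀ => hVopen x₀ hx₀
  · intro x hx
    exact Set.mem_iUnion.mpr ⟨x, Set.mem_iUnion.mpr ⟨hx, hVmem x hx⟩⟩
  · intro x hx
    obtain ⟨_, ⟨x₀, rfl⟩, hx'⟩ := hx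
    obtain ⟨_, ⟨hx₀, rfl⟩, hx''⟩ := hx'
    exact hVU x₀ hx₀ hx''
  · -- smoothness
    have : ContDiff ℝ (⊤ : ℕ∞) h := by
      apply contDiff_const.sub
      apply contDiff_prod
      intro k _
      exact contDiff_const.sub (LinearMap.toContinuousLinearMap (L k)).contDiff
    exact this.contDiffOn
  · -- h = 1 on boundary
    rintro x ⟨hxF, k, hk⟩
    have : (∏ j : K, (1 - L j x)) = 0 :=
      Finset.prod_eq_zero (Finset.mem_univ k) (by rw [hk]; ring)
    simp [hh, this]
  · -- derivative estimate
    rintro x hx hint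
    obtain ⟨_, ⟨x₀, rfl⟩, hx'⟩ := hx
    obtain ⟨_, ⟨hx₀, rfl⟩, hx''⟩ := hx'
    rw [(hder x).fderiv, hDval x]
    exact hVest x₀ hx₀ x hx'' hint
end
end

section
/- Fix an integer ℓ ≥ 1, real numbers R > 0 and α < γ, and let B = {x ∈ ℝ^ℓ : ‖x‖ ≤ R}. Define ζ : ℝ^ℓ → ℝ by ζ(x) = α + (γ − α)·‖x‖²/R². Let U ⊆ ℝ^ℓ be an open set containing the sphere {‖x‖ = R}, let 0 < R̃ < R₁ < R₂ < R be such that {x : R̃ ≤ ‖x‖ ≤ R} ⊆ U, and let f be a smooth function on U such that for every x ∈ U with R̃ ≤ ‖x‖ ≤ R one has f(x) > γ and Df_x(x) > 0. Let ρ̄ : ℝ → ℝ be a smooth weakly monotone increasing function with ρ̄(t) = 0 for t ≤ R₁ and ρ̄(t) = 1 for t ≥ R₂. Define h : B → ℝ by h(x) = ζ(x) if ‖x‖ ≤ R₁, and h(x) = ρ̄(‖x‖)·f(x) + (1 − ρ̄(‖x‖))·ζ(x) if R₁ ≤ ‖x‖ ≤ R (the two formulas agree where both apply). Then: (i) h is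 smooth on B (near every point of B it agrees with a C^∞ function defined on an open subset of ℝ^ℓ); (ii) h(x) = f(x) for all x ∈ B with R₂ ≤ ‖x‖ ≤ R; (iii) h(0) = α; and (iv) for every x with 0 < ‖x‖ < R, the derivative Dh_x is nonzero, so 0 is the unique critical point of h in the open ball {‖x‖ < R}. -/
open Metric Filter

lemma mono_deriv_nonneg' {ρ : ℝ → ℝ} (hρ : Differentiable ℝ ρ) (hm : Monotone ρ) (t : ℝ) :
    0 ≤ deriv ρ t := by
  have hd := (hρ t).hasDerivAt
  rw [hasDerivAt_iff_tendsto_slope] at hd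
  have hsub : Set.Ioi t ⊆ {t}ᶜ := fun s hs => (ne_of_gt hs)
  have hd' := hd.mono_left (nhdsWithin_mono t hsub)
  refine ge_of_tendsto hd' ?_
  filter_upwards [self_mem_nhdsWithin] with s hs
  have h1 : t < s := hs
  simp only [slope_def_field, div_eq_mul_inv]
  exact mul_nonneg (sub_nonneg.2 (hm h1.le)) (inv_nonneg.2 (sub_nonneg.2 h1.le))

set_option maxHeartbeats 1000000 in
/-- **Lemma A.9 (properties of combination).**  Fix `ℓ ≥ 1`, `R > 0`, `α < γ`, and let
`B` be the closed ball of radius `R` in `ℝ^ℓ`.  Let `ζ x = α + (γ-α)‖x‖²/R²`, let `U`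
be an open set containing the sphere of radius `R`, let `0 < R̃ < R₁ < R₂ < R` with the
annulus `{R̃ ≤ ‖x‖ ≤ R} ⊆ U`, and let `f` be smooth on `U` with `f > γ` and
`Df_x(x) > 0` on the annulus.  Let `ρ̄` be a smooth weakly monotone increasing cutoff,
`0` on `(-∞,R₁]` and `1` on `[R₂,∞)`.  Then the function `h`, equal to `ζ` for
`‖x‖ ≤ R₁` and to `ρ̄(‖x‖)·f + (1-ρ̄(‖x‖))·ζ` for `R₁ ≤ ‖x‖ ≤ R`, is smooth on `B`,
agrees with `f` for `R₂ ≤ ‖x‖ ≤ R`, satisfies `h 0 = α`, and has no critical point in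
the open ball other than `0`. -/
theorem patching_has_unique_interior_critical_point
    {ℓ : ℕ} (hℓ : 1 ≤ ℓ) (R α γ : ℝ) (hR : 0 < R) (hαγ : α < γ)
    (U : Set (EuclideanSpace ℝ (Fin ℓ))) (hU : IsOpen U)
    (hsphere : Metric.sphere (0 : EuclideanSpace ℝ (Fin ℓ)) R ⊆ U)
    (Rt R₁ R₂ : ℝ) (h0Rt : 0 < Rt) (hRtR₁ : Rt < R₁) (hR₁R₂ : R₁ < R₂) (hR₂R : R₂ < R)
    (hann : {x : EuclideanSpace ℝ (Fin ℓ) | Rt ≤ ‖x‖ ∧ ‖x‖ ≤ R} ⊆ U)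
    (f : EuclideanSpace ℝ (Fin ℓ) → ℝ) (hf : ContDiffOn ℝ (⊤ : ℕ∞) f U)
    (hfγ : ∀ x ∈ U, Rt ≤ ‖x‖ → ‖x‖ ≤ R → γ < f x)
    (hfrad : ∀ x ∈ U, Rt ≤ ‖x‖ → ‖x‖ ≤ R → 0 < fderiv ℝ f x x)
    (ρ : ℝ → ℝ) (hρ : ContDiff ℝ (⊤ : ℕ∞) ρ) (hρmono : Monotone ρ)
    (hρ0 : ∀ t : ℝ, t ≤ R₁ → ρ t = 0) (hρ1 : ∀ t : ℝ, R₂ ≤ t → ρ t = 1)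
    (ζ h : EuclideanSpace ℝ (Fin ℓ) → ℝ)
    (hζdef : ∀ x, ζ x = α + (γ - α) * ‖x‖ ^ 2 / R ^ 2)
    (hhdef : ∀ x : EuclideanSpace ℝ (Fin ℓ),
      (‖x‖ ≤ R₁ → h x = ζ x) ∧
      (R₁ ≤ ‖x‖ → ‖x‖ ≤ R → h x = ρ ‖x‖ * f x + (1 - ρ ‖x‖) * ζ x)) :
    (∀ x ∈ Metric.closedBall (0 : EuclideanSpace ℝ (Fin ℓ)) R,
      ∃ V : Set (EuclideanSpace ℝ (Fin ℓ)), IsOpen V ∧ x ∈ V ∧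
        ∃ g : EuclideanSpace ℝ (Fin ℓ) → ℝ, ContDiffOn ℝ (⊤ : ℕ∞) g V ∧
          ∀ y ∈ V ∩ Metric.closedBall (0 : EuclideanSpace ℝ (Fin ℓ)) R, h y = g y) ∧
    (∀ x : EuclideanSpace ℝ (Fin ℓ), R₂ ≤ ‖x‖ → ‖x‖ ≤ R → h x = f x) ∧
    h 0 = α ∧
    ∀ x : EuclideanSpace ℝ (Fin ℓ), 0 < ‖x‖ → ‖x‖ < R → fderiv ℝ h x ≠ 0 := by
  classical
  -- the explicit formula for ζ as a globally smooth function
  set z : EuclideanSpace ℝ (Fin ℓ) → ℝ :=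
    fun y => α + (γ - α) * ‖y‖ ^ 2 / R ^ 2 with hzdef
  have hζz : ζ = z := funext hζdef
  have hzz : z = fun y => α + ((γ - α) / R ^ 2) * ‖y‖ ^ 2 := by
    funext y; simp only [hzdef]; ring
  have hzsmooth : ContDiff ℝ (⊤ : ℕ∞) z := by
    rw [hzz]
    exact contDiff_const.add (contDiff_const.mul (contDiff_norm_sq ℝ))
  -- ρ bounds
  have hρ01 : ∀ t, R₁ ≤ t → 0 ≤ ρ t ∧ ρ t ≤ 1 := by
    intro t ht
    constructor
    · have := hρmono ht
      rwa [hρ0 R₁ le_rfl] at this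
    · rcases le_total t R₂ with h' | h'
      · have := hρmono h'
        rwa [hρ1 R₂ le_rfl] at this
      · exact (hρ1 t h').le
  -- the combined explicit formula, valid on the annulus Rt < ‖y‖ ≤ R
  set g : EuclideanSpace ℝ (Fin ℓ) → ℝ :=
    fun y => ρ ‖y‖ * f y + (1 - ρ ‖y‖) * z y with hgdef
  have hgagree : ∀ y : EuclideanSpace ℝ (Fin ℓ), Rt < ‖y‖ → ‖y‖ ≤ R → h y = g y := by
    intro y hy1 hy2
    rcases le_total ‖y‖ R₁ with h' | h'
    · rw [(hhdef y).1 h', hζz]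
      simp [hgdef, hρ0 ‖y‖ h']
    · rw [(hhdef y).2 h' hy2, hζz]
  clear_value z g
  -- Part (ii)
  have part2 : ∀ x : EuclideanSpace ℝ (Fin ℓ), R₂ ≤ ‖x‖ → ‖x‖ ≤ R → h x = f x := by
    intro x hx1 hx2
    rw [(hhdef x).2 (le_trans hR₁R₂.le hx1) hx2, hρ1 ‖x‖ hx1]
    ring
  -- Part (iii)
  have part3 : h 0 = α := by
    have h0 := (hhdef 0).1 (by simp; linarith)
    rw [h0, hζdef]
    simp
  refine ⟨?_, part2, part3, ?_⟩
  · -- Part (i): local smoothness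
    intro x hx
    rw [Metric.mem_closedBall, dist_zero_right] at hx
    rcases lt_or_ge ‖x‖ R₁ with hcase | hcase
    · refine ⟨Metric.ball 0 R₁, Metric.isOpen_ball, by simpa [Metric.mem_ball, dist_zero_right], z,
        hzsmooth.contDiffOn, ?_⟩
      rintro y ⟨hy, -⟩
      rw [Metric.mem_ball, dist_zero_right] at hy
      rw [(hhdef y).1 hy.le, hζz]
    · refine ⟨U ∩ {y : EuclideanSpace ℝ (Fin ℓ) | Rt < ‖y‖},
        hU.inter (isOpen_lt continuous_const continuous_norm),
        ⟨hann ⟨le_trans hRtR₁.le hcase, hx⟩, lt_of_lt_of_le hRtR₁ hcase⟩, g, ?_, ?_⟩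
      · -- smoothness of g on the open set
        have hρnorm : ContDiffOn ℝ (⊤ : ℕ∞) (fun y : EuclideanSpace ℝ (Fin ℓ) => ρ ‖y‖)
            (U ∩ {y : EuclideanSpace ℝ (Fin ℓ) | Rt < ‖y‖}) := by
          intro y hy
          have h2 : Rt < ‖y‖ := hy.2
          have hy0 : y ≠ 0 := norm_pos_iff.1 (h0Rt.trans h2)
          exact ((hρ.contDiffAt).comp y (contDiffAt_norm ℝ hy0)).contDiffWithinAt
        rw [hgdef]
        exact (hρnorm.mul (hf.mono Set.inter_subset_left)).add
          ((contDiffOn_const.sub hρnorm).mul hzsmooth.contDiffOn)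
      · rintro y ⟨⟨-, hy1⟩, hy2⟩
        rw [Metric.mem_closedBall, dist_zero_right] at hy2
        exact hgagree y hy1 hy2
  · -- Part (iv): no interior critical points other than 0
    intro x hx0 hxR
    have hxne : x ≠ 0 := norm_pos_iff.1 hx0
    have hq : HasFDerivAt (fun y : EuclideanSpace ℝ (Fin ℓ) => ‖y‖ ^ 2)
        ((2 : ℝ) • (innerSL ℝ x)) x := by
      have hq0 := (hasStrictFDerivAt_norm_sq x).hasFDerivAt
      convert hq0 using 1
      all_goals ext v
      all_goals simp
    have hzx : HasFDerivAt z (((γ - α) / R ^ 2) • ((2 : ℝ) • (innerSL ℝ x))) x := by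
      rw [hzz]
      exact (hq.const_mul ((γ - α) / R ^ 2)).const_add α
    rcases lt_or_ge ‖x‖ R₁ with hcase | hcase
    · -- h = z near x; fderiv h x x = 2(γ-α)‖x‖²/R² > 0
      have hev : h =ᶠ[nhds x] z := by
        refine Filter.eventuallyEq_of_mem (Metric.isOpen_ball.mem_nhds
          (by simpa [Metric.mem_ball, dist_zero_right] using hcase) :
            Metric.ball (0 : EuclideanSpace ℝ (Fin ℓ)) R₁ ∈ nhds x) ?_
        intro y hy
        rw [Metric.mem_ball, dist_zero_right] at hy
        rw [(hhdef y).1 hy.le, hζz]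
      have hfd : fderiv ℝ h x = ((γ - α) / R ^ 2) • ((2 : ℝ) • (innerSL ℝ x)) := by
        rw [hev.fderiv_eq, hzx.fderiv]
      have hpos : 0 < fderiv ℝ h x x := by
        rw [hfd]
        simp only [ContinuousLinearMap.smul_apply, smul_eq_mul, innerSL_apply_apply,
          real_inner_self_eq_norm_sq]
        have hγα : 0 < γ - α := by linarith
        positivity
      intro hzero
      rw [hzero] at hpos
      simp at hpos
    · -- annulus case
      have hxU : x ∈ U := hann ⟨le_trans hRtR₁.le hcase, hxR.le⟩
      have hxRt : Rt < ‖x‖ := lt_of_lt_of_le hRtR₁ hcase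
      -- h = g near x
      have hev : h =ᶠ[nhds x] g := by
        have hopen : IsOpen ({y : EuclideanSpace ℝ (Fin ℓ) | Rt < ‖y‖} ∩
            {y : EuclideanSpace ℝ (Fin ℓ) | ‖y‖ < R}) :=
          (isOpen_lt continuous_const continuous_norm).inter
            (isOpen_lt continuous_norm continuous_const)
        refine Filter.eventuallyEq_of_mem (hopen.mem_nhds ⟨hxRt, hxR⟩) ?_
        rintro y ⟨hy1, hy2⟩
        exact hgagree y hy1 (le_of_lt hy2)
      -- derivatives of the pieces
      have hq0 : (‖x‖ ^ 2 : ℝ) ≠ 0 := by positivity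
      have hnorm : HasFDerivAt (fun y : EuclideanSpace ℝ (Fin ℓ) => ‖y‖)
          ((1 / (2 * ‖x‖)) • ((2 : ℝ) • (innerSL ℝ x))) x := by
        have hsq := (Real.hasDerivAt_sqrt hq0).comp_hasFDerivAt x hq
        have heq : (fun y : EuclideanSpace ℝ (Fin ℓ) => Real.sqrt (‖y‖ ^ 2)) =
            fun y => ‖y‖ := by
          funext y; exact Real.sqrt_sq (norm_nonneg y)
        rw [Real.sqrt_sq (norm_nonneg x)] at hsq
        simpa [Function.comp_def, heq] using hsq
      have hρn : HasFDerivAt (fun y : EuclideanSpace ℝ (Fin ℓ) => ρ ‖y‖)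
          ((deriv ρ ‖x‖) • ((1 / (2 * ‖x‖)) • ((2 : ℝ) • (innerSL ℝ x)))) x :=
        ((hρ.differentiable (by simp) ‖x‖).hasDerivAt).comp_hasFDerivAt x hnorm
      have hfx : HasFDerivAt f (fderiv ℝ f x) x :=
        ((hf.contDiffAt (hU.mem_nhds hxU)).differentiableAt (by simp)).hasFDerivAt
      have hgx := (hρn.mul hfx).add (((hasFDerivAt_const (1 : ℝ) x).sub hρn).mul hzx)
      rw [hgdef] at hev
      have hfd := hev.fderiv_eq.trans hgx.fderiv
      -- evaluate at x
      have hval : fderiv ℝ h x x =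
          ρ ‖x‖ * fderiv ℝ f x x + (1 - ρ ‖x‖) * ((γ - α) / R ^ 2 * (2 * ‖x‖ ^ 2))
            + (f x - z x) * (deriv ρ ‖x‖ * ‖x‖) := by
        rw [hfd]
        simp only [ContinuousLinearMap.add_apply, ContinuousLinearMap.smul_apply,
          ContinuousLinearMap.sub_apply, ContinuousLinearMap.zero_apply, smul_eq_mul,
          innerSL_apply_apply, real_inner_self_eq_norm_sq, Pi.sub_apply]
        field_simp
        ring
      -- positivity
      have ha := hρ01 ‖x‖ hcase
      have hd : 0 ≤ deriv ρ ‖x‖ := mono_deriv_nonneg' (hρ.differentiable (by simp)) hρmono ‖x‖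
      have hFx : 0 < fderiv ℝ f x x := hfrad x hxU (le_trans hRtR₁.le hcase) hxR.le
      have hfγx : γ < f x := hfγ x hxU (le_trans hRtR₁.le hcase) hxR.le
      have hzlt : z x < γ := by
        have h1 : ‖x‖ ^ 2 < R ^ 2 := by
          have := pow_lt_pow_left₀ hxR (norm_nonneg x) (n := 2) (by norm_num)
          exact this
        have h2 : (γ - α) * ‖x‖ ^ 2 / R ^ 2 < γ - α := by
          rw [div_lt_iff₀ (by positivity)]
          nlinarith
        simp only [hzdef]
        linarith
      have hc : 0 < (γ - α) / R ^ 2 * (2 * ‖x‖ ^ 2) := by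
        have : 0 < γ - α := by linarith
        positivity
      have hthird : 0 ≤ (f x - z x) * (deriv ρ ‖x‖ * ‖x‖) :=
        mul_nonneg (by linarith) (mul_nonneg hd hx0.le)
      have hpos : 0 < fderiv ℝ h x x := by
        rw [hval]
        rcases eq_or_lt_of_le ha.1 with h' | h'
        · rw [← h']
          simp only [zero_mul, sub_zero, one_mul]
          linarith
        · have h1 : 0 < ρ ‖x‖ * fderiv ℝ f x x := mul_pos h' hFx
          have h2 : 0 ≤ (1 - ρ ‖x‖) * ((γ - α) / R ^ 2 * (2 * ‖x‖ ^ 2)) :=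
            mul_nonneg (by linarith [ha.2]) hc.le
          linarith
      intro hzero
      rw [hzero] at hpos
      simp at hpos
end

section
/- Assume the presentation of the compact polytope Δ ⊆ ℝ^n is simple and exact. For I ⊆ {1,…,N} let C_I = {x ∈ ℝ^n : φ_i(x) ≤ λ_i for all i ∈ I} (so C_∅ = ℝ^n; when F_I is a nonempty face of Δ, C_I is the tangent cone of Δ along F_I). Then for every x ∈ ℝ^n, 𝟙_Δ(x) = Σ_{I ⊆ {1,…,N}, F_I ≠ ∅} (−1)^{n−|I|} · 𝟙_{C_I}(x), where 𝟙_S denotes the characteristic function of the set S and the sum is over all subsets I of {1,…,N} for which F_I is nonempty. -/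
/-!
Fix `x` and pick a linear functional `ℓ` that is generic (it lies in no proper subspace spanned
by some of the `φ i`) and, when `x ∉ Δ`, strictly separates `x` from `Δ`.
On each nonempty face `F_I` such an `ℓ` has a unique minimiser, a vertex `v`; writing
`ℓ = ∑ c s • φ s` over the constraints active at `v`, all `c s ≠ 0`, and `v` minimises `ℓ` on
`F_I` exactly when `I` contains `P v = {s | 0 < c s}`. So the index sets `I` with `x ∈ C_I`
attached to `v` form the interval `P v ⊆ I ⊆ act v ∩ {i | φ i x ≤ λ i}`, whose alternating sum
vanishes unless `P v = act v ∩ {i | φ i x ≤ λ i}`. If `x ∉ Δ` that would give `ℓ x ≤ ℓ v`, which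
separation forbids; if `x ∈ Δ` it happens exactly at the vertex maximising `ℓ` on `Δ`. Hence
`∑_{x ∈ C_I} (-1)^|I| = (-1)^n 𝟙_Δ(x)`, and simplicity gives `|I| ≤ n` to fix the signs.
-/

noncomputable section

open Finset Filter Topology
open Submodule (span)

theorem Finset.sum_Icc_neg_one_pow_card {α R : Type*} [DecidableEq α] [Ring R] (P B : Finset α) :
    ∑ I ∈ Icc P B, (-1 : R) ^ #I = if P = B then (-1) ^ #P else 0 := by
  by_cases hPB : P ⊆ B
  · have hdisj : ∀ K ∈ (B \ P).powerset, Disjoint P K := fun K hK =>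
      disjoint_of_subset_right (mem_powerset.1 hK) disjoint_sdiff
    rw [Icc_eq_image_powerset hPB, sum_image fun K hK L hL h => by
      rw [← union_sdiff_cancel_left (hdisj K hK), ← union_sdiff_cancel_left (hdisj L hL)]
      exact congrArg (· \ P) h]
    have hpow : ∑ K ∈ (B \ P).powerset, (-1 : R) ^ #K = if B \ P = ∅ then 1 else 0 := by
      have := congrArg (Int.cast : ℤ → R) (sum_powerset_neg_one_pow_card (x := B \ P))
      push_cast at this
      simpa [apply_ite (Int.cast : ℤ → R)] using this
    rw [sum_congr rfl fun K hK => by rw [card_union_of_disjoint (hdisj K hK), pow_add],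
      ← mul_sum, hpow]
    simp only [sdiff_eq_empty_iff_subset]
    by_cases hBP : B ⊆ P
    · simp [hPB.antisymm hBP]
    · simp [hBP, show P ≠ B by rintro rfl; exact hBP subset_rfl]
  · rw [Icc_eq_empty hPB, sum_empty, if_neg (by rintro rfl; exact hPB subset_rfl)]

section Generic

variable {K E ι : Type*} [Field K] [AddCommGroup E] [Module K E]

def IsGeneric (φ : ι → Module.Dual K E) (ℓ : Module.Dual K E) : Prop :=
  ∀ T : Finset ι, ℓ ∈ span K (φ '' T) → span K (φ '' T) = ⊤

theorem IsGeneric.neg {φ : ι → Module.Dual K E} {ℓ : Module.Dual K E} (h : IsGeneric φ ℓ) :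
    IsGeneric φ (-ℓ) :=
  fun T hT => h T (by simpa using Submodule.neg_mem _ hT)

theorem IsGeneric.coeff_ne_zero {φ : ι → Module.Dual K E} {ℓ : Module.Dual K E}
    (h : IsGeneric φ ℓ) [DecidableEq ι] {S : Finset ι} (hind : LinearIndepOn K φ S)
    {c : ι → K} (hc : ℓ = ∑ s ∈ S, c s • φ s) {j : ι} (hj : j ∈ S) : c j ≠ 0 := by
  intro hcj
  have hmem : ℓ ∈ span K (φ '' ↑(S.erase j)) := by
    rw [hc, ← sum_erase S (by rw [hcj, zero_smul])]
    exact (Submodule.mem_span_image_finset_iff_exists_fun' K).2 ⟨c, rfl⟩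
  apply hind.notMem_span hj
  rw [← coe_erase, h _ hmem]
  exact Submodule.mem_top

theorem exists_isGeneric [Infinite K] [Finite ι] (φ : ι → Module.Dual K E) :
    ∃ g, IsGeneric φ g := by
  let p (T : {T : Finset ι // span K (φ '' T) ≠ ⊤}) : Submodule K (Module.Dual K E) :=
    span K (φ '' T.1)
  have hproper : ⋃ T, (p T : Set (Module.Dual K E)) ≠ Set.univ := fun hcover => by
    obtain ⟨T, hT⟩ := Subspace.exists_eq_top_of_iUnion_eq_univ hcover
    exact T.2 hT
  obtain ⟨g, hg⟩ := (Set.ne_univ_iff_exists_notMem _).1 hproper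
  refine ⟨g, fun T hT => ?_⟩
  by_contra hne
  exact hg (Set.mem_iUnion.2 ⟨⟨T, hne⟩, hT⟩)

/-- A line through a generic direction meets each proper span at most once. -/
theorem IsGeneric.finite_setOf_not_isGeneric_add_smul [Finite ι] {φ : ι → Module.Dual K E}
    {g : Module.Dual K E} (hg : IsGeneric φ g) (f : Module.Dual K E) :
    {t : K | ¬IsGeneric φ (f + t • g)}.Finite := by
  refine (Set.finite_iUnion fun T : Finset ι =>
    Set.Subsingleton.finite (s := {t : K | f + t • g ∈ span K (φ '' T) ∧ span K (φ '' T) ≠ ⊤})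
      ?_).subset fun t ht => ?_
  · rintro t₁ ⟨ht₁, hT⟩ t₂ ⟨ht₂, -⟩
    by_contra hne
    have hdiff : (t₁ - t₂) • g ∈ span K (φ '' T) := by
      rw [show (t₁ - t₂) • g = (f + t₁ • g) - (f + t₂ • g) by module]
      exact Submodule.sub_mem _ ht₁ ht₂
    exact hT (hg T ((Submodule.smul_mem_iff _ (sub_ne_zero.2 hne)).1 hdiff))
  · simp only [IsGeneric, not_forall] at ht
    obtain ⟨T, hT, hne⟩ := ht
    exact Set.mem_iUnion.2 ⟨T, hT, hne⟩

theorem eq_of_span_image_eq_top {φ : ι → Module.Dual K E} {S : Set ι}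
    (hS : span K (φ '' S) = ⊤) {y z : E} (h : ∀ s ∈ S, φ s y = φ s z) : y = z :=
  Module.eval_apply_injective K <| LinearMap.ext_on hS <| by
    rintro _ ⟨s, hs, rfl⟩
    exact h s hs

theorem exists_eq_sum_smul_of_span_eq_top {M : Type*} [AddCommGroup M] [Module K M] {v : ι → M}
    {S : Finset ι} (hS : span K (v '' S) = ⊤) (x : M) : ∃ c : ι → K, x = ∑ s ∈ S, c s • v s :=
  ((Submodule.mem_span_image_finset_iff_exists_fun' K).1 (hS ▸ Submodule.mem_top)).imp
    fun _ hc => hc.symm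

theorem exists_apply_eq_ite [FiniteDimensional K E] [DecidableEq ι] {φ : ι → Module.Dual K E}
    {S : Finset ι} (hind : LinearIndepOn K φ S) (hS : span K (φ '' S) = ⊤) {j : ι} (hj : j ∈ S) :
    ∃ u : E, ∀ s ∈ S, φ s u = if s = j then 1 else 0 := by
  have hsp : ⊤ ≤ span K (Set.range fun s : (S : Set ι) => φ s) := by
    rw [← Set.image_eq_range, hS]
  let b := Module.Basis.mk hind hsp
  refine ⟨(Module.evalEquiv K E).symm (b.dualBasis ⟨j, mem_coe.2 hj⟩), fun s hs => ?_⟩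
  have hb : φ s = b ⟨s, mem_coe.2 hs⟩ := by simp [b]
  rw [Module.apply_evalEquiv_symm_apply, hb, Module.Basis.dualBasis_apply_self]
  simp [Subtype.ext_iff, eq_comm]

end Generic

theorem exists_isGeneric_forall_lt {E ι : Type*} [NormedAddCommGroup E] [NormedSpace ℝ E]
    [FiniteDimensional ℝ E] [Finite ι] (φ : ι → Module.Dual ℝ E) {C : Set E} (hC : IsCompact C)
    (hconv : Convex ℝ C) {x : E} (hx : x ∉ C) :
    ∃ ℓ, IsGeneric φ ℓ ∧ ∀ y ∈ C, ℓ y < ℓ x := by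
  obtain ⟨f, u, hfu, hux⟩ := geometric_hahn_banach_closed_point hconv hC.isClosed hx
  obtain ⟨g, hg⟩ := exists_isGeneric φ
  obtain ⟨M, hM⟩ := hC.bddAbove_image (LinearMap.continuous_of_finiteDimensional g).continuousOn
  -- a small enough multiple of `g` does not spoil the strict separation by `f`
  have hδ : 0 < (f x - u) / (|M - g x| + 1) := div_pos (by linarith) (by positivity)
  obtain ⟨t, ⟨ht₀, htδ⟩, htg⟩ :=
    ((Set.Ioo_infinite hδ).sdiff (hg.finite_setOf_not_isGeneric_add_smul f.toLinearMap)).nonempty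
  refine ⟨f.toLinearMap + t • g, not_not.1 htg, fun y hy => ?_⟩
  have hgy : t * (g y - g x) ≤ t * |M - g x| :=
    mul_le_mul_of_nonneg_left ((sub_le_sub_right (hM ⟨y, hy, rfl⟩) _).trans (le_abs_self _))
      ht₀.le
  have htM : t * (|M - g x| + 1) < f x - u := (lt_div_iff₀ (by positivity)).1 htδ
  have := hfu y hy
  simp only [LinearMap.add_apply, ContinuousLinearMap.coe_coe, LinearMap.smul_apply, smul_eq_mul]
  nlinarith

section Polytope

variable {n N : ℕ} (φ : Fin N → ((Fin n → ℝ) →ₗ[ℝ] ℝ)) (lam : Fin N → ℝ)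

def activeSet (y : Fin n → ℝ) : Finset (Fin N) := {i | φ i y = lam i}

def satisfiedSet (x : Fin n → ℝ) : Finset (Fin N) := {i | φ i x ≤ lam i}

open Classical in
/-- The index sets `I` with `F_I` nonempty and `x ∈ C_I`. -/
def coneFaces (x : Fin n → ℝ) : Finset (Finset (Fin N)) :=
  {I | (polyFace φ lam I).Nonempty ∧ I ⊆ satisfiedSet φ lam x}

def IsVertex (v : Fin n → ℝ) : Prop :=
  v ∈ polyDelta φ lam ∧ span ℝ (φ '' activeSet φ lam v) = ⊤

def MinimizesOnFaces (ℓ : (Fin n → ℝ) →ₗ[ℝ] ℝ) (m : Finset (Fin N) → Fin n → ℝ) : Prop :=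
  ∀ I, (polyFace φ lam I).Nonempty → m I ∈ polyFace φ lam I ∧ IsMinOn ℓ (polyFace φ lam I) (m I)

variable {φ lam}

@[simp]
theorem mem_activeSet {y : Fin n → ℝ} {i : Fin N} : i ∈ activeSet φ lam y ↔ φ i y = lam i := by
  simp [activeSet]

@[simp]
theorem mem_satisfiedSet {x : Fin n → ℝ} {i : Fin N} :
    i ∈ satisfiedSet φ lam x ↔ φ i x ≤ lam i := by
  simp [satisfiedSet]

theorem mem_coneFaces {x : Fin n → ℝ} {I : Finset (Fin N)} :
    I ∈ coneFaces φ lam x ↔ (polyFace φ lam I).Nonempty ∧ I ⊆ satisfiedSet φ lam x := by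
  simp [coneFaces]

theorem satisfiedSet_eq_univ {x : Fin n → ℝ} (hx : x ∈ polyDelta φ lam) :
    satisfiedSet φ lam x = univ :=
  eq_univ_of_forall fun i => mem_satisfiedSet.2 (hx i)

theorem polyFace_empty : polyFace φ lam ∅ = polyDelta φ lam := by
  simp [polyFace]

theorem isMinOn_neg_polyFace_empty_iff {ℓ : (Fin n → ℝ) →ₗ[ℝ] ℝ} {v : Fin n → ℝ} :
    IsMinOn (-ℓ) (polyFace φ lam ∅) v ↔ IsMaxOn ℓ (polyDelta φ lam) v := by
  simp [polyFace_empty, isMinOn_iff, isMaxOn_iff]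

theorem subset_activeSet {I : Finset (Fin N)} {y : Fin n → ℝ} (hy : y ∈ polyFace φ lam I) :
    I ⊆ activeSet φ lam y :=
  fun i hi => mem_activeSet.2 (hy.2 i hi)

theorem mem_polyFace_of_subset_activeSet {I : Finset (Fin N)} {y : Fin n → ℝ}
    (hy : y ∈ polyDelta φ lam) (hI : I ⊆ activeSet φ lam y) : y ∈ polyFace φ lam I :=
  ⟨hy, fun _ hi => mem_activeSet.1 (hI hi)⟩

variable (φ lam) in
theorem convex_polyDelta : Convex ℝ (polyDelta φ lam) := by
  rw [polyDelta, Set.ofPred_forall]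
  exact convex_iInter fun i => convex_halfSpace_le (φ i).isLinear _

theorem isCompact_polyFace (hcpt : IsCompact (polyDelta φ lam)) (I : Finset (Fin N)) :
    IsCompact (polyFace φ lam I) := by
  refine hcpt.of_isClosed_subset ?_ fun y hy => hy.1
  simp only [polyFace, polyDelta, Set.ofPred_and, Set.ofPred_forall]
  exact (isClosed_iInter fun i => isClosed_le (φ i).continuous_of_finiteDimensional
    continuous_const).inter (isClosed_iInter fun i => isClosed_iInter fun _ =>
      isClosed_eq (φ i).continuous_of_finiteDimensional continuous_const)

theorem SimplePresentation.linearIndepOn_activeSet (h : SimplePresentation φ lam)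
    {y : Fin n → ℝ} (hy : y ∈ polyDelta φ lam) : LinearIndepOn ℝ φ (activeSet φ lam y) := by
  simp only [activeSet, coe_filter, mem_univ, true_and]
  exact h y hy

theorem SimplePresentation.card_le (h : SimplePresentation φ lam) {I : Finset (Fin N)}
    (hI : (polyFace φ lam I).Nonempty) : #I ≤ n := by
  obtain ⟨y, hy⟩ := hI
  calc #I ≤ #(activeSet φ lam y) := card_le_card (subset_activeSet hy)
    _ ≤ n := by
      simpa only [coe_sort_coe, Fintype.card_coe, Subspace.dual_finrank_eq,
        Module.finrank_fin_fun] using (h.linearIndepOn_activeSet hy.1).fintype_card_le_finrank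

theorem SimplePresentation.card_activeSet (h : SimplePresentation φ lam) {y : Fin n → ℝ}
    (hy : y ∈ polyDelta φ lam) (hS : span ℝ (φ '' activeSet φ lam y) = ⊤) :
    #(activeSet φ lam y) = n := by
  have := finrank_span_eq_card (h.linearIndepOn_activeSet hy)
  rw [← Set.image_eq_range, hS, finrank_top, Subspace.dual_finrank_eq,
    Module.finrank_fin_fun] at this
  simpa only [coe_sort_coe, Fintype.card_coe] using this.symm

theorem eventually_add_smul_mem_polyFace {I : Finset (Fin N)} {y u : Fin n → ℝ}
    (hy : y ∈ polyFace φ lam I) (hact : ∀ j ∈ activeSet φ lam y, φ j u ≤ 0)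
    (hI : ∀ i ∈ I, φ i u = 0) : ∀ᶠ ε in 𝓝[>] (0 : ℝ), y + ε • u ∈ polyFace φ lam I := by
  have hle : ∀ i, ∀ᶠ ε in 𝓝[>] (0 : ℝ), φ i y + ε * φ i u ≤ lam i := by
    intro i
    by_cases hi : φ i y = lam i
    · filter_upwards [self_mem_nhdsWithin] with ε (hε : 0 < ε)
      nlinarith [hact i (mem_activeSet.2 hi)]
    · have hlim : Tendsto (fun ε : ℝ => φ i y + ε * φ i u) (𝓝[>] 0) (𝓝 (φ i y)) :=
        ((continuous_const.add (continuous_id.mul continuous_const)).tendsto' 0 _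
          (by simp)).mono_left nhdsWithin_le_nhds
      exact hlim.eventually (eventually_le_nhds ((hy.1 i).lt_of_ne hi))
  filter_upwards [eventually_all.2 hle] with ε hε
  exact ⟨fun i => by simpa using hε i, fun i hi => by simp [hI i hi, hy.2 i hi]⟩

theorem apply_nonneg_of_isMinOn_polyFace {ℓ : (Fin n → ℝ) →ₗ[ℝ] ℝ} {I : Finset (Fin N)}
    {y u : Fin n → ℝ} (hy : y ∈ polyFace φ lam I) (hmin : IsMinOn ℓ (polyFace φ lam I) y)
    (hact : ∀ j ∈ activeSet φ lam y, φ j u ≤ 0) (hI : ∀ i ∈ I, φ i u = 0) : 0 ≤ ℓ u := by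
  obtain ⟨ε, hmem, hε : 0 < ε⟩ :=
    ((eventually_add_smul_mem_polyFace hy hact hI).and self_mem_nhdsWithin).exists
  have := isMinOn_iff.1 hmin _ hmem
  rw [map_add, map_smul, smul_eq_mul] at this
  nlinarith

theorem mem_span_activeSet_of_isMinOn {ℓ : (Fin n → ℝ) →ₗ[ℝ] ℝ} {I : Finset (Fin N)}
    {y : Fin n → ℝ} (hy : y ∈ polyFace φ lam I) (hmin : IsMinOn ℓ (polyFace φ lam I) y) :
    ℓ ∈ span ℝ (φ '' activeSet φ lam y) := by
  rw [Set.image_eq_range]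
  refine mem_span_of_iInf_ker_le_ker fun u hu => ?_
  simp only [Submodule.mem_iInf, LinearMap.mem_ker, Subtype.forall, mem_coe] at hu ⊢
  have hI : ∀ i ∈ I, φ i u = 0 := fun i hi => hu i (subset_activeSet hy hi)
  have hpos := apply_nonneg_of_isMinOn_polyFace hy hmin (fun j hj => (hu j hj).le) hI
  have hneg := apply_nonneg_of_isMinOn_polyFace hy hmin (u := -u)
    (fun j hj => by simp [hu j hj]) fun i hi => by simp [hI i hi]
  rw [map_neg] at hneg
  linarith

theorem sub_eq_sum_mul {ℓ : (Fin n → ℝ) →ₗ[ℝ] ℝ} {S : Finset (Fin N)} {c : Fin N → ℝ}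
    (hc : ℓ = ∑ s ∈ S, c s • φ s) {v : Fin n → ℝ} (hv : ∀ s ∈ S, φ s v = lam s)
    (y : Fin n → ℝ) : ℓ y - ℓ v = ∑ s ∈ S, c s * (φ s y - lam s) := by
  simp only [hc, LinearMap.sum_apply, LinearMap.smul_apply, smul_eq_mul,
    ← sum_sub_distrib, mul_sub]
  exact sum_congr rfl fun s hs => by rw [hv s hs]

theorem mul_sub_nonneg_of_mem_polyFace {c : Fin N → ℝ} {S I : Finset (Fin N)}
    (hP : {s ∈ S | 0 < c s} ⊆ I) {y : Fin n → ℝ} (hy : y ∈ polyFace φ lam I) {s : Fin N}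
    (hs : s ∈ S) : 0 ≤ c s * (φ s y - lam s) := by
  by_cases hsI : s ∈ I
  · simp [hy.2 s hsI]
  · have hcs : c s ≤ 0 := not_lt.1 fun hcs => hsI (hP (mem_filter.2 ⟨hs, hcs⟩))
    exact mul_nonneg_of_nonpos_of_nonpos hcs (sub_nonpos.2 (hy.1 s))

theorem isMinOn_polyFace_iff {ℓ : (Fin n → ℝ) →ₗ[ℝ] ℝ} {v : Fin n → ℝ}
    (hv : IsVertex φ lam v) (hind : LinearIndepOn ℝ φ (activeSet φ lam v)) {c : Fin N → ℝ}
    (hc : ℓ = ∑ s ∈ activeSet φ lam v, c s • φ s) {I : Finset (Fin N)}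
    (hI : I ⊆ activeSet φ lam v) :
    IsMinOn ℓ (polyFace φ lam I) v ↔ {s ∈ activeSet φ lam v | 0 < c s} ⊆ I := by
  have hvI := mem_polyFace_of_subset_activeSet hv.1 hI
  constructor
  · intro hmin j hj
    rw [mem_filter] at hj
    by_contra hjI
    -- moving off the facet `φ j = lam j` decreases `ℓ` at rate `c j`
    obtain ⟨u, hu⟩ := exists_apply_eq_ite hind hv.2 hj.1
    have hdecr := apply_nonneg_of_isMinOn_polyFace hvI hmin (u := -u)
      (fun t ht => by rw [map_neg, hu t ht]; split_ifs <;> norm_num)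
      fun i hi => by rw [map_neg, hu i (hI hi), if_neg (ne_of_mem_of_not_mem hi hjI), neg_zero]
    have hℓu : ℓ (-u) = -c j := by
      simp only [hc, map_neg, LinearMap.sum_apply, LinearMap.smul_apply,
        smul_eq_mul]
      rw [sum_congr rfl fun s hs => by rw [hu s hs]]
      simp [hj.1]
    linarith [hj.2]
  · intro hP y hy
    have hsum := sub_eq_sum_mul hc (fun s hs => mem_activeSet.1 hs) y
    have := sum_nonneg fun s hs => mul_sub_nonneg_of_mem_polyFace hP hy hs
    show ℓ v ≤ ℓ y
    linarith

theorem eq_of_mem_polyFace_of_le {ℓ : (Fin n → ℝ) →ₗ[ℝ] ℝ} {v : Fin n → ℝ}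
    (hS : span ℝ (φ '' activeSet φ lam v) = ⊤) {c : Fin N → ℝ}
    (hc : ℓ = ∑ s ∈ activeSet φ lam v, c s • φ s) (hc₀ : ∀ s ∈ activeSet φ lam v, c s ≠ 0)
    {I : Finset (Fin N)} (hP : {s ∈ activeSet φ lam v | 0 < c s} ⊆ I) {y : Fin n → ℝ}
    (hy : y ∈ polyFace φ lam I) (hle : ℓ y ≤ ℓ v) : y = v := by
  have hterm := fun s (hs : s ∈ activeSet φ lam v) => mul_sub_nonneg_of_mem_polyFace hP hy hs
  have hsum := sub_eq_sum_mul hc (fun s hs => mem_activeSet.1 hs) y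
  have hzero := (sum_eq_zero_iff_of_nonneg hterm).1 (by linarith [sum_nonneg hterm])
  refine eq_of_span_image_eq_top hS fun s hs => ?_
  rw [mem_activeSet.1 hs]
  linarith [sub_eq_zero.1 ((mul_eq_zero.1 (hzero s hs)).resolve_left (hc₀ s hs))]

theorem IsGeneric.isVertex_of_isMinOn {ℓ : (Fin n → ℝ) →ₗ[ℝ] ℝ} (hℓ : IsGeneric φ ℓ)
    {I : Finset (Fin N)} {y : Fin n → ℝ} (hy : y ∈ polyFace φ lam I)
    (hmin : IsMinOn ℓ (polyFace φ lam I) y) : IsVertex φ lam y :=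
  ⟨hy.1, hℓ _ (mem_span_activeSet_of_isMinOn hy hmin)⟩

theorem IsGeneric.eq_of_isMinOn_polyFace {ℓ : (Fin n → ℝ) →ₗ[ℝ] ℝ} (hℓ : IsGeneric φ ℓ)
    (hsimple : SimplePresentation φ lam) {I : Finset (Fin N)} {y z : Fin n → ℝ}
    (hy : y ∈ polyFace φ lam I) (hz : z ∈ polyFace φ lam I)
    (hymin : IsMinOn ℓ (polyFace φ lam I) y) (hzmin : IsMinOn ℓ (polyFace φ lam I) z) :
    y = z := by
  have hv := hℓ.isVertex_of_isMinOn hy hymin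
  have hind := hsimple.linearIndepOn_activeSet hy.1
  obtain ⟨c, hc⟩ := exists_eq_sum_smul_of_span_eq_top hv.2 ℓ
  have hP := (isMinOn_polyFace_iff hv hind hc (subset_activeSet hy)).1 hymin
  exact (eq_of_mem_polyFace_of_le hv.2 hc (fun s hs => hℓ.coeff_ne_zero hind hc hs) hP hz
    (isMinOn_iff.1 hzmin y hy)).symm

theorem filter_coneFaces_eq_Icc {ℓ : (Fin n → ℝ) →ₗ[ℝ] ℝ} (hℓ : IsGeneric φ ℓ)
    (hsimple : SimplePresentation φ lam) {m : Finset (Fin N) → Fin n → ℝ}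
    (hm : MinimizesOnFaces φ lam ℓ m) {v : Fin n → ℝ} (hv : IsVertex φ lam v) {c : Fin N → ℝ}
    (hc : ℓ = ∑ s ∈ activeSet φ lam v, c s • φ s) (x : Fin n → ℝ) :
    {I ∈ coneFaces φ lam x | m I = v} =
      Icc {s ∈ activeSet φ lam v | 0 < c s} (activeSet φ lam v ∩ satisfiedSet φ lam x) := by
  have hind := hsimple.linearIndepOn_activeSet hv.1
  ext I
  simp only [mem_filter, mem_coneFaces, mem_Icc, subset_inter_iff]
  constructor
  · rintro ⟨⟨hne, hIx⟩, rfl⟩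
    obtain ⟨hmem, hmin⟩ := hm I hne
    have hIv := subset_activeSet hmem
    exact ⟨(isMinOn_polyFace_iff hv hind hc hIv).1 hmin, hIv, hIx⟩
  · rintro ⟨hP, hIv, hIx⟩
    have hvI := mem_polyFace_of_subset_activeSet hv.1 hIv
    obtain ⟨hmem, hmin⟩ := hm I ⟨v, hvI⟩
    exact ⟨⟨⟨v, hvI⟩, hIx⟩, hℓ.eq_of_isMinOn_polyFace hsimple hmem hvI hmin
      ((isMinOn_polyFace_iff hv hind hc hIv).2 hP)⟩

theorem sum_filter_coneFaces_eq_zero {ℓ : (Fin n → ℝ) →ₗ[ℝ] ℝ} (hℓ : IsGeneric φ ℓ)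
    (hsimple : SimplePresentation φ lam) {m : Finset (Fin N) → Fin n → ℝ}
    (hm : MinimizesOnFaces φ lam ℓ m) {v : Fin n → ℝ} (hv : IsVertex φ lam v) {x : Fin n → ℝ}
    (hlt : ℓ v < ℓ x) :
    ∑ I ∈ coneFaces φ lam x with m I = v, (-1 : ℝ) ^ #I = 0 := by
  obtain ⟨c, hc⟩ := exists_eq_sum_smul_of_span_eq_top hv.2 ℓ
  rw [filter_coneFaces_eq_Icc hℓ hsimple hm hv hc, sum_Icc_neg_one_pow_card, if_neg]
  intro hPA
  -- then `c s * (φ s x - lam s) ≤ 0` for every active `s`, which puts `x` below `v`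
  have hterm : ∀ s ∈ activeSet φ lam v, c s * (φ s x - lam s) ≤ 0 := by
    intro s hs
    have hiff : 0 < c s ↔ φ s x ≤ lam s := by
      simpa [hs] using congrArg (s ∈ ·) hPA
    by_cases hsx : φ s x ≤ lam s
    · exact mul_nonpos_of_nonneg_of_nonpos (hiff.2 hsx).le (sub_nonpos.2 hsx)
    · exact mul_nonpos_of_nonpos_of_nonneg (not_lt.1 (mt hiff.1 hsx))
        (sub_nonneg.2 (not_le.1 hsx).le)
  linarith [sub_eq_sum_mul hc (fun s hs => mem_activeSet.1 hs) x, sum_nonpos hterm]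

open Classical in
theorem sum_filter_coneFaces_of_mem {ℓ : (Fin n → ℝ) →ₗ[ℝ] ℝ} (hℓ : IsGeneric φ ℓ)
    (hsimple : SimplePresentation φ lam) {m : Finset (Fin N) → Fin n → ℝ}
    (hm : MinimizesOnFaces φ lam ℓ m) {v : Fin n → ℝ} (hv : IsVertex φ lam v) {x : Fin n → ℝ}
    (hx : x ∈ polyDelta φ lam) :
    ∑ I ∈ coneFaces φ lam x with m I = v, (-1 : ℝ) ^ #I =
      if IsMaxOn ℓ (polyDelta φ lam) v then (-1) ^ n else 0 := by
  have hind := hsimple.linearIndepOn_activeSet hv.1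
  obtain ⟨c, hc⟩ := exists_eq_sum_smul_of_span_eq_top hv.2 ℓ
  have hmax : IsMaxOn ℓ (polyDelta φ lam) v ↔ ∀ s ∈ activeSet φ lam v, 0 < c s := by
    have hneg : -ℓ = ∑ s ∈ activeSet φ lam v, (-c s) • φ s := by
      ext y
      simp [hc]
    rw [← isMinOn_neg_polyFace_empty_iff, isMinOn_polyFace_iff hv hind hneg (empty_subset _)]
    simp only [subset_empty, filter_eq_empty_iff, neg_pos, not_lt]
    exact forall₂_congr fun s hs => (hℓ.coeff_ne_zero hind hc hs).symm.le_iff_lt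
  rw [filter_coneFaces_eq_Icc hℓ hsimple hm hv hc, sum_Icc_neg_one_pow_card,
    satisfiedSet_eq_univ hx, inter_univ]
  by_cases hpos : ∀ s ∈ activeSet φ lam v, 0 < c s
  · rw [if_pos (filter_eq_self.2 hpos), if_pos (hmax.2 hpos), filter_eq_self.2 hpos,
      hsimple.card_activeSet hv.1 hv.2]
  · rw [if_neg (mt filter_eq_self.1 hpos), if_neg (mt hmax.1 hpos)]

theorem MinimizesOnFaces.isVertex_of_mem_image {ℓ : (Fin n → ℝ) →ₗ[ℝ] ℝ} (hℓ : IsGeneric φ ℓ)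
    {m : Finset (Fin N) → Fin n → ℝ} (hm : MinimizesOnFaces φ lam ℓ m) {x v : Fin n → ℝ}
    (hv : v ∈ (coneFaces φ lam x).image m) : IsVertex φ lam v := by
  obtain ⟨I, hI, rfl⟩ := mem_image.1 hv
  obtain ⟨hmem, hmin⟩ := hm I (mem_coneFaces.1 hI).1
  exact hℓ.isVertex_of_isMinOn hmem hmin

theorem sum_image_filter_coneFaces_of_mem {ℓ : (Fin n → ℝ) →ₗ[ℝ] ℝ} (hℓ : IsGeneric φ ℓ)
    (hcpt : IsCompact (polyDelta φ lam)) (hsimple : SimplePresentation φ lam)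
    {m : Finset (Fin N) → Fin n → ℝ} (hm : MinimizesOnFaces φ lam ℓ m) {x : Fin n → ℝ}
    (hx : x ∈ polyDelta φ lam) :
    ∑ v ∈ (coneFaces φ lam x).image m, ∑ I ∈ coneFaces φ lam x with m I = v, (-1 : ℝ) ^ #I =
      (-1) ^ n := by
  obtain ⟨v₀, hv₀, hmax⟩ :=
    hcpt.exists_isMaxOn ⟨x, hx⟩ ℓ.continuous_of_finiteDimensional.continuousOn
  have hmin₀ := isMinOn_neg_polyFace_empty_iff.2 hmax
  have hvert₀ := hℓ.neg.isVertex_of_isMinOn (polyFace_empty ▸ hv₀) hmin₀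
  -- `v₀` is the only point of `F_I` for `I` its set of active constraints
  have hv₀m : v₀ ∈ (coneFaces φ lam x).image m := by
    have hface := mem_polyFace_of_subset_activeSet hv₀ (subset_refl _)
    refine mem_image.2 ⟨activeSet φ lam v₀,
      mem_coneFaces.2 ⟨⟨v₀, hface⟩, by simp [satisfiedSet_eq_univ hx]⟩, ?_⟩
    exact eq_of_span_image_eq_top hvert₀.2 fun s hs => by
      rw [(hm _ ⟨v₀, hface⟩).1.2 s hs, mem_activeSet.1 hs]
  rw [sum_eq_single_of_mem v₀ hv₀m fun v hv hne => ?_,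
    sum_filter_coneFaces_of_mem hℓ hsimple hm hvert₀ hx, if_pos hmax]
  have hvert := hm.isVertex_of_mem_image hℓ hv
  rw [sum_filter_coneFaces_of_mem hℓ hsimple hm hvert hx, if_neg]
  exact fun hmaxv => hne (hℓ.neg.eq_of_isMinOn_polyFace hsimple (polyFace_empty ▸ hvert.1)
    (polyFace_empty ▸ hv₀) (isMinOn_neg_polyFace_empty_iff.2 hmaxv) hmin₀)

open Classical in
theorem sum_coneFaces_neg_one_pow_card (hcpt : IsCompact (polyDelta φ lam))
    (hsimple : SimplePresentation φ lam) (x : Fin n → ℝ) :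
    ∑ I ∈ coneFaces φ lam x, (-1 : ℝ) ^ #I = if x ∈ polyDelta φ lam then (-1) ^ n else 0 := by
  obtain ⟨ℓ, hℓ, hsep⟩ : ∃ ℓ, IsGeneric φ ℓ ∧
      (x ∉ polyDelta φ lam → ∀ y ∈ polyDelta φ lam, ℓ y < ℓ x) := by
    by_cases hx : x ∈ polyDelta φ lam
    · exact (exists_isGeneric φ).imp fun ℓ hℓ => ⟨hℓ, fun h => absurd hx h⟩
    · exact (exists_isGeneric_forall_lt φ hcpt (convex_polyDelta φ lam) hx).imp
        fun ℓ h => ⟨h.1, fun _ => h.2⟩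
  choose! m hm using fun I (hI : (polyFace φ lam I).Nonempty) =>
    (isCompact_polyFace hcpt I).exists_isMinOn hI ℓ.continuous_of_finiteDimensional.continuousOn
  rw [← sum_fiberwise_of_maps_to fun I hI => mem_image_of_mem m hI]
  split_ifs with hx
  · exact sum_image_filter_coneFaces_of_mem hℓ hcpt hsimple hm hx
  · refine sum_eq_zero fun v hv => ?_
    have hvert := MinimizesOnFaces.isVertex_of_mem_image hℓ hm hv
    exact sum_filter_coneFaces_eq_zero hℓ hsimple hm hvert (hsep hx v hvert.1)

end Polytope

open scoped Classical

theorem sum_ite_indicator_eq_mul_sum_coneFaces {n N : ℕ} {φ : Fin N → ((Fin n → ℝ) →ₗ[ℝ] ℝ)}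
    {lam : Fin N → ℝ} (hsimple : SimplePresentation φ lam) (x : Fin n → ℝ) :
    (∑ I : Finset (Fin N),
      if (polyFace φ lam I).Nonempty then
        (-1 : ℝ) ^ (n - I.card) *
          Set.indicator {y : Fin n → ℝ | ∀ i ∈ I, φ i y ≤ lam i} (fun _ => (1 : ℝ)) x
      else 0) = (-1) ^ n * ∑ I ∈ coneFaces φ lam x, (-1 : ℝ) ^ #I := by
  rw [mul_sum, coneFaces, sum_filter]
  refine sum_congr rfl fun I _ => ?_
  by_cases hI : (polyFace φ lam I).Nonempty
  · have hsign : (-1 : ℝ) ^ (n - #I) = (-1) ^ n * (-1) ^ #I := by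
      conv_rhs => rw [← Nat.sub_add_cancel (hsimple.card_le hI), pow_add, mul_assoc, ← mul_pow]
      norm_num
    by_cases hIx : I ⊆ satisfiedSet φ lam x
    · have hx : x ∈ {y | ∀ i ∈ I, φ i y ≤ lam i} := fun i hi => mem_satisfiedSet.1 (hIx hi)
      simp [hI, hIx, hx, hsign]
    · have hx : x ∉ {y | ∀ i ∈ I, φ i y ≤ lam i} := fun h =>
        hIx fun i hi => mem_satisfiedSet.2 (h i hi)
      simp [hI, hIx, hx]
  · simp [hI]

theorem brianchon_gram_indicator_general
    {n N : ℕ}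
    (φ : Fin N → ((Fin n → ℝ) →ₗ[ℝ] ℝ)) (lam : Fin N → ℝ)
    (hcpt : IsCompact (polyDelta φ lam))
    (hsimple : SimplePresentation φ lam) :
    ∀ x : Fin n → ℝ,
      Set.indicator (polyDelta φ lam) (fun _ => (1 : ℝ)) x =
        ∑ I : Finset (Fin N),
          if (polyFace φ lam I).Nonempty then
            (-1 : ℝ) ^ (n - I.card) *
              Set.indicator {y : Fin n → ℝ | ∀ i ∈ I, φ i y ≤ lam i}
                (fun _ => (1 : ℝ)) x
          else 0 := by
  intro x
  rw [sum_ite_indicator_eq_mul_sum_coneFaces hsimple x,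
    sum_coneFaces_neg_one_pow_card hcpt hsimple x]
  by_cases hx : x ∈ polyDelta φ lam
  · rw [Set.indicator_of_mem hx, if_pos hx, ← mul_pow]
    norm_num
  · rw [Set.indicator_of_notMem hx, if_neg hx, mul_zero]

/-- **Brianchon–Gram decomposition (equation (6.2)).**  Let `Δ ⊆ ℝⁿ` be a compact
polytope with nonempty interior whose presentation is simple and exact, and for
`I ⊆ {1,…,N}` let `C_I = {x : φ i x ≤ λ i for i ∈ I}` (the tangent cone of `Δ` along
the face `F_I`).  Then the characteristic function of `Δ` equals the signed sum, over
all `I` with `F_I` nonempty, of `(-1)^{n-|I|}` times the characteristic function of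
`C_I`. -/
theorem brianchon_gram_indicator
    {n N : ℕ} (hn : 0 < n) (hN : 0 < N)
    (φ : Fin N → ((Fin n → ℝ) →ₗ[ℝ] ℝ)) (lam : Fin N → ℝ)
    (hcpt : IsCompact (polyDelta φ lam))
    (hint : (interior (polyDelta φ lam)).Nonempty)
    (hsimple : SimplePresentation φ lam)
    (hexact : ExactPresentation φ lam) :
    ∀ x : Fin n → ℝ,
      Set.indicator (polyDelta φ lam) (fun _ => (1 : ℝ)) x =
        ∑ I : Finset (Fin N),
          if (polyFace φ lam I).Nonempty then
            (-1 : ℝ) ^ (n - I.card) *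
              Set.indicator {y : Fin n → ℝ | ∀ i ∈ I, φ i y ≤ lam i}
                (fun _ => (1 : ℝ)) x
          else 0 :=
  brianchon_gram_indicator_general φ lam hcpt hsimple
end
end

section
/- Assume the presentation of the compact polytope Δ ⊆ ℝ^n is simple and exact, and for I ⊆ {1,…,N} let C_I = {x ∈ ℝ^n : φ_i(x) ≤ λ_i for all i ∈ I}. Then for every continuous compactly supported function φ : ℝ^n → ℝ, ∫_Δ φ(x) dx = Σ_{I ⊆ {1,…,N}, F_I ≠ ∅} (−1)^{n−|I|} · ∫_{C_I} φ(x) dx, where all integrals are with respect to Lebesgue measure on ℝ^n and each integral on the right-hand side is finite because φ has compact support. -/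
noncomputable section

open scoped Classical
open MeasureTheory

namespace BG

open Module Set

variable {n N : ℕ}

abbrev Dl (n : ℕ) := (Fin n → ℝ) →ₗ[ℝ] ℝ

variable (φ : Fin N → Dl n) (lam : Fin N → ℝ)

/-- the active set of a point -/
def aset (x : Fin n → ℝ) : Finset (Fin N) := Finset.univ.filter fun i => φ i x = lam i

lemma mem_aset {x : Fin n → ℝ} {i : Fin N} : i ∈ aset φ lam x ↔ φ i x = lam i := by
  simp [aset]

lemma cont (ψ : Dl n) : Continuous ψ := ψ.continuous_of_finiteDimensional

lemma closed_delta : IsClosed (polyDelta φ lam) := by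
  have : polyDelta φ lam = ⋂ i, {x | φ i x ≤ lam i} := by
    ext x; simp [polyDelta]
  rw [this]
  exact isClosed_iInter fun i => isClosed_le (cont _) continuous_const

lemma closed_cone (I : Finset (Fin N)) :
    IsClosed {y : Fin n → ℝ | ∀ i ∈ I, φ i y ≤ lam i} := by
  have : {y : Fin n → ℝ | ∀ i ∈ I, φ i y ≤ lam i}
      = ⋂ i ∈ (I : Set (Fin N)), {x | φ i x ≤ lam i} := by
    ext x; simp
  rw [this]
  exact isClosed_biInter fun i _ => isClosed_le (cont _) continuous_const

lemma closed_face (I : Finset (Fin N)) : IsClosed (polyFace φ lam I) := by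
  have : polyFace φ lam I
      = polyDelta φ lam ∩ ⋂ i ∈ (I : Set (Fin N)), {x | φ i x = lam i} := by
    ext x; simp only [polyFace, Set.mem_setOf_eq, Set.mem_inter_iff, Set.mem_iInter,
      Finset.mem_coe]
  rw [this]
  exact (closed_delta φ lam).inter
    (isClosed_biInter fun i _ => isClosed_eq (cont _) continuous_const)

lemma face_subset (I : Finset (Fin N)) : polyFace φ lam I ⊆ polyDelta φ lam :=
  fun _ hx => hx.1

lemma compact_face (hcpt : IsCompact (polyDelta φ lam)) (I : Finset (Fin N)) :
    IsCompact (polyFace φ lam I) :=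
  hcpt.of_isClosed_subset (closed_face φ lam I) (face_subset φ lam I)

lemma indep_sub (hsimple : SimplePresentation φ lam) {v : Fin n → ℝ}
    (hv : v ∈ polyDelta φ lam) {A : Finset (Fin N)} (hA : ∀ a ∈ A, φ a v = lam a) :
    LinearIndependent ℝ (fun a : ↑A => φ a) := by
  refine (hsimple v hv).comp
    (fun a : ↑A => (⟨a.1, hA a.1 a.2⟩ : {i : Fin N // φ i v = lam i})) ?_
  intro a b hab
  simp only [Subtype.mk.injEq] at hab
  exact Subtype.ext hab

lemma exists_ker {S : Set (Dl n)} (h : Submodule.span ℝ S ≠ ⊤) :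
    ∃ u : Fin n → ℝ, u ≠ 0 ∧ ∀ ψ ∈ S, ψ u = 0 := by
  set W : Submodule ℝ (Module.Dual ℝ (Fin n → ℝ)) := Submodule.span ℝ S with hW
  have hco : W.dualCoannihilator ≠ ⊥ := by
    intro hbot
    apply h
    have hfr := Subspace.finrank_add_finrank_dualCoannihilator_eq W
    rw [hbot] at hfr
    simp only [finrank_bot, add_zero] at hfr
    have : finrank ℝ (Module.Dual ℝ (Fin n → ℝ)) = finrank ℝ (Fin n → ℝ) :=
      Subspace.dual_finrank_eq
    exact Submodule.eq_top_of_finrank_eq (by rw [hfr, this])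
  obtain ⟨u, hu, hu0⟩ := Submodule.exists_mem_ne_zero_of_ne_bot hco
  refine ⟨u, hu0, fun ψ hψ => ?_⟩
  exact (Submodule.mem_dualCoannihilator u).1 hu ψ (Submodule.subset_span hψ)


lemma move {I : Finset (Fin N)} {y : Fin n → ℝ} (hy : y ∈ polyFace φ lam I)
    (w : Fin n → ℝ) (hw : ∀ a ∈ aset φ lam y, φ a w = 0) :
    ∃ ε > 0, ∀ t : ℝ, 0 ≤ t → t ≤ ε → y + t • w ∈ polyFace φ lam I := by
  set A := aset φ lam y with hA
  have hopen : IsOpen (⋂ j ∈ Finset.univ \ A, {z : Fin n → ℝ | φ j z < lam j}) :=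
    isOpen_biInter_finset fun j _ => isOpen_lt (cont _) continuous_const
  have hyO : y ∈ ⋂ j ∈ Finset.univ \ A, {z : Fin n → ℝ | φ j z < lam j} := by
    simp only [Set.mem_iInter, Finset.mem_sdiff, Finset.mem_univ, true_and]
    intro j hj
    exact lt_of_le_of_ne (hy.1 j) (fun h => hj ((mem_aset φ lam).2 h))
  have hc : Continuous (fun t : ℝ => y + t • w) := by continuity
  have hpre : IsOpen ((fun t : ℝ => y + t • w) ⁻¹' _) := hopen.preimage hc
  have h0 : (0 : ℝ) ∈ (fun t : ℝ => y + t • w) ⁻¹'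
      (⋂ j ∈ Finset.univ \ A, {z : Fin n → ℝ | φ j z < lam j}) := by
    simpa using hyO
  obtain ⟨ε0, hε0, hball⟩ := Metric.isOpen_iff.1 (hopen.preimage hc) 0 h0
  refine ⟨ε0 / 2, by positivity, fun t ht0 htε => ?_⟩
  have htO : y + t • w ∈ ⋂ j ∈ Finset.univ \ A, {z : Fin n → ℝ | φ j z < lam j} := by
    have : t ∈ Metric.ball (0 : ℝ) ε0 := by
      simp only [Metric.mem_ball, Real.dist_eq, sub_zero, abs_of_nonneg ht0]
      linarith
    exact hball this
  have heq : ∀ a ∈ A, φ a (y + t • w) = lam a := by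
    intro a ha
    rw [map_add, LinearMap.map_smul, hw a ha, smul_zero, add_zero]
    exact (mem_aset φ lam).1 ha
  refine ⟨fun i => ?_, fun i hi => heq i (by
    rw [hA, mem_aset]; exact hy.2 i hi)⟩
  by_cases hiA : i ∈ A
  · exact le_of_eq (heq i hiA)
  · have := Set.mem_iInter.1 htO i
    simp only [Finset.mem_sdiff, Finset.mem_univ, true_and, Set.mem_iInter,
      Set.mem_setOf_eq] at this
    exact le_of_lt (this hiA)

lemma step (hcpt : IsCompact (polyDelta φ lam)) (ξ : Dl n) {I : Finset (Fin N)}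
    {x : Fin n → ℝ} (hxF : x ∈ polyFace φ lam I)
    (hmin : ∀ z ∈ polyFace φ lam I, ξ x ≤ ξ z)
    (hsp : Submodule.span ℝ (φ '' ↑(aset φ lam x)) ≠ ⊤) :
    ∃ x' ∈ polyFace φ lam I, (∀ z ∈ polyFace φ lam I, ξ x' ≤ ξ z) ∧
      aset φ lam x ⊂ aset φ lam x' := by
  obtain ⟨u, hu0, hu⟩ := exists_ker hsp
  have hker : ∀ a ∈ aset φ lam x, φ a u = 0 := fun a ha => hu _ ⟨a, ha, rfl⟩
  by_cases hξu : ξ u = 0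
  · -- slide to the boundary
    set S := {t : ℝ | 0 ≤ t ∧ x + t • u ∈ polyDelta φ lam} with hS
    have h0S : (0 : ℝ) ∈ S := ⟨le_refl _, by simpa using hxF.1⟩
    have hSclosed : IsClosed S := by
      have : S = Set.Ici (0:ℝ) ∩ (fun t : ℝ => x + t • u) ⁻¹' polyDelta φ lam := rfl
      rw [this]
      exact isClosed_Ici.inter ((closed_delta φ lam).preimage (by continuity))
    obtain ⟨R, hR⟩ := hcpt.isBounded.exists_norm_le
    have hubd : 0 < ‖u‖ := norm_pos_iff.2 hu0
    have hSbdd : Bornology.IsBounded S := by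
      have : S ⊆ Set.Icc 0 ((R + ‖x‖) / ‖u‖) := by
        rintro t ⟨ht0, htΔ⟩
        refine ⟨ht0, ?_⟩
        have h1 : ‖x + t • u‖ ≤ R := hR _ htΔ
        have h2 : ‖t • u‖ ≤ ‖x + t • u‖ + ‖x‖ := by
          have := norm_sub_le (x + t • u) x
          simpa using this
        rw [norm_smul, Real.norm_eq_abs, abs_of_nonneg ht0] at h2
        rw [le_div_iff₀ hubd]
        nlinarith
      exact (Metric.isBounded_Icc _ _).subset this
    have hScpt : IsCompact S := Metric.isCompact_of_isClosed_isBounded hSclosed hSbdd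
    set T := sSup S with hT
    have hTS : T ∈ S := hScpt.sSup_mem ⟨0, h0S⟩
    set x' := x + T • u with hx'
    have hsub : aset φ lam x ⊆ aset φ lam x' := by
      intro a ha
      rw [mem_aset]
      rw [hx', map_add, LinearMap.map_smul, hker a ha, smul_zero, add_zero]
      exact (mem_aset φ lam).1 ha
    have hx'F : x' ∈ polyFace φ lam I := by
      refine ⟨hTS.2, fun i hi => ?_⟩
      exact (mem_aset φ lam).1 (hsub ((mem_aset φ lam).2 (hxF.2 i hi)))
    have hx'min : ∀ z ∈ polyFace φ lam I, ξ x' ≤ ξ z := by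
      intro z hz
      have : ξ x' = ξ x := by rw [hx', map_add, LinearMap.map_smul, hξu, smul_zero, add_zero]
      rw [this]; exact hmin z hz
    refine ⟨x', hx'F, hx'min, hsub, ?_⟩
    -- strict
    intro hsub'
    have haeq : aset φ lam x' = aset φ lam x := le_antisymm hsub' hsub
    obtain ⟨ε, hε, hmove⟩ := move φ lam hx'F u (by rw [haeq]; exact hker)
    have hTε : T + ε ∈ S := by
      constructor
      · have : (0:ℝ) ≤ T := le_csSup hSbdd.bddAbove h0S
        linarith
      · have heq : x + (T + ε) • u = x' + ε • u := by
          rw [hx', add_smul]; abel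
        rw [heq]; exact (hmove ε (le_of_lt hε) (le_refl _)).1
    have h3 : T + ε ≤ sSup S := le_csSup hSbdd.bddAbove hTε
    rw [← hT] at h3
    linarith
  · -- descent direction: contradiction with minimality
    exfalso
    set w := if ξ u < 0 then u else -u with hw
    have hwker : ∀ a ∈ aset φ lam x, φ a w = 0 := by
      intro a ha
      rw [hw]
      split
      · exact hker a ha
      · rw [map_neg, hker a ha, neg_zero]
    have hξw : ξ w < 0 := by
      rw [hw]
      rcases lt_trichotomy (ξ u) 0 with h | h | h
      · simpa [h]
      · exact absurd h hξu
      · simp only [if_neg (not_lt.2 (le_of_lt h)), map_neg]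
        linarith
    obtain ⟨ε, hε, hmove⟩ := move φ lam hxF w hwker
    have hz := hmove ε (le_of_lt hε) (le_refl _)
    have : ξ (x + ε • w) = ξ x + ε * ξ w := by
      rw [map_add, LinearMap.map_smul, smul_eq_mul]
    have h2 := hmin _ hz
    nlinarith
lemma exists_min_vertex (hcpt : IsCompact (polyDelta φ lam)) (ξ : Dl n)
    {I : Finset (Fin N)} (hne : (polyFace φ lam I).Nonempty) :
    ∃ v ∈ polyFace φ lam I, (∀ z ∈ polyFace φ lam I, ξ v ≤ ξ z) ∧
      Submodule.span ℝ (φ '' ↑(aset φ lam v)) = ⊤ := by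
  obtain ⟨x₀, hx₀F, hx₀min⟩ :=
    (compact_face φ lam hcpt I).exists_isMinOn hne (cont ξ).continuousOn
  have H : ∀ (k : ℕ) (x : Fin n → ℝ), x ∈ polyFace φ lam I →
      (∀ z ∈ polyFace φ lam I, ξ x ≤ ξ z) → N - (aset φ lam x).card ≤ k →
      ∃ v ∈ polyFace φ lam I, (∀ z ∈ polyFace φ lam I, ξ v ≤ ξ z) ∧
        Submodule.span ℝ (φ '' ↑(aset φ lam v)) = ⊤ := by
    intro k
    induction k with
    | zero =>
      intro x hxF hmin hcard
      by_cases hsp : Submodule.span ℝ (φ '' ↑(aset φ lam x)) = ⊤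
      · exact ⟨x, hxF, hmin, hsp⟩
      · exfalso
        obtain ⟨x', _, _, hss⟩ := step φ lam hcpt ξ hxF hmin hsp
        have h1 : (aset φ lam x).card < (aset φ lam x').card := Finset.card_lt_card hss
        have h2 : (aset φ lam x').card ≤ N := by
          simpa using Finset.card_le_card (Finset.subset_univ (aset φ lam x'))
        omega
    | succ k ih =>
      intro x hxF hmin hcard
      by_cases hsp : Submodule.span ℝ (φ '' ↑(aset φ lam x)) = ⊤
      · exact ⟨x, hxF, hmin, hsp⟩
      · obtain ⟨x', hx'F, hx'min, hss⟩ := step φ lam hcpt ξ hxF hmin hsp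
        have h1 : (aset φ lam x).card < (aset φ lam x').card := Finset.card_lt_card hss
        have h2 : (aset φ lam x').card ≤ N := by
          simpa using Finset.card_le_card (Finset.subset_univ (aset φ lam x'))
        exact ih x' hx'F hx'min (by omega)
  exact H N x₀ hx₀F (fun z hz => hx₀min hz) (Nat.sub_le _ _)

/-- `A` is the exact active (vertex) set of a point of `Δ` whose functionals span. -/
def goodA (A : Finset (Fin N)) : Prop :=
  (∃ v, v ∈ polyDelta φ lam ∧ ∀ i, (φ i v = lam i ↔ i ∈ A)) ∧
    Submodule.span ℝ (φ '' ↑A) = ⊤ ∧ A.card = n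

def vtx (A : Finset (Fin N)) : Fin n → ℝ :=
  if h : ∃ v, v ∈ polyDelta φ lam ∧ ∀ i, (φ i v = lam i ↔ i ∈ A) then h.choose else 0

lemma vtx_spec {A : Finset (Fin N)}
    (h : ∃ v, v ∈ polyDelta φ lam ∧ ∀ i, (φ i v = lam i ↔ i ∈ A)) :
    vtx φ lam A ∈ polyDelta φ lam ∧ ∀ i, (φ i (vtx φ lam A) = lam i ↔ i ∈ A) := by
  rw [vtx, dif_pos h]; exact h.choose_spec

lemma sep_point {A : Finset (Fin N)} (hsp : Submodule.span ℝ (φ '' ↑A) = ⊤)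
    {v w : Fin n → ℝ} (h : ∀ a ∈ A, φ a v = φ a w) : v = w := by
  have hker : ∀ ψ : Dl n, ψ (v - w) = 0 := by
    intro ψ
    have hψ : ψ ∈ Submodule.span ℝ (φ '' ↑A) := by rw [hsp]; exact Submodule.mem_top
    refine Submodule.span_induction ?_ ?_ ?_ ?_ hψ
    · rintro ψ' ⟨a, ha, rfl⟩
      rw [map_sub, h a ha, sub_self]
    · simp
    · intro ψ₁ ψ₂ _ _ h1 h2
      rw [LinearMap.add_apply, h1, h2, add_zero]
    · intro c ψ' _ h1
      rw [LinearMap.smul_apply, h1, smul_zero]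
  have : ∀ i, (v - w) i = 0 := fun i => hker (LinearMap.proj i)
  funext i
  have := this i
  simpa [sub_eq_zero] using this
lemma good_cond {A : Finset (Fin N)} (h : goodA φ lam A) :
    (⊤ ≤ Submodule.span ℝ (Set.range (fun a : ↑A => φ a))) ∧
      Fintype.card ↑A = finrank ℝ (Dl n) := by
  constructor
  · have himg : (Set.range fun a : ↑A => φ a) = φ '' ↑A := by
      ext ψ
      constructor
      · rintro ⟨a, rfl⟩; exact ⟨a.1, a.2, rfl⟩
      · rintro ⟨x, hx, rfl⟩; exact ⟨⟨x, hx⟩, rfl⟩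
    rw [himg, h.2.1]
  
  · rw [Fintype.card_coe, h.2.2]
    have h1 : finrank ℝ (Module.Dual ℝ (Fin n → ℝ)) = finrank ℝ (Fin n → ℝ) :=
      Subspace.dual_finrank_eq
    have h2 : finrank ℝ (Dl n) = finrank ℝ (Fin n → ℝ) := h1
    rw [h2, Module.finrank_fin_fun]

/-- coefficients of `ξ` in the basis of active functionals at a vertex -/
def coeff (ξ : Dl n) (A : Finset (Fin N)) : ↑A → ℝ :=
  if h : (⊤ ≤ Submodule.span ℝ (Set.range (fun a : ↑A => φ a)))
      ∧ Fintype.card ↑A = finrank ℝ (Dl n) then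
    fun a => ((basisOfTopLeSpanOfCardEqFinrank (fun a : ↑A => φ a) h.1 h.2).repr ξ) a
  else 0

lemma coeff_spec {A : Finset (Fin N)} (h : goodA φ lam A) (ξ : Dl n) :
    ∑ a : ↑A, coeff φ ξ A a • φ a = ξ := by
  rw [coeff, dif_pos (good_cond φ lam h)]
  have hb := coe_basisOfTopLeSpanOfCardEqFinrank (fun a : ↑A => φ a)
    (good_cond φ lam h).1 (good_cond φ lam h).2
  have : ∀ a : ↑A, φ a.1 = (basisOfTopLeSpanOfCardEqFinrank (fun a : ↑A => φ a)
      (good_cond φ lam h).1 (good_cond φ lam h).2) a := by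
    intro a; rw [hb]
  calc ∑ a : ↑A, ((basisOfTopLeSpanOfCardEqFinrank (fun a : ↑A => φ a)
        (good_cond φ lam h).1 (good_cond φ lam h).2).repr ξ) a • φ a.1
      = ∑ a : ↑A, ((basisOfTopLeSpanOfCardEqFinrank (fun a : ↑A => φ a)
        (good_cond φ lam h).1 (good_cond φ lam h).2).repr ξ) a •
        (basisOfTopLeSpanOfCardEqFinrank (fun a : ↑A => φ a)
        (good_cond φ lam h).1 (good_cond φ lam h).2) a := by
        refine Finset.sum_congr rfl fun a _ => ?_
        rw [← this a]
    _ = ξ := Basis.sum_repr _ ξ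

lemma coeff_neg {A : Finset (Fin N)} (ξ : Dl n) (a : ↑A) :
    coeff φ (-ξ) A a = - coeff φ ξ A a := by
  rw [coeff, coeff]
  split
  · simp
  · simp

lemma vtx_active {A : Finset (Fin N)} (h : goodA φ lam A) {a : Fin N} (ha : a ∈ A) :
    φ a (vtx φ lam A) = lam a := ((vtx_spec φ lam h.1).2 a).2 ha

lemma eval_diff {A : Finset (Fin N)} (h : goodA φ lam A) (ξ : Dl n) (x : Fin n → ℝ) :
    ξ x - ξ (vtx φ lam A) = ∑ a : ↑A, coeff φ ξ A a * (φ a x - lam a) := by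
  have h1 : ξ x = ∑ a : ↑A, coeff φ ξ A a * (φ a x) := by
    conv_lhs => rw [← coeff_spec φ lam h ξ]
    rw [LinearMap.sum_apply]
    simp [LinearMap.smul_apply, smul_eq_mul]
  have h2 : ξ (vtx φ lam A) = ∑ a : ↑A, coeff φ ξ A a * lam a := by
    conv_lhs => rw [← coeff_spec φ lam h ξ]
    rw [LinearMap.sum_apply]
    refine Finset.sum_congr rfl fun a _ => ?_
    rw [LinearMap.smul_apply, smul_eq_mul, vtx_active φ lam h a.2]
  rw [h1, h2, ← Finset.sum_sub_distrib]
  refine Finset.sum_congr rfl fun a _ => ?_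
  ring

def Dset (ξ : Dl n) (A : Finset (Fin N)) : Finset (Fin N) :=
  (A.attach.filter fun a => 0 < coeff φ ξ A a).map ⟨Subtype.val, Subtype.val_injective⟩

lemma mem_Dset {ξ : Dl n} {A : Finset (Fin N)} {a : Fin N} :
    a ∈ Dset φ ξ A ↔ ∃ h : a ∈ A, 0 < coeff φ ξ A ⟨a, h⟩ := by
  simp only [Dset, Finset.mem_map, Finset.mem_filter, Finset.mem_attach, true_and,
    Function.Embedding.coeFn_mk]
  constructor
  · rintro ⟨⟨b, hb⟩, hpos, rfl⟩
    exact ⟨hb, hpos⟩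
  · rintro ⟨h, hpos⟩
    exact ⟨⟨a, h⟩, hpos, rfl⟩

lemma Dset_subset {ξ : Dl n} {A : Finset (Fin N)} : Dset φ ξ A ⊆ A := by
  intro a ha
  exact (mem_Dset φ).1 ha |>.1

lemma vtx_unique {A : Finset (Fin N)} (h : goodA φ lam A) {v : Fin n → ℝ}
    (hchar : ∀ a ∈ A, φ a v = lam a) : v = vtx φ lam A := by
  refine sep_point φ h.2.1 fun a ha => ?_
  rw [hchar a ha, vtx_active φ lam h ha]

lemma coeff_zero_mem_span {A : Finset (Fin N)} (h : goodA φ lam A) (ξ : Dl n) (a : ↑A)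
    (hc : coeff φ ξ A a = 0) : ξ ∈ Submodule.span ℝ (φ '' ↑(A.erase a.1)) := by
  rw [← coeff_spec φ lam h ξ]
  rw [← Finset.add_sum_erase _ _ (Finset.mem_univ a), hc, zero_smul, zero_add]
  refine Submodule.sum_mem _ fun b hb => ?_
  refine Submodule.smul_mem _ _ (Submodule.subset_span ?_)
  refine ⟨b.1, ?_, rfl⟩
  simp only [Finset.coe_erase, Set.mem_diff, Finset.mem_coe, Set.mem_singleton_iff]
  refine ⟨b.2, ?_⟩
  intro hba
  rw [Finset.mem_erase] at hb
  exact hb.1 (Subtype.ext hba)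
lemma good_of_span (hsimple : SimplePresentation φ lam) {v : Fin n → ℝ}
    (hv : v ∈ polyDelta φ lam)
    (hsp : Submodule.span ℝ (φ '' ↑(aset φ lam v)) = ⊤) : goodA φ lam (aset φ lam v) := by
  refine ⟨⟨v, hv, fun i => (mem_aset φ lam).symm⟩, hsp, ?_⟩
  have hind : LinearIndependent ℝ (fun a : ↑(aset φ lam v) => φ a) :=
    indep_sub φ lam hsimple hv fun a ha => (mem_aset φ lam).1 ha
  have hfr : finrank ℝ (Dl n) = n := by
    have h1 : finrank ℝ (Module.Dual ℝ (Fin n → ℝ)) = finrank ℝ (Fin n → ℝ) :=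
      Subspace.dual_finrank_eq
    have h2 : finrank ℝ (Dl n) = finrank ℝ (Fin n → ℝ) := h1
    rw [h2, Module.finrank_fin_fun]
  have hle : (aset φ lam v).card ≤ n := by
    have := hind.fintype_card_le_finrank
    rwa [Fintype.card_coe, hfr] at this
  have hge : n ≤ (aset φ lam v).card := by
    have h3 : Submodule.span ℝ (↑((aset φ lam v).image φ) : Set (Dl n)) = ⊤ := by
      rw [Finset.coe_image]; exact hsp
    have h4 : finrank ℝ (Submodule.span ℝ (↑((aset φ lam v).image φ) : Set (Dl n)))
        ≤ ((aset φ lam v).image φ).card :=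
      finrank_span_finset_le_card ((aset φ lam v).image φ)
    rw [h3] at h4
    have h5 : finrank ℝ (Dl n) ≤ ((aset φ lam v).image φ).card := by
      simpa [finrank_top] using h4
    calc n = finrank ℝ (Dl n) := hfr.symm
      _ ≤ ((aset φ lam v).image φ).card := h5
      _ ≤ (aset φ lam v).card := Finset.card_image_le
  omega

lemma bad_proper {A : Finset (Fin N)} {a : Fin N} (haA : a ∈ A) (h : goodA φ lam A) :
    Submodule.span ℝ (φ '' ↑(A.erase a)) ≠ ⊤ := by
  intro htop
  have hfr : finrank ℝ (Dl n) = n := by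
    have h1 : finrank ℝ (Module.Dual ℝ (Fin n → ℝ)) = finrank ℝ (Fin n → ℝ) :=
      Subspace.dual_finrank_eq
    have h2 : finrank ℝ (Dl n) = finrank ℝ (Fin n → ℝ) := h1
    rw [h2, Module.finrank_fin_fun]
  have h3 : Submodule.span ℝ (↑((A.erase a).image φ) : Set (Dl n)) = ⊤ := by
    rw [Finset.coe_image]; exact htop
  have h4 : finrank ℝ (Submodule.span ℝ (↑((A.erase a).image φ) : Set (Dl n)))
      ≤ ((A.erase a).image φ).card :=
    finrank_span_finset_le_card ((A.erase a).image φ)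
  rw [h3] at h4
  have h5 : n ≤ ((A.erase a).image φ).card := by
    have h4' : finrank ℝ (Dl n) ≤ ((A.erase a).image φ).card := by
      simpa [finrank_top] using h4
    calc n = finrank ℝ (Dl n) := hfr.symm
      _ ≤ _ := h4'
  have h6 : ((A.erase a).image φ).card ≤ (A.erase a).card := Finset.card_image_le
  have h7 : (A.erase a).card < A.card := Finset.card_erase_lt_of_mem haA
  have h8 : A.card = n := h.2.2
  omega

/-- the pairing `w ↦ (x ↦ ∑ i, w i * x i)` -/
def toD : (Fin n → ℝ) →ₗ[ℝ] Dl n where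
  toFun w := ∑ i, w i • LinearMap.proj i
  map_add' w₁ w₂ := by
    simp only [Pi.add_apply, add_smul, Finset.sum_add_distrib]
  map_smul' c w := by
    simp only [Pi.smul_apply, smul_eq_mul, RingHom.id_apply, Finset.smul_sum, smul_smul]

lemma toD_apply (w x : Fin n → ℝ) : toD w x = ∑ i, w i * x i := by
  simp [toD, LinearMap.proj_apply]

lemma toD_single (w : Fin n → ℝ) (j : Fin n) : toD w (Pi.single j 1) = w j := by
  rw [toD_apply]
  rw [Finset.sum_eq_single j]
  · simp
  · intro i _ hij
    simp [Pi.single_apply, if_neg hij]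
  · simp

lemma toD_eval (ψ : Dl n) : toD (fun i => ψ (Pi.single i 1)) = ψ := by
  refine (Pi.basisFun ℝ (Fin n)).ext fun j => ?_
  rw [Pi.basisFun_apply, toD_single]

/-- genericity of a functional w.r.t. the presentation -/
def Generic (ξ : Dl n) : Prop :=
  ∀ A : Finset (Fin N), goodA φ lam A → ∀ a : ↑A, coeff φ ξ A a ≠ 0

lemma exists_generic (U : Set (Fin n → ℝ)) (hU : IsOpen U) (hne : U.Nonempty) :
    ∃ w ∈ U, Generic φ lam (toD w) := by
  set Bad : Set (Fin n → ℝ) := ⋃ p : Finset (Fin N) × Fin N,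
    {w | goodA φ lam p.1 ∧ p.2 ∈ p.1 ∧
      toD w ∈ Submodule.span ℝ (φ '' ↑(p.1.erase p.2))} with hBadDef
  have hBad : volume Bad = 0 := by
    refine measure_iUnion_null fun p => ?_
    by_cases hp : goodA φ lam p.1 ∧ p.2 ∈ p.1
    · have hset : {w | goodA φ lam p.1 ∧ p.2 ∈ p.1 ∧
          toD w ∈ Submodule.span ℝ (φ '' ↑(p.1.erase p.2))}
          = ↑((Submodule.span ℝ (φ '' ↑(p.1.erase p.2))).comap toD) := by
        ext w
        simp [hp.1, hp.2, Submodule.mem_comap]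
      rw [hset]
      refine Measure.addHaar_submodule _ _ ?_
      intro htop
      refine bad_proper φ lam hp.2 hp.1 ?_
      rw [Submodule.eq_top_iff']
      intro ψ
      have hw : toD (fun i => ψ (Pi.single i 1)) = ψ := toD_eval ψ
      have : (fun i => ψ (Pi.single i 1)) ∈
          (Submodule.span ℝ (φ '' ↑(p.1.erase p.2))).comap toD := by
        rw [htop]; exact Submodule.mem_top
      rw [Submodule.mem_comap, hw] at this
      exact this
    · have hset : {w | goodA φ lam p.1 ∧ p.2 ∈ p.1 ∧
          toD w ∈ Submodule.span ℝ (φ '' ↑(p.1.erase p.2))} = ∅ := by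
        ext w; simp only [Set.mem_setOf_eq, Set.mem_empty_iff_false, iff_false]
        intro hcon; exact hp ⟨hcon.1, hcon.2.1⟩
      rw [hset]; exact measure_empty
  have hUpos : volume U ≠ 0 := (hU.measure_pos volume hne).ne'
  have : volume (U \ Bad) ≠ 0 := by
    rwa [measure_diff_null hBad]
  obtain ⟨w, hwU, hwBad⟩ := nonempty_of_measure_ne_zero this
  refine ⟨w, hwU, fun A hA a hc => ?_⟩
  exact hwBad (Set.mem_iUnion.2 ⟨(A, a.1), hA, a.2,
    coeff_zero_mem_span φ lam hA (toD w) a hc⟩)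
lemma coeff_nonpos (hexact : ExactPresentation φ lam) {A : Finset (Fin N)}
    (h : goodA φ lam A) (ξ : Dl n) {I : Finset (Fin N)} (hI : I ⊆ A)
    (hmin : ∀ z ∈ polyFace φ lam I, ξ (vtx φ lam A) ≤ ξ z)
    (a : ↑A) (ha : a.1 ∉ I) : coeff φ ξ A a ≤ 0 := by
  have hvF : vtx φ lam A ∈ polyFace φ lam (A.erase a.1) :=
    ⟨(vtx_spec φ lam h.1).1, fun i hi => vtx_active φ lam h (Finset.mem_of_mem_erase hi)⟩
  obtain ⟨z, hzΔ, hzeq, hzlt⟩ := hexact (A.erase a.1) ⟨_, hvF⟩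
  have hza : φ a.1 z < lam a.1 := hzlt a.1 (Finset.notMem_erase a.1 A)
  have hzF : z ∈ polyFace φ lam I := by
    refine ⟨hzΔ, fun i hi => hzeq i (Finset.mem_erase.2 ⟨fun he => ha (he ▸ hi), hI hi⟩)⟩
  have hd := eval_diff φ lam h ξ z
  have hsum : ∑ b : ↑A, coeff φ ξ A b * (φ b z - lam b)
      = coeff φ ξ A a * (φ a.1 z - lam a.1) := by
    rw [Finset.sum_eq_single a]
    · intro b _ hba
      have hbz : φ b.1 z = lam b.1 := hzeq b.1
        (Finset.mem_erase.2 ⟨fun hc => hba (Subtype.ext hc), b.2⟩)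
      rw [hbz, sub_self, mul_zero]
    · intro hmem; exact absurd (Finset.mem_univ a) hmem
  have h0 : (0:ℝ) ≤ coeff φ ξ A a * (φ a.1 z - lam a.1) := by
    have hm := hmin z hzF
    rw [hsum] at hd
    linarith
  nlinarith

lemma strict_min {A : Finset (Fin N)} (h : goodA φ lam A) (ξ : Dl n) {I : Finset (Fin N)}
    (hI : I ⊆ A) (hc : ∀ a : ↑A, a.1 ∉ I → coeff φ ξ A a < 0) :
    ∀ x ∈ polyFace φ lam I, x ≠ vtx φ lam A → ξ (vtx φ lam A) < ξ x := by
  intro x hxF hxne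
  have hd := eval_diff φ lam h ξ x
  have hterms : ∀ b : ↑A, b ∈ Finset.univ → (0:ℝ) ≤ coeff φ ξ A b * (φ b.1 x - lam b.1) := by
    intro b _
    by_cases hbI : b.1 ∈ I
    · rw [hxF.2 b.1 hbI, sub_self, mul_zero]
    · have h1 := hc b hbI
      have h2 : φ b.1 x ≤ lam b.1 := hxF.1 b.1
      nlinarith
  have hex : ∃ b : ↑A, 0 < coeff φ ξ A b * (φ b.1 x - lam b.1) := by
    by_contra hcon
    push_neg at hcon
    apply hxne
    refine sep_point φ h.2.1 fun b hb => ?_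
    have hble := hterms ⟨b, hb⟩ (Finset.mem_univ _)
    have hbge := hcon ⟨b, hb⟩
    have hzero : coeff φ ξ A ⟨b, hb⟩ * (φ b x - lam b) = 0 := le_antisymm hbge hble
    have hbx : φ b x = lam b := by
      by_cases hbI : b ∈ I
      · exact hxF.2 b hbI
      · have h1 := hc ⟨b, hb⟩ hbI
        have := mul_eq_zero.1 hzero
        rcases this with h2 | h2
        · exact absurd h2 (ne_of_lt h1)
        · linarith [sub_eq_zero.1 h2]
    rw [hbx, vtx_active φ lam h hb]
  have hpos : 0 < ∑ b : ↑A, coeff φ ξ A b * (φ b.1 x - lam b.1) :=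
    Finset.sum_pos' hterms (by obtain ⟨b, hb⟩ := hex; exact ⟨b, Finset.mem_univ _, hb⟩)
  linarith

lemma min_of_neg {A : Finset (Fin N)} (h : goodA φ lam A) (ξ : Dl n) {I : Finset (Fin N)}
    (hI : I ⊆ A) (hc : ∀ a : ↑A, a.1 ∉ I → coeff φ ξ A a < 0) :
    ∀ x ∈ polyFace φ lam I, ξ (vtx φ lam A) ≤ ξ x := by
  intro x hxF
  by_cases hxv : x = vtx φ lam A
  · rw [hxv]
  · exact (strict_min φ lam h ξ hI hc x hxF hxv).le
lemma sum_pn {α : Type*} [DecidableEq α] (T : Finset α) :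
    ∑ S ∈ T.powerset, ((-1:ℝ))^S.card = if T = ∅ then 1 else 0 := by
  have h := Finset.sum_powerset_neg_one_pow_card (x := T)
  have h2 := congrArg (fun z : ℤ => (z : ℝ)) h
  push_cast at h2
  simpa using h2

lemma vtx_mem_face {A I : Finset (Fin N)} (h : goodA φ lam A) (hIA : I ⊆ A) :
    vtx φ lam A ∈ polyFace φ lam I :=
  ⟨(vtx_spec φ lam h.1).1, fun i hi => vtx_active φ lam h (hIA hi)⟩

lemma P_coeff_neg {ξ : Dl n} (hgen : Generic φ lam ξ) {A I : Finset (Fin N)}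
    (hA : goodA φ lam A) (hD : Dset φ ξ A ⊆ I) :
    ∀ a : ↑A, a.1 ∉ I → coeff φ ξ A a < 0 := by
  intro a ha
  have h1 : a.1 ∉ Dset φ ξ A := fun hmem => ha (hD hmem)
  have h2 : ¬(0 < coeff φ ξ A a) := fun hpos => h1 ((mem_Dset φ).2 ⟨a.2, hpos⟩)
  have h3 := hgen A hA a
  cases lt_or_gt_of_ne h3 with
  | inl h => exact h
  | inr h => exact absurd h h2

lemma point_eq (hcpt : IsCompact (polyDelta φ lam)) (hsimple : SimplePresentation φ lam)
    (hexact : ExactPresentation φ lam) (ξ : Dl n) (hgen : Generic φ lam ξ)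
    (K I : Finset (Fin N)) :
    (if (polyFace φ lam I).Nonempty ∧ I ⊆ K then ((-1:ℝ))^I.card else 0)
    = ∑ A : Finset (Fin N), (if (goodA φ lam A ∧ Dset φ ξ A ⊆ I ∧ I ⊆ A ∧ I ⊆ K)
        then ((-1:ℝ))^I.card else 0) := by
  by_cases hgI : (polyFace φ lam I).Nonempty ∧ I ⊆ K
  · obtain ⟨v, hvF, hvmin, hvsp⟩ := exists_min_vertex φ lam hcpt ξ hgI.1
    set A₀ := aset φ lam v with hA₀
    have hA₀good : goodA φ lam A₀ := good_of_span φ lam hsimple hvF.1 hvsp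
    have hvvtx : v = vtx φ lam A₀ :=
      vtx_unique φ lam hA₀good fun a ha => (mem_aset φ lam).1 ha
    have hIA₀ : I ⊆ A₀ := fun i hi => (mem_aset φ lam).2 (hvF.2 i hi)
    have hD₀ : Dset φ ξ A₀ ⊆ I := by
      intro a haD
      obtain ⟨haA, hpos⟩ := (mem_Dset φ).1 haD
      by_contra hanI
      have := coeff_nonpos φ lam hexact hA₀good ξ hIA₀
        (fun z hz => hvvtx ▸ hvmin z hz) ⟨a, haA⟩ hanI
      linarith
    have hP₀ : goodA φ lam A₀ ∧ Dset φ ξ A₀ ⊆ I ∧ I ⊆ A₀ ∧ I ⊆ K :=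
      ⟨hA₀good, hD₀, hIA₀, hgI.2⟩
    have huniq : ∀ A : Finset (Fin N),
        (goodA φ lam A ∧ Dset φ ξ A ⊆ I ∧ I ⊆ A ∧ I ⊆ K) → A = A₀ := by
      intro A hP
      have hminA := strict_min φ lam hP.1 ξ hP.2.2.1 (P_coeff_neg φ lam hgen hP.1 hP.2.1)
      have hminA₀ := strict_min φ lam hP₀.1 ξ hP₀.2.2.1 (P_coeff_neg φ lam hgen hP₀.1 hP₀.2.1)
      have hvA : vtx φ lam A ∈ polyFace φ lam I := vtx_mem_face φ lam hP.1 hP.2.2.1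
      have hvA₀ : vtx φ lam A₀ ∈ polyFace φ lam I := vtx_mem_face φ lam hP₀.1 hP₀.2.2.1
      have heqv : vtx φ lam A = vtx φ lam A₀ := by
        by_contra hne
        have h1 := hminA _ hvA₀ (fun hh => hne hh.symm)
        have h2 := hminA₀ _ hvA hne
        linarith
      ext i
      rw [← ((vtx_spec φ lam hP.1.1).2 i), heqv, ((vtx_spec φ lam hP₀.1.1).2 i)]
    rw [if_pos hgI]
    rw [Finset.sum_eq_single A₀]
    · rw [if_pos hP₀]
    · intro B _ hBA₀
      rw [if_neg]
      intro hPB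
      exact hBA₀ (huniq B hPB)
    · intro hmem; exact absurd (Finset.mem_univ A₀) hmem
  · rw [if_neg hgI]
    symm
    refine Finset.sum_eq_zero fun A _ => ?_
    rw [if_neg]
    intro hP
    exact hgI ⟨⟨vtx φ lam A, vtx_mem_face φ lam hP.1 hP.2.2.1⟩, hP.2.2.2⟩

lemma inner_eval (ξ : Dl n) (K A : Finset (Fin N)) :
    ∑ I : Finset (Fin N), (if (goodA φ lam A ∧ Dset φ ξ A ⊆ I ∧ I ⊆ A ∧ I ⊆ K)
      then ((-1:ℝ))^I.card else 0)
    = if goodA φ lam A ∧ Dset φ ξ A = A ∩ K then ((-1:ℝ))^((A ∩ K).card) else 0 := by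
  by_cases hA : goodA φ lam A
  · set D := Dset φ ξ A with hD
    have hDA : D ⊆ A := Dset_subset φ
    by_cases hDK : D ⊆ K
    · set T := (A ∩ K) \ D with hT
      have hfilter : Finset.univ.filter
          (fun I => goodA φ lam A ∧ D ⊆ I ∧ I ⊆ A ∧ I ⊆ K)
          = T.powerset.image (fun S => D ∪ S) := by
        ext I
        simp only [Finset.mem_filter, Finset.mem_univ, true_and, Finset.mem_image,
          Finset.mem_powerset]
        constructor
        · rintro ⟨-, hDI, hIA, hIK⟩
          refine ⟨I \ D, ?_, ?_⟩
          · intro i hi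
            rw [Finset.mem_sdiff] at hi
            rw [hT, Finset.mem_sdiff, Finset.mem_inter]
            exact ⟨⟨hIA hi.1, hIK hi.1⟩, hi.2⟩
          · rw [Finset.union_sdiff_of_subset hDI]
        · rintro ⟨S, hST, rfl⟩
          have hSA : S ⊆ A := fun s hs => Finset.mem_inter.1 ((Finset.mem_sdiff.1 (hST hs)).1) |>.1
          have hSK : S ⊆ K := fun s hs => Finset.mem_inter.1 ((Finset.mem_sdiff.1 (hST hs)).1) |>.2
          exact ⟨hA, Finset.subset_union_left, Finset.union_subset hDA hSA,
            Finset.union_subset hDK hSK⟩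
      have hdisj : ∀ S ⊆ T, Disjoint D S := by
        intro S hST
        rw [Finset.disjoint_right]
        intro s hsS hsD
        exact (Finset.mem_sdiff.1 (hST hsS)).2 hsD
      have hinj : ∀ S₁ ∈ T.powerset, ∀ S₂ ∈ T.powerset, D ∪ S₁ = D ∪ S₂ → S₁ = S₂ := by
        intro S₁ h₁ S₂ h₂ heq
        have d₁ := hdisj S₁ (Finset.mem_powerset.1 h₁)
        have d₂ := hdisj S₂ (Finset.mem_powerset.1 h₂)
        rw [← Finset.union_sdiff_cancel_left d₁, heq, Finset.union_sdiff_cancel_left d₂]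
      rw [← Finset.sum_filter, hfilter, Finset.sum_image hinj]
      have hcard : ∀ S ∈ T.powerset, ((-1:ℝ))^(D ∪ S).card = ((-1:ℝ))^D.card * ((-1:ℝ))^S.card := by
        intro S hS
        rw [Finset.card_union_of_disjoint (hdisj S (Finset.mem_powerset.1 hS)), pow_add]
      rw [Finset.sum_congr rfl hcard, ← Finset.mul_sum, sum_pn]
      by_cases hTe : T = ∅
      · have hDeq : D = A ∩ K := by
          apply Finset.Subset.antisymm
          · intro d hd
            exact Finset.mem_inter.2 ⟨hDA hd, hDK hd⟩
          · intro i hi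
            by_contra hiD
            have : i ∈ T := Finset.mem_sdiff.2 ⟨hi, hiD⟩
            rw [hTe] at this
            exact absurd this (Finset.notMem_empty i)
        rw [if_pos hTe, if_pos ⟨hA, hDeq⟩, hDeq, mul_one]
      · rw [if_neg hTe, if_neg, mul_zero]
        rintro ⟨-, hDeq⟩
        apply hTe
        rw [hT, ← hDeq]
        exact Finset.sdiff_self D
    · rw [if_neg, Finset.sum_eq_zero]
      · intro I _
        rw [if_neg]
        rintro ⟨-, hDI, -, hIK⟩
        exact hDK fun d hd => hIK (hDI hd)
      · rintro ⟨-, hDeq⟩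
        exact hDK (hDeq ▸ Finset.inter_subset_right)
  · rw [if_neg, Finset.sum_eq_zero]
    · intro I _
      rw [if_neg]
      rintro ⟨hA', -⟩
      exact hA hA'
    · rintro ⟨hA', -⟩
      exact hA hA'
lemma face_empty : polyFace φ lam (∅ : Finset (Fin N)) = polyDelta φ lam := by
  ext x; simp [polyFace]

lemma fr_dl : finrank ℝ (Dl n) = n := by
  have h1 : finrank ℝ (Module.Dual ℝ (Fin n → ℝ)) = finrank ℝ (Fin n → ℝ) :=
    Subspace.dual_finrank_eq
  have h2 : finrank ℝ (Dl n) = finrank ℝ (Fin n → ℝ) := h1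
  rw [h2, Module.finrank_fin_fun]

lemma card_le_face (hsimple : SimplePresentation φ lam) {I : Finset (Fin N)}
    (h : (polyFace φ lam I).Nonempty) : I.card ≤ n := by
  obtain ⟨x, hx⟩ := h
  have hind := indep_sub φ lam hsimple hx.1 (A := I) hx.2
  have hcle := hind.fintype_card_le_finrank
  rwa [Fintype.card_coe, fr_dl] at hcle

lemma vertex_count (hn : 0 < n) (hcpt : IsCompact (polyDelta φ lam))
    (hΔne : (polyDelta φ lam).Nonempty) (hsimple : SimplePresentation φ lam)
    (hexact : ExactPresentation φ lam) {y : Fin n → ℝ} (hy : ∀ i, φ i y ≠ lam i)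
    {K : Finset (Fin N)} (hK : ∀ i, i ∈ K ↔ φ i y ≤ lam i)
    (ξ : Dl n) (hgen : Generic φ lam ξ)
    (hsep : y ∉ polyDelta φ lam → ∀ x ∈ polyDelta φ lam, ξ x < ξ y) :
    ∑ A : Finset (Fin N), (if goodA φ lam A ∧ Dset φ ξ A = A ∩ K
      then ((-1:ℝ))^((A ∩ K).card) else 0)
    = if y ∈ polyDelta φ lam then ((-1:ℝ))^n else 0 := by
  by_cases hyΔ : y ∈ polyDelta φ lam
  · have hKu : K = Finset.univ := by
      ext i
      simp only [Finset.mem_univ, iff_true]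
      exact (hK i).2 (hyΔ i)
    obtain ⟨v, hvF, hvmin, hvsp⟩ := exists_min_vertex φ lam hcpt (-ξ)
      (I := ∅) (by rw [face_empty]; exact hΔne)
    set A₁ := aset φ lam v with hA₁def
    have hgood : goodA φ lam A₁ := good_of_span φ lam hsimple hvF.1 hvsp
    have hvvtx : v = vtx φ lam A₁ :=
      vtx_unique φ lam hgood fun a ha => (mem_aset φ lam).1 ha
    have hcpos : ∀ a : ↑A₁, 0 < coeff φ ξ A₁ a := by
      intro a
      have h1 := coeff_nonpos φ lam hexact hgood (-ξ) (Finset.empty_subset A₁)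
        (fun z hz => hvvtx ▸ hvmin z hz) a (Finset.notMem_empty _)
      rw [coeff_neg] at h1
      have h2 := hgen A₁ hgood a
      cases lt_or_gt_of_ne h2 with
      | inl h => linarith
      | inr h => exact h
    have hDeq₁ : Dset φ ξ A₁ = A₁ := by
      apply Finset.Subset.antisymm (Dset_subset φ)
      intro a ha
      exact (mem_Dset φ).2 ⟨ha, hcpos ⟨a, ha⟩⟩
    have hP₁ : goodA φ lam A₁ ∧ Dset φ ξ A₁ = A₁ ∩ K := by
      rw [hKu, Finset.inter_univ]; exact ⟨hgood, hDeq₁⟩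
    have hstrict : ∀ (A : Finset (Fin N)), goodA φ lam A → Dset φ ξ A = A →
        ∀ x ∈ polyDelta φ lam, x ≠ vtx φ lam A → (-ξ) (vtx φ lam A) < (-ξ) x := by
      intro A hgA hDA x hxΔ hne
      refine strict_min φ lam hgA (-ξ) (Finset.empty_subset A) ?_ x
        (by rw [face_empty]; exact hxΔ) hne
      intro a _
      rw [coeff_neg]
      have : a.1 ∈ Dset φ ξ A := by rw [hDA]; exact a.2
      obtain ⟨h', hpos⟩ := (mem_Dset φ).1 this
      have : 0 < coeff φ ξ A a := hpos
      linarith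
    have huniq : ∀ A : Finset (Fin N),
        (goodA φ lam A ∧ Dset φ ξ A = A ∩ K) → A = A₁ := by
      intro A hPA
      have hDA : Dset φ ξ A = A := by rw [hPA.2, hKu, Finset.inter_univ]
      have hvA := (vtx_spec φ lam hPA.1.1).1
      have hvA₁ := (vtx_spec φ lam hP₁.1.1).1
      have heqv : vtx φ lam A = vtx φ lam A₁ := by
        by_contra hne
        have h1 := hstrict A hPA.1 hDA (vtx φ lam A₁) hvA₁ fun hh => hne hh.symm
        have h2 := hstrict A₁ hgood hDeq₁ (vtx φ lam A) hvA hne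
        simp only [LinearMap.neg_apply] at h1 h2
        linarith
      ext i
      rw [← ((vtx_spec φ lam hPA.1.1).2 i), heqv, ((vtx_spec φ lam hP₁.1.1).2 i)]
    rw [if_pos hyΔ, Finset.sum_eq_single A₁]
    · rw [if_pos hP₁, hKu, Finset.inter_univ, hgood.2.2]
    · intro B _ hBA₁
      rw [if_neg]
      intro hPB
      exact hBA₁ (huniq B hPB)
    · intro hmem; exact absurd (Finset.mem_univ A₁) hmem
  · rw [if_neg hyΔ]
    refine Finset.sum_eq_zero fun A _ => ?_
    rw [if_neg]
    rintro ⟨hgood, hDeq⟩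
    have hvΔ := (vtx_spec φ lam hgood.1).1
    have hsep' := hsep hyΔ _ hvΔ
    have hdiff := eval_diff φ lam hgood ξ y
    have hneg : ∀ b : ↑A, b ∈ Finset.univ →
        coeff φ ξ A b * (φ b.1 y - lam b.1) < 0 := by
      intro b _
      by_cases hbK : b.1 ∈ K
      · have h1 : φ b.1 y < lam b.1 := lt_of_le_of_ne ((hK b.1).1 hbK) (hy b.1)
        have h2 : 0 < coeff φ ξ A b := by
          have hmem : b.1 ∈ Dset φ ξ A := by
            rw [hDeq]; exact Finset.mem_inter.2 ⟨b.2, hbK⟩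
          obtain ⟨hb', hpos⟩ := (mem_Dset φ).1 hmem
          exact hpos
        nlinarith
      · have h1 : lam b.1 < φ b.1 y := by
          have := fun hle => hbK ((hK b.1).2 hle)
          exact lt_of_not_ge this
        have h2 : coeff φ ξ A b < 0 := by
          have hnotD : b.1 ∉ Dset φ ξ A := by
            rw [hDeq]
            intro hmem
            exact hbK (Finset.mem_inter.1 hmem).2
          have h3 : ¬(0 < coeff φ ξ A b) := fun hpos =>
            hnotD ((mem_Dset φ).2 ⟨b.2, hpos⟩)
          have h4 := hgen A hgood b
          cases lt_or_gt_of_ne h4 with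
          | inl h => exact h
          | inr h => exact absurd h h3
        nlinarith
    have hApos : (Finset.univ : Finset ↑A).Nonempty := by
      have hAne : A.Nonempty := Finset.card_pos.1 (by rw [hgood.2.2]; exact hn)
      obtain ⟨a, ha⟩ := hAne
      exact ⟨⟨a, ha⟩, Finset.mem_univ _⟩
    have hs := Finset.sum_neg hneg hApos
    linarith

lemma toD_bound (u z : Fin n → ℝ) : |toD u z| ≤ n * ‖u‖ * ‖z‖ := by
  rw [toD_apply]
  calc |∑ i, u i * z i| ≤ ∑ i, |u i * z i| := Finset.abs_sum_le_sum_abs _ _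
    _ ≤ ∑ _i : Fin n, ‖u‖ * ‖z‖ := by
        refine Finset.sum_le_sum fun i _ => ?_
        rw [abs_mul]
        have h1 : |u i| ≤ ‖u‖ := by
          have := norm_le_pi_norm u i; rwa [Real.norm_eq_abs] at this
        have h2 : |z i| ≤ ‖z‖ := by
          have := norm_le_pi_norm z i; rwa [Real.norm_eq_abs] at this
        exact mul_le_mul h1 h2 (abs_nonneg _) (norm_nonneg _)
    _ = n * ‖u‖ * ‖z‖ := by
        rw [Finset.sum_const, Finset.card_univ, Fintype.card_fin, nsmul_eq_mul]
        ring
lemma comb (hn : 0 < n) (hcpt : IsCompact (polyDelta φ lam))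
    (hint : (interior (polyDelta φ lam)).Nonempty)
    (hsimple : SimplePresentation φ lam) (hexact : ExactPresentation φ lam)
    (y : Fin n → ℝ) (hy : ∀ i, φ i y ≠ lam i) :
    ∑ I : Finset (Fin N), (if (polyFace φ lam I).Nonempty ∧ (∀ i ∈ I, φ i y ≤ lam i)
      then ((-1:ℝ))^(n - I.card) else 0) = if y ∈ polyDelta φ lam then 1 else 0 := by
  have hΔne : (polyDelta φ lam).Nonempty := hint.mono interior_subset
  obtain ⟨ξ, hgen, hsep⟩ : ∃ ξ : Dl n, Generic φ lam ξ ∧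
      (y ∉ polyDelta φ lam → ∀ x ∈ polyDelta φ lam, ξ x < ξ y) := by
    by_cases hyΔ : y ∈ polyDelta φ lam
    · obtain ⟨w, -, hg⟩ := exists_generic φ lam Set.univ isOpen_univ ⟨0, trivial⟩
      exact ⟨toD w, hg, fun hcon => (hcon hyΔ).elim⟩
    · obtain ⟨j, hj⟩ : ∃ j, ¬(φ j y ≤ lam j) := by
        by_contra hcon
        push_neg at hcon
        exact hyΔ hcon
      have hδ : 0 < φ j y - lam j := by
        have := not_le.1 hj; linarith
      set δ := φ j y - lam j with hδdef
      obtain ⟨R, hR⟩ := hcpt.isBounded.exists_norm_le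
      set R1 := max R ‖y‖ + 1 with hR1def
      have hR1pos : 0 < R1 := by
        have h0 : (0:ℝ) ≤ max R ‖y‖ := le_trans (norm_nonneg y) (le_max_right _ _)
        rw [hR1def]; linarith
      set ε := δ / (2 * n * R1 + 1) with hεdef
      have hden : (0:ℝ) < 2 * n * R1 + 1 := by positivity
      have hεpos : 0 < ε := div_pos hδ hden
      set w0 := (fun i => φ j (Pi.single i 1)) with hw0def
      have htw0 : toD w0 = φ j := toD_eval (φ j)
      obtain ⟨w, hwball, hg⟩ := exists_generic φ lam (Metric.ball w0 ε)
        Metric.isOpen_ball ⟨w0, Metric.mem_ball_self hεpos⟩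
      refine ⟨toD w, hg, fun _ x hx => ?_⟩
      have hww0 : ‖w - w0‖ < ε := by
        rw [← dist_eq_norm]; exact Metric.mem_ball.1 hwball
      have hdiffD : ∀ z : Fin n → ℝ, toD w z - φ j z = toD (w - w0) z := by
        intro z
        rw [map_sub, LinearMap.sub_apply, htw0]
      have hsmall : n * ‖w - w0‖ * R1 < δ / 2 := by
        have h4 : (n:ℝ) * ‖w - w0‖ * R1 ≤ n * ε * R1 := by
          have : (0:ℝ) ≤ (n:ℝ) := Nat.cast_nonneg n
          have h5 : (n:ℝ) * ‖w - w0‖ ≤ n * ε := mul_le_mul_of_nonneg_left hww0.le this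
          exact mul_le_mul_of_nonneg_right h5 hR1pos.le
        have h6 : (n:ℝ) * ε * R1 < δ / 2 := by
          have heq : (n:ℝ) * ε * R1 = (n * R1 * δ) / (2 * n * R1 + 1) := by
            rw [hεdef]; ring
          rw [heq, div_lt_iff₀ hden]
          have hnR1 : (0:ℝ) ≤ (n:ℝ) * R1 := by positivity
          nlinarith
        exact lt_of_le_of_lt h4 h6
      have hxR1 : ‖x‖ ≤ R1 := by
        have := hR x hx
        have h0 : R ≤ max R ‖y‖ := le_max_left _ _
        rw [hR1def]; linarith
      have hyR1 : ‖y‖ ≤ R1 := by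
        have h0 : ‖y‖ ≤ max R ‖y‖ := le_max_right _ _
        rw [hR1def]; linarith
      have hb1 : |toD w x - φ j x| ≤ n * ‖w - w0‖ * R1 := by
        rw [hdiffD x]
        calc |toD (w - w0) x| ≤ n * ‖w - w0‖ * ‖x‖ := toD_bound _ _
          _ ≤ n * ‖w - w0‖ * R1 := by
              refine mul_le_mul_of_nonneg_left hxR1 ?_
              positivity
      have hb2 : |toD w y - φ j y| ≤ n * ‖w - w0‖ * R1 := by
        rw [hdiffD y]
        calc |toD (w - w0) y| ≤ n * ‖w - w0‖ * ‖y‖ := toD_bound _ _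
          _ ≤ n * ‖w - w0‖ * R1 := by
              refine mul_le_mul_of_nonneg_left hyR1 ?_
              positivity
      have hφjx : φ j x ≤ lam j := hx j
      have e1 := abs_le.1 hb1
      have e2 := abs_le.1 hb2
      have hd2 : δ = (φ j) y - lam j := hδdef
      nlinarith [e1.2, e2.1, hφjx, hsmall]
  set K := Finset.univ.filter (fun i => φ i y ≤ lam i) with hKdef
  have hK : ∀ i, i ∈ K ↔ φ i y ≤ lam i := fun i => by
    rw [hKdef]; simp
  have hIiff : ∀ I : Finset (Fin N), (∀ i ∈ I, φ i y ≤ lam i) ↔ I ⊆ K := by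
    intro I
    constructor
    · intro h i hi; exact (hK i).2 (h i hi)
    · intro h i hi; exact (hK i).1 (h hi)
  have hmain : ∑ I : Finset (Fin N),
      (if (polyFace φ lam I).Nonempty ∧ I ⊆ K then ((-1:ℝ))^I.card else 0)
      = if y ∈ polyDelta φ lam then ((-1:ℝ))^n else 0 := by
    calc ∑ I : Finset (Fin N),
        (if (polyFace φ lam I).Nonempty ∧ I ⊆ K then ((-1:ℝ))^I.card else 0)
        = ∑ I : Finset (Fin N), ∑ A : Finset (Fin N),
            (if (goodA φ lam A ∧ Dset φ ξ A ⊆ I ∧ I ⊆ A ∧ I ⊆ K)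
              then ((-1:ℝ))^I.card else 0) :=
          Finset.sum_congr rfl fun I _ => point_eq φ lam hcpt hsimple hexact ξ hgen K I
      _ = ∑ A : Finset (Fin N), ∑ I : Finset (Fin N),
            (if (goodA φ lam A ∧ Dset φ ξ A ⊆ I ∧ I ⊆ A ∧ I ⊆ K)
              then ((-1:ℝ))^I.card else 0) := Finset.sum_comm
      _ = ∑ A : Finset (Fin N), (if goodA φ lam A ∧ Dset φ ξ A = A ∩ K
            then ((-1:ℝ))^((A ∩ K).card) else 0) :=
          Finset.sum_congr rfl fun A _ => inner_eval φ lam ξ K A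
      _ = if y ∈ polyDelta φ lam then ((-1:ℝ))^n else 0 :=
          vertex_count φ lam hn hcpt hΔne hsimple hexact hy hK ξ hgen hsep
  have hterm : ∀ I : Finset (Fin N),
      (if (polyFace φ lam I).Nonempty ∧ (∀ i ∈ I, φ i y ≤ lam i)
        then ((-1:ℝ))^(n - I.card) else 0)
      = ((-1:ℝ))^n * (if (polyFace φ lam I).Nonempty ∧ I ⊆ K
        then ((-1:ℝ))^I.card else 0) := by
    intro I
    by_cases hc : (polyFace φ lam I).Nonempty ∧ I ⊆ K
    · rw [if_pos ⟨hc.1, (hIiff I).2 hc.2⟩, if_pos hc]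
      have hle := card_le_face φ lam hsimple hc.1
      have h1 : ((-1:ℝ))^(n - I.card) * ((-1:ℝ))^(I.card) = ((-1:ℝ))^n := by
        rw [← pow_add, Nat.sub_add_cancel hle]
      have h2 : ((-1:ℝ))^(I.card) * ((-1:ℝ))^(I.card) = 1 := by
        rw [← mul_pow]; norm_num
      calc ((-1:ℝ))^(n-I.card)
          = ((-1:ℝ))^(n-I.card) * (((-1:ℝ))^I.card * ((-1:ℝ))^I.card) := by
            rw [h2, mul_one]
        _ = (((-1:ℝ))^(n-I.card) * ((-1:ℝ))^I.card) * ((-1:ℝ))^I.card := by ring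
        _ = ((-1:ℝ))^n * ((-1:ℝ))^I.card := by rw [h1]
    · rw [if_neg, if_neg hc, mul_zero]
      intro hcon; exact hc ⟨hcon.1, (hIiff I).1 hcon.2⟩
  rw [Finset.sum_congr rfl (fun I _ => hterm I), ← Finset.mul_sum, hmain]
  by_cases hyΔ : y ∈ polyDelta φ lam
  · rw [if_pos hyΔ, if_pos hyΔ, ← mul_pow]; norm_num
  · rw [if_neg hyΔ, if_neg hyΔ, mul_zero]
lemma hyperplane_null (hint : (interior (polyDelta φ lam)).Nonempty)
    (hsimple : SimplePresentation φ lam) (i : Fin N) :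
    volume {x : Fin n → ℝ | φ i x = lam i} = 0 := by
  by_cases h0 : φ i = 0
  · by_cases hl : lam i = 0
    · exfalso
      obtain ⟨x₀, hx₀⟩ := hint.mono interior_subset
      have hact : φ i x₀ = lam i := by rw [h0, hl]; simp
      have := (hsimple x₀ hx₀).ne_zero ⟨i, hact⟩
      exact this h0
    · have : {x : Fin n → ℝ | φ i x = lam i} = ∅ := by
        ext x
        simp only [Set.mem_setOf_eq, Set.mem_empty_iff_false, iff_false]
        rw [h0]
        simpa using fun h => hl h.symm
      rw [this]; exact measure_empty
  · by_cases hne : ∃ x₀ : Fin n → ℝ, φ i x₀ = lam i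
    · obtain ⟨x₀, hx₀⟩ := hne
      have hpre : (fun x : Fin n → ℝ => x + x₀) ⁻¹' {x | φ i x = lam i}
          = (LinearMap.ker (φ i) : Set (Fin n → ℝ)) := by
        ext x
        simp only [Set.mem_preimage, Set.mem_setOf_eq, SetLike.mem_coe,
          LinearMap.mem_ker, map_add, hx₀]
        constructor
        · intro h; linarith
        · intro h; rw [h]; ring
      have hinv := measure_preimage_add_right volume x₀ {x : Fin n → ℝ | φ i x = lam i}
      rw [hpre] at hinv
      rw [← hinv]
      refine Measure.addHaar_submodule _ _ ?_
      rw [Ne, LinearMap.ker_eq_top]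
      exact h0
    · have : {x : Fin n → ℝ | φ i x = lam i} = ∅ := by
        ext x
        simp only [Set.mem_setOf_eq, Set.mem_empty_iff_false, iff_false]
        exact fun h => hne ⟨x, h⟩
      rw [this]; exact measure_empty

end BG

/-- **Measure-theoretic Brianchon–Gram decomposition (equation (6.3)).**  Let
`Δ ⊆ ℝⁿ` be a compact polytope with nonempty interior whose presentation is simple and
exact, and for `I ⊆ {1,…,N}` let `C_I = {x : φ i x ≤ λ i for i ∈ I}` be the tangent
cone of `Δ` along the face `F_I`.  Then for every continuous compactly supported
function `φc : ℝⁿ → ℝ`, the integral of `φc` over `Δ` equals the signed sum over all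
`I` with `F_I` nonempty of `(-1)^{n-|I|}` times the integral of `φc` over `C_I`, all
integrals taken with respect to Lebesgue measure. -/
theorem brianchon_gram_measure
    {n N : ℕ} (hn : 0 < n) (hN : 0 < N)
    (φ : Fin N → ((Fin n → ℝ) →ₗ[ℝ] ℝ)) (lam : Fin N → ℝ)
    (hcpt : IsCompact (polyDelta φ lam))
    (hint : (interior (polyDelta φ lam)).Nonempty)
    (hsimple : SimplePresentation φ lam)
    (hexact : ExactPresentation φ lam) :
    ∀ φc : (Fin n → ℝ) → ℝ, Continuous φc → HasCompactSupport φc →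
      (∫ x in polyDelta φ lam, φc x) =
        ∑ I : Finset (Fin N),
          if (polyFace φ lam I).Nonempty then
            (-1 : ℝ) ^ (n - I.card) *
              ∫ x in {y : Fin n → ℝ | ∀ i ∈ I, φ i y ≤ lam i}, φc x
          else 0 := by
  intro φc hφc hsupp
  have hInt : Integrable φc := hφc.integrable_of_hasCompactSupport hsupp
  set f : Finset (Fin N) → (Fin n → ℝ) → ℝ := fun I x =>
    if (polyFace φ lam I).Nonempty then
      ((-1:ℝ))^(n - I.card) *
        Set.indicator {y : Fin n → ℝ | ∀ i ∈ I, φ i y ≤ lam i} φc x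
    else 0 with hfdef
  have hfInt : ∀ I : Finset (Fin N), Integrable (f I) := by
    intro I
    by_cases h : (polyFace φ lam I).Nonempty
    · have : f I = fun x => ((-1:ℝ))^(n - I.card) *
          Set.indicator {y : Fin n → ℝ | ∀ i ∈ I, φ i y ≤ lam i} φc x := by
        funext x; rw [hfdef]; simp only [if_pos h]
      rw [this]
      exact (hInt.indicator (BG.closed_cone φ lam I).measurableSet).const_mul _
    · have : f I = fun _ => 0 := by
        funext x; rw [hfdef]; simp only [if_neg h]
      rw [this]
      exact integrable_zero _ _ _
  have hRHSterm : ∀ I : Finset (Fin N),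
      (if (polyFace φ lam I).Nonempty then
        (-1 : ℝ) ^ (n - I.card) *
          ∫ x in {y : Fin n → ℝ | ∀ i ∈ I, φ i y ≤ lam i}, φc x
      else 0) = ∫ x, f I x := by
    intro I
    by_cases h : (polyFace φ lam I).Nonempty
    · rw [if_pos h]
      have : ∀ x, f I x = ((-1:ℝ))^(n - I.card) *
          Set.indicator {y : Fin n → ℝ | ∀ i ∈ I, φ i y ≤ lam i} φc x := by
        intro x; rw [hfdef]; simp only [if_pos h]
      rw [integral_congr_ae (Filter.Eventually.of_forall this),
        integral_const_mul, integral_indicator (BG.closed_cone φ lam I).measurableSet]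
    · rw [if_neg h]
      have : ∀ x, f I x = 0 := by
        intro x; rw [hfdef]; simp only [if_neg h]
      rw [integral_congr_ae (Filter.Eventually.of_forall this), integral_zero]
  rw [Finset.sum_congr rfl fun I _ => hRHSterm I]
  rw [← integral_finset_sum _ (fun I _ => hfInt I)]
  rw [← integral_indicator (BG.closed_delta φ lam).measurableSet]
  refine integral_congr_ae ?_
  have hZ : volume (⋃ i, {x : Fin n → ℝ | φ i x = lam i}) = 0 :=
    measure_iUnion_null fun i => BG.hyperplane_null φ lam hint hsimple i
  have h0 : ∀ᵐ x : Fin n → ℝ, x ∉ ⋃ i, {x : Fin n → ℝ | φ i x = lam i} := by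
    rw [ae_iff]
    have he : {a : Fin n → ℝ | ¬ a ∉ ⋃ i, {x : Fin n → ℝ | φ i x = lam i}}
        = ⋃ i, {x : Fin n → ℝ | φ i x = lam i} := by
      ext a; simp
    rw [he]; exact hZ
  filter_upwards [h0] with x hx
  have hy : ∀ i, φ i x ≠ lam i := by
    intro i hi
    exact hx (Set.mem_iUnion.2 ⟨i, hi⟩)
  have hcomb := BG.comb φ lam hn hcpt hint hsimple hexact x hy
  have hfx : ∀ I : Finset (Fin N), f I x =
      (if (polyFace φ lam I).Nonempty ∧ (∀ i ∈ I, φ i x ≤ lam i)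
        then ((-1:ℝ))^(n - I.card) else 0) * φc x := by
    intro I
    rw [hfdef]
    by_cases h1 : (polyFace φ lam I).Nonempty
    · simp only [if_pos h1]
      by_cases h2 : (∀ i ∈ I, φ i x ≤ lam i)
      · rw [Set.indicator_of_mem (show x ∈ {y : Fin n → ℝ | ∀ i ∈ I, φ i y ≤ lam i} from h2) φc, if_pos ⟨h1, h2⟩]
      · rw [Set.indicator_of_notMem (show x ∉ {y : Fin n → ℝ | ∀ i ∈ I, φ i y ≤ lam i} from h2) φc, if_neg (fun hc => h2 hc.2), mul_zero, zero_mul]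
    · simp only [if_neg h1]
      rw [if_neg (fun hc => h1 hc.1), zero_mul]
  calc Set.indicator (polyDelta φ lam) φc x
      = (if x ∈ polyDelta φ lam then 1 else 0) * φc x := by
        by_cases h : x ∈ polyDelta φ lam
        · rw [Set.indicator_of_mem h φc, if_pos h, one_mul]
        · rw [Set.indicator_of_notMem h φc, if_neg h, zero_mul]
    _ = (∑ I : Finset (Fin N),
          (if (polyFace φ lam I).Nonempty ∧ (∀ i ∈ I, φ i x ≤ lam i)
            then ((-1:ℝ))^(n - I.card) else 0)) * φc x := by rw [hcomb]
    _ = ∑ I : Finset (Fin N), f I x := by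
        rw [Finset.sum_mul]
        exact Finset.sum_congr rfl fun I _ => (hfx I).symm
end
end
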